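/- arXiv:1107.5336 — 5 statements merged into one kernel-verified Lean document; each statement's English description precedes it below -/
import Mathlib

section
/- A probability measure p on ℤ^d is cyclic if and only if it is balanced. -/
open scoped ENNReal

namespace CyclicRW

abbrev Zd (d : ℕ) := Fin d → ℤ

/-- `p` is balanced: for every hyperplane through the origin (given by a unit
normal vector `v`), the `p`-weighted total distance to the hyperplane of the points in the
positive closed half-space equals that of the points in the negative closed half-space. -/
def Balanced {d : ℕ} (p : Zd d → ℝ≥0∞) : Prop :=
  ∀ v : Fin d → ℝ, (∑ i, (v i) ^ 2) = 1 →
    (∑' x : Zd d, p x * ENNReal.ofReal (∑ i, v i * (x i : ℝ)))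
      = ∑' x : Zd d, p x * ENNReal.ofReal (-(∑ i, v i * (x i : ℝ)))

/-- A cycle on `ℤ^d`: a sequence `z⁰, …, z^{n-1}` of distinct points (with `n = len + 1 ≥ 1`),
traversed cyclically (so `zⁿ = z⁰`). -/
structure ZCycle (d : ℕ) where
  len : ℕ
  z : Fin (len + 1) → Zd d
  inj : Function.Injective z

/-- The displacement vectors of a cycle. -/
def ZCycle.w {d : ℕ} (C : ZCycle d) (i : Fin (C.len + 1)) : Zd d := C.z (i + 1) - C.z i

/-- The empirical (probability) measure of a cycle. -/
noncomputable def ZCycle.emp {d : ℕ} (C : ZCycle d) (x : Zd d) : ℝ≥0∞ :=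
  ((Finset.univ.filter fun i : Fin (C.len + 1) => C.w i = x).card : ℝ≥0∞) /
    ((C.len + 1 : ℕ) : ℝ≥0∞)

/-- `p` is cyclic: a countable convex superposition of empirical measures of cycles. -/
def IsCyclic {d : ℕ} (p : Zd d → ℝ≥0∞) : Prop :=
  ∃ (C : ℕ → ZCycle d) (ρ : ℕ → ℝ≥0∞),
    (∑' i, ρ i) = 1 ∧ ∀ x, p x = ∑' i, ρ i * (C i).emp x

/-! ### Basics -/

variable {d : ℕ}

noncomputable def dot (v : Fin d → ℝ) (x : Zd d) : ℝ := ∑ i, v i * (x i : ℝ)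

lemma dot_neg (v : Fin d → ℝ) (x : Zd d) : dot (-v) x = -(dot v x) := by
  simp [dot, Finset.sum_neg_distrib]

lemma dot_zero (v : Fin d → ℝ) : dot v 0 = 0 := by simp [dot]

noncomputable def dotHom (v : Fin d → ℝ) : Zd d →+ ℝ where
  toFun := dot v
  map_zero' := dot_zero v
  map_add' x y := by
    simp [dot, ← Finset.sum_add_distrib, mul_add]

noncomputable def Sv (v : Fin d → ℝ) (p : Zd d → ℝ≥0∞) : ℝ≥0∞ :=
  ∑' x, p x * ENNReal.ofReal (dot v x)

lemma balanced_iff (p : Zd d → ℝ≥0∞) :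
    Balanced p ↔ ∀ v : Fin d → ℝ, (∑ i, (v i) ^ 2) = 1 → Sv v p = Sv (-v) p := by
  unfold Balanced Sv
  refine forall_congr' fun v => imp_congr Iff.rfl ?_
  simp only [dot, Pi.neg_apply, neg_mul, ← Finset.sum_neg_distrib]

lemma max_zero_sub (a : ℝ) : max a 0 - max (-a) 0 = a := by
  rcases le_total a 0 with h | h
  · simp [max_eq_right h, max_eq_left (neg_nonneg.2 h)]
  · simp [max_eq_left h, max_eq_right (neg_nonpos.2 h)]

lemma ofReal_eq_ofReal_max (a : ℝ) : ENNReal.ofReal a = ENNReal.ofReal (max a 0) := by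
  rcases le_total a 0 with h | h
  · simp [ENNReal.ofReal_eq_zero.2 h, max_eq_right h]
  · simp [max_eq_left h]

/-- pull an `ofReal` out of a finite sum -/
lemma sum_mul_ofReal_eq {α : Type*} (s : Finset α) (f : α → ℝ≥0∞) (hf : ∀ y ∈ s, f y ≠ ⊤)
    (a : α → ℝ) :
    (∑ y ∈ s, f y * ENNReal.ofReal (a y))
      = ENNReal.ofReal (∑ y ∈ s, (f y).toReal * max (a y) 0) := by
  rw [ENNReal.ofReal_sum_of_nonneg]
  · refine Finset.sum_congr rfl fun y hy => ?_
    rw [ofReal_eq_ofReal_max, ENNReal.ofReal_mul (ENNReal.toReal_nonneg),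
      ENNReal.ofReal_toReal (hf y hy)]
  · intro y hy
    exact mul_nonneg ENNReal.toReal_nonneg (le_max_right _ _)

/-- key positive/negative part identity for finite sums -/
lemma sum_ofReal_posneg {α : Type*} (s : Finset α) (f : α → ℝ≥0∞) (hf : ∀ y ∈ s, f y ≠ ⊤)
    (a : α → ℝ) (h0 : (∑ y ∈ s, (f y).toReal * a y) = 0) :
    (∑ y ∈ s, f y * ENNReal.ofReal (a y)) = ∑ y ∈ s, f y * ENNReal.ofReal (-(a y)) := by
  rw [sum_mul_ofReal_eq s f hf, sum_mul_ofReal_eq s f hf]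
  congr 1
  have h5 : (∑ y ∈ s, (f y).toReal * max (a y) 0) - (∑ y ∈ s, (f y).toReal * max (-(a y)) 0) = 0 := by
    rw [← Finset.sum_sub_distrib]
    calc (∑ y ∈ s, ((f y).toReal * max (a y) 0 - (f y).toReal * max (-(a y)) 0))
        = ∑ y ∈ s, (f y).toReal * a y := by
          refine Finset.sum_congr rfl fun y hy => ?_
          rw [← mul_sub, max_zero_sub]
      _ = 0 := h0
  linarith [h5]

/-! ### Cycle facts -/

lemma ZCycle.sum_w (C : ZCycle d) : (∑ i, C.w i) = 0 := by
  unfold ZCycle.w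
  rw [Finset.sum_sub_distrib]
  have h := Fintype.sum_equiv (Equiv.addRight (1 : Fin (C.len + 1)))
    (fun i => C.z (i + 1)) C.z (fun i => rfl)
  rw [h, sub_self]

lemma ZCycle.sum_dot_w (C : ZCycle d) (v : Fin d → ℝ) : (∑ i, dot v (C.w i)) = 0 := by
  have := map_sum (dotHom v) C.w Finset.univ
  rw [C.sum_w] at this
  simpa [dotHom, dot_zero] using this.symm

lemma Sv_emp (C : ZCycle d) (v : Fin d → ℝ) :
    Sv v C.emp = (((C.len + 1 : ℕ) : ℝ≥0∞))⁻¹ * ∑ i, ENNReal.ofReal (dot v (C.w i)) := by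
  classical
  unfold Sv ZCycle.emp
  have hrw : ∀ x : Zd d,
      ((Finset.univ.filter fun i : Fin (C.len + 1) => C.w i = x).card : ℝ≥0∞) /
        ((C.len + 1 : ℕ) : ℝ≥0∞) * ENNReal.ofReal (dot v x)
      = ∑ i : Fin (C.len + 1), (if C.w i = x then
          (((C.len + 1 : ℕ) : ℝ≥0∞))⁻¹ * ENNReal.ofReal (dot v x) else 0) := by
    intro x
    rw [Finset.card_filter, Nat.cast_sum, div_eq_mul_inv, Finset.sum_mul, Finset.sum_mul]
    refine Finset.sum_congr rfl fun i _ => ?_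
    split <;> simp [mul_assoc]
  simp only [hrw]
  rw [Summable.tsum_finsetSum (fun i _ => ENNReal.summable)]
  rw [Finset.mul_sum]
  refine Finset.sum_congr rfl fun i _ => ?_
  rw [tsum_eq_single (C.w i)]
  · simp
  · intro x hx
    exact if_neg (fun h => hx h.symm)

lemma Sv_emp_symm (C : ZCycle d) (v : Fin d → ℝ) : Sv v C.emp = Sv (-v) C.emp := by
  rw [Sv_emp, Sv_emp]
  congr 1
  have := sum_ofReal_posneg (Finset.univ : Finset (Fin (C.len + 1))) (fun _ => 1)
    (by simp) (fun i => dot v (C.w i)) (by simpa using C.sum_dot_w v)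
  simpa [dot_neg] using this

/-! ### Easy direction -/

theorem isCyclic_balanced {p : Zd d → ℝ≥0∞} (h : IsCyclic p) : Balanced p := by
  obtain ⟨C, ρ, hρ, hpx⟩ := h
  rw [balanced_iff]
  intro v hv
  have key : ∀ w : Fin d → ℝ, Sv w p = ∑' i, ρ i * Sv w (C i).emp := by
    intro w
    unfold Sv
    calc (∑' x, p x * ENNReal.ofReal (dot w x))
        = ∑' x, ∑' i, ρ i * (C i).emp x * ENNReal.ofReal (dot w x) := by
          refine tsum_congr fun x => ?_
          rw [hpx x, ENNReal.tsum_mul_right]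
      _ = ∑' i, ∑' x, ρ i * (C i).emp x * ENNReal.ofReal (dot w x) := ENNReal.tsum_comm
      _ = ∑' i, ρ i * ∑' x, (C i).emp x * ENNReal.ofReal (dot w x) := by
          refine tsum_congr fun i => ?_
          rw [← ENNReal.tsum_mul_left]
          simp [mul_assoc]
  rw [key, key]
  refine tsum_congr fun i => ?_
  rw [Sv_emp_symm (C i) v]

/-- Pigeonhole: a finite set of integer vectors admitting a positive real linear relation
admits a positive integer linear relation. -/
lemma exists_int_relation (S : Finset (Zd d)) (lam : Zd d → ℝ)
    (hpos : ∀ y ∈ S, 0 < lam y)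
    (hsum : ∀ i : Fin d, (∑ y ∈ S, lam y * (y i : ℝ)) = 0) :
    ∃ n : Zd d → ℕ, (∀ y ∈ S, 1 ≤ n y) ∧ (∀ i, (∑ y ∈ S, (n y : ℤ) * y i) = 0) := by
  classical
  rcases S.eq_empty_or_nonempty with hS | hS
  · exact ⟨fun _ => 1, by simp [hS], by simp [hS]⟩
  set m : ℝ := S.inf' hS lam with hm
  have hmpos : 0 < m := by
    obtain ⟨y, hy, hym⟩ := S.exists_mem_eq_inf' hS lam
    rw [hm, hym]; exact hpos y hy
  set μ : Zd d → ℝ := fun y => lam y / m with hμ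
  have hμ1 : ∀ y ∈ S, 1 ≤ μ y := fun y hy =>
    (one_le_div hmpos).2 (Finset.inf'_le lam hy)
  have hμsum : ∀ i : Fin d, (∑ y ∈ S, μ y * (y i : ℝ)) = 0 := by
    intro i
    have : (∑ y ∈ S, μ y * (y i : ℝ)) = (∑ y ∈ S, lam y * (y i : ℝ)) / m := by
      rw [Finset.sum_div]
      exact Finset.sum_congr rfl fun y _ => by rw [hμ]; ring
    rw [this, hsum i, zero_div]
  set g : ℕ → Zd d := fun t => fun i => ∑ y ∈ S, ⌊(t : ℝ) * μ y⌋ * y i with hg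
  set K : ℤ := ∑ y ∈ S, ∑ j, |y j| with hK
  have hbound : ∀ t i, |g t i| ≤ K := by
    intro t i
    have hcast : ((g t i : ℤ) : ℝ) = ∑ y ∈ S, ((⌊(t : ℝ) * μ y⌋ : ℝ) - (t : ℝ) * μ y) * (y i : ℝ) := by
      have h2 : ((g t i : ℤ) : ℝ) = ∑ y ∈ S, (⌊(t : ℝ) * μ y⌋ : ℝ) * (y i : ℝ) := by
        rw [hg]; push_cast; rfl
      rw [h2]
      have h3 : (∑ y ∈ S, ((⌊(t : ℝ) * μ y⌋ : ℝ) - (t : ℝ) * μ y) * (y i : ℝ))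
          = (∑ y ∈ S, (⌊(t : ℝ) * μ y⌋ : ℝ) * (y i : ℝ)) - (t : ℝ) * ∑ y ∈ S, μ y * (y i : ℝ) := by
        rw [Finset.mul_sum, ← Finset.sum_sub_distrib]
        exact Finset.sum_congr rfl fun y _ => by ring
      rw [h3, hμsum i, mul_zero, sub_zero]
    have hre : |((g t i : ℤ) : ℝ)| ≤ (K : ℝ) := by
      rw [hcast]
      calc |∑ y ∈ S, ((⌊(t : ℝ) * μ y⌋ : ℝ) - (t : ℝ) * μ y) * (y i : ℝ)|
          ≤ ∑ y ∈ S, |((⌊(t : ℝ) * μ y⌋ : ℝ) - (t : ℝ) * μ y) * (y i : ℝ)| :=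
            Finset.abs_sum_le_sum_abs _ _
        _ ≤ ∑ y ∈ S, |(y i : ℝ)| := by
            refine Finset.sum_le_sum fun y _ => ?_
            rw [abs_mul]
            have h1 : |(⌊(t : ℝ) * μ y⌋ : ℝ) - (t : ℝ) * μ y| ≤ 1 := by
              rw [abs_sub_comm, abs_of_nonneg (by linarith [Int.floor_le ((t : ℝ) * μ y)])]
              linarith [Int.lt_floor_add_one ((t : ℝ) * μ y)]
            nlinarith [abs_nonneg ((y i : ℝ))]
        _ ≤ (K : ℝ) := by
            rw [hK]
            push_cast
            refine Finset.sum_le_sum fun y _ => ?_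
            have : |(y i : ℝ)| = ((|y i| : ℤ) : ℝ) := by push_cast; ring
            rw [this]
            have : (|y i| : ℤ) ≤ ∑ j, |y j| :=
              Finset.single_le_sum (fun j _ => abs_nonneg (y j)) (Finset.mem_univ i)
            exact_mod_cast this
    exact_mod_cast hre
  -- pigeonhole
  have hfin : (Set.pi Set.univ (fun _ : Fin d => Set.Icc (-K) K)).Finite :=
    Set.Finite.pi (fun _ => Set.finite_Icc _ _)
  have hmaps : Set.MapsTo g Set.univ (Set.pi Set.univ (fun _ : Fin d => Set.Icc (-K) K)) := by
    intro t _
    intro i _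
    exact abs_le.1 (hbound t i)
  obtain ⟨s1, -, s2, -, hne, heqs⟩ :=
    Set.infinite_univ.exists_ne_map_eq_of_mapsTo hmaps hfin
  suffices key : ∀ t1 t2 : ℕ, t1 < t2 → g t1 = g t2 →
      ∃ n : Zd d → ℕ, (∀ y ∈ S, 1 ≤ n y) ∧ (∀ i, (∑ y ∈ S, (n y : ℤ) * y i) = 0) by
    rcases hne.lt_or_gt with hlt | hlt
    · exact key s1 s2 hlt heqs
    · exact key s2 s1 hlt heqs.symm
  intro t1 t2 hlt heq
  set n : Zd d → ℕ := fun y => (⌊(t2 : ℝ) * μ y⌋ - ⌊(t1 : ℝ) * μ y⌋).toNat with hn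
  have hstep : ∀ y ∈ S, ⌊(t1 : ℝ) * μ y⌋ + 1 ≤ ⌊(t2 : ℝ) * μ y⌋ := by
    intro y hy
    have h1 : (t1 : ℝ) * μ y + 1 ≤ (t2 : ℝ) * μ y := by
      have ht : (t1 : ℝ) + 1 ≤ (t2 : ℝ) := by exact_mod_cast hlt
      have := hμ1 y hy
      nlinarith
    calc ⌊(t1 : ℝ) * μ y⌋ + 1 = ⌊(t1 : ℝ) * μ y + 1⌋ := by rw [Int.floor_add_one]
      _ ≤ ⌊(t2 : ℝ) * μ y⌋ := Int.floor_le_floor h1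
  have hncast : ∀ y ∈ S, (n y : ℤ) = ⌊(t2 : ℝ) * μ y⌋ - ⌊(t1 : ℝ) * μ y⌋ := by
    intro y hy
    rw [hn, Int.toNat_of_nonneg (by linarith [hstep y hy])]
  refine ⟨n, fun y hy => ?_, fun i => ?_⟩
  · have : (1 : ℤ) ≤ (n y : ℤ) := by rw [hncast y hy]; linarith [hstep y hy]
    exact_mod_cast this
  · have hgeq : g t1 i = g t2 i := by rw [heq]
    calc (∑ y ∈ S, (n y : ℤ) * y i)
        = ∑ y ∈ S, (⌊(t2 : ℝ) * μ y⌋ - ⌊(t1 : ℝ) * μ y⌋) * y i :=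
          Finset.sum_congr rfl fun y hy => by rw [hncast y hy]
      _ = g t2 i - g t1 i := by
          rw [hg]; rw [← Finset.sum_sub_distrib]
          exact Finset.sum_congr rfl fun y _ => by ring
      _ = 0 := by rw [hgeq, sub_self]
/-- The multiset of displacement steps of a cycle. -/
def stepsM (C : ZCycle d) : Multiset (Zd d) := Finset.univ.val.map C.w

lemma stepsM_coe (C : ZCycle d) : stepsM C = ↑(List.ofFn C.w) := Fin.univ_val_map C.w

/-- Any zero-sum list of steps decomposes into cycles. -/
lemma exists_cycle_decomp : ∀ (N : ℕ) (l : List (Zd d)), l.length ≤ N → l.sum = 0 →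
    ∃ cs : List (ZCycle d), (cs.map stepsM).sum = (l : Multiset (Zd d)) := by
  intro N
  induction N with
  | zero =>
    intro l hl _
    have : l = [] := List.eq_nil_of_length_eq_zero (Nat.le_zero.1 hl)
    exact ⟨[], by simp [this]⟩
  | succ N ih =>
    intro l hl hsum
    rcases List.eq_nil_or_concat l with rfl | hne
    · exact ⟨[], by simp⟩
    have hLpos : 0 < l.length := by
      rcases hne with ⟨l', a, rfl⟩; simp
    set L := l.length with hL
    set ps : ℕ → Zd d := fun k => (l.take k).sum with hps
    have hps0 : ps 0 = 0 := by simp [hps]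
    have hpsL : ps L = 0 := by simp [hps, hL, hsum]
    have hstep : ∀ m (hm : m < L), ps (m + 1) = ps m + l[m] := fun m hm =>
      List.sum_take_succ l m hm
    -- the set of "repeat pairs"
    classical
    set T : Finset (ℕ × ℕ) := (Finset.range (L + 1) ×ˢ Finset.range (L + 1)).filter
      (fun q => q.1 < q.2 ∧ ps q.1 = ps q.2) with hT
    have hTne : T.Nonempty := by
      refine ⟨(0, L), ?_⟩
      rw [hT, Finset.mem_filter]
      refine ⟨by simp [Finset.mem_product] <;> omega, hLpos, by rw [hps0, hpsL]⟩
    obtain ⟨q, hqT, hqmin⟩ := T.exists_min_image (fun q => q.2 - q.1) hTne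
    obtain ⟨i, j⟩ := q
    rw [hT, Finset.mem_filter, Finset.mem_product, Finset.mem_range, Finset.mem_range] at hqT
    obtain ⟨⟨hiL, hjL⟩, hij, hpsij⟩ := hqT
    simp only at hij hpsij hqmin ⊢
    have hjL' : j ≤ L := by omega
    -- no repeats strictly inside [i, j)
    have hnorep : ∀ a b, i ≤ a → a < b → b < j → ps a ≠ ps b := by
      intro a b ha hab hbj heq
      have hmem : (a, b) ∈ T := by
        rw [hT, Finset.mem_filter, Finset.mem_product, Finset.mem_range, Finset.mem_range]
        exact ⟨⟨by omega, by omega⟩, hab, heq⟩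
      have := hqmin (a, b) hmem
      simp only at this
      omega
    -- build the cycle
    set n : ℕ := j - i - 1 with hn
    have hn1 : n + 1 = j - i := by omega
    have hbnd : ∀ k : Fin (n + 1), i + (k : ℕ) < j := fun k => by
      have := k.isLt; omega
    set z : Fin (n + 1) → Zd d := fun k => ps (i + (k : ℕ)) with hz
    have hinj : Function.Injective z := by
      intro a b hab
      by_contra hne'
      have hvne : (a : ℕ) ≠ (b : ℕ) := fun h => hne' (Fin.ext h)
      rcases Nat.lt_or_ge (a : ℕ) (b : ℕ) with h | h
      · exact hnorep (i + a) (i + b) (by omega) (by omega) (hbnd b) hab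
      · have h' : (b : ℕ) < (a : ℕ) := by omega
        exact hnorep (i + b) (i + a) (by omega) (by omega) (hbnd a) hab.symm
    set C : ZCycle d := ⟨n, z, hinj⟩ with hC
    -- the steps of C are the slice l[i..j)
    set slice : List (Zd d) := (l.drop i).take (j - i) with hslice
    have hslicelen : slice.length = n + 1 := by
      rw [hslice]; simp [hL]; omega
    have hwk : ∀ k : Fin (n + 1), C.w k = l[i + (k : ℕ)]'(by have := hbnd k; omega) := by
      intro k
      show z (k + 1) - z k = _
      rcases Nat.lt_or_ge ((k : ℕ) + 1) (n + 1) with hk | hk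
      · have hklt : k < Fin.last n := by
          rw [Fin.lt_def]; simp only [Fin.val_last]; omega
        have hv : ((k + 1 : Fin (n + 1)) : ℕ) = (k : ℕ) + 1 :=
          Fin.val_add_one_of_lt hklt
        rw [hz]
        simp only [hv]
        have h2 : ps (i + ((k : ℕ) + 1)) = ps (i + (k : ℕ)) + l[i + (k : ℕ)]'(by have := hbnd k; omega) :=
          hstep (i + (k : ℕ)) (by have := hbnd k; omega)
        rw [h2]
        abel
      · -- k = last
        have hkl : (k : ℕ) = n := by have := k.isLt; omega
        have hv : ((k + 1 : Fin (n + 1)) : ℕ) = 0 := by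
          have hkl' : k = Fin.last n := Fin.ext (by simp [Fin.val_last, hkl])
          rw [hkl', Fin.last_add_one]
          rfl
        rw [hz]
        simp only [hv, Nat.add_zero]
        have hj1 : j = (i + (k : ℕ)) + 1 := by omega
        have h2 := hstep (i + (k : ℕ)) (by omega)
        have e1 : ps i = ps (i + (k : ℕ) + 1) := hpsij.trans (congrArg ps hj1)
        rw [e1, h2]
        abel
    have hsteps : stepsM C = ↑slice := by
      rw [stepsM_coe]
      congr 1
      refine List.ext_getElem (by simp [hslicelen]; rfl) ?_
      intro m h1 h2
      have hm : m < n + 1 := by simpa using h1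
      rw [List.getElem_ofFn, hwk ⟨m, hm⟩, List.getElem_of_eq hslice h2]
      simp only [List.getElem_take, List.getElem_drop]
    -- the remaining list
    set rest : List (Zd d) := l.take i ++ l.drop j with hrest
    have hsplit : (l : Multiset (Zd d)) = ↑slice + ↑rest := by
      have h1 : l = l.take i ++ (slice ++ l.drop j) := by
        rw [hslice]
        conv_lhs => rw [← List.take_append_drop i l]
        congr 1
        conv_lhs => rw [← List.take_append_drop (j - i) (l.drop i)]
        congr 1
        rw [List.drop_drop]
        congr 1
        omega
      rw [hrest]
      conv_lhs => rw [h1]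
      simp only [← Multiset.coe_add]
      abel
    have hslicesum : slice.sum = 0 := by
      have h2 : (l.take j).sum = (l.take i).sum + slice.sum := by
        rw [hslice, ← List.sum_append, ← List.take_add,
          show i + (j - i) = j by omega]
      have h3 : ps j = ps i + slice.sum := h2
      rw [hpsij] at h3
      exact (left_eq_add.1 h3)
    have hrestlen : rest.length ≤ N := by
      rw [hrest]
      simp only [List.length_append, List.length_take, List.length_drop]
      omega
    have hrestsum : rest.sum = 0 := by
      rw [hrest, List.sum_append]
      have h2 : (l.take j).sum = (l.take i).sum + slice.sum := by
        rw [hslice, ← List.sum_append, ← List.take_add,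
          show i + (j - i) = j by omega]
      rw [hslicesum, add_zero] at h2
      rw [← h2, ← List.sum_append, List.take_append_drop, hsum]
    obtain ⟨cs, hcs⟩ := ih rest hrestlen hrestsum
    refine ⟨C :: cs, ?_⟩
    rw [List.map_cons, List.sum_cons, hcs, hsteps, hsplit]
lemma count_stepsM (C : ZCycle d) (x : Zd d) :
    (stepsM C).count x = (Finset.univ.filter fun i => C.w i = x).card := by
  classical
  rw [stepsM, Multiset.count_map, Finset.card, Finset.filter_val]
  congr 1
  apply Multiset.filter_congr
  intro a _
  exact ⟨fun h => h.symm, fun h => h.symm⟩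

lemma emp_eq_count (C : ZCycle d) (x : Zd d) :
    C.emp x = ((stepsM C).count x : ℝ≥0∞) * (((C.len + 1 : ℕ) : ℝ≥0∞))⁻¹ := by
  rw [ZCycle.emp, count_stepsM, div_eq_mul_inv]

lemma len_mul_emp (C : ZCycle d) (x : Zd d) :
    ((C.len + 1 : ℕ) : ℝ≥0∞) * C.emp x = ((stepsM C).count x : ℝ≥0∞) := by
  rw [emp_eq_count, ← mul_assoc, mul_comm ((C.len + 1 : ℕ) : ℝ≥0∞), mul_assoc,
    ENNReal.mul_inv_cancel (by simp) (by simp), mul_one]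

/-- The main finite decomposition lemma: a finitely supported measure with finite values
and zero mean is a finite combination of cycle empirical measures. -/
lemma finite_decomp : ∀ (m : ℕ) (S : Finset (Zd d)) (q : Zd d → ℝ≥0∞),
    S.card ≤ m → (∀ x, q x ≠ ⊤) → (∀ x ∉ S, q x = 0) →
    (∀ i : Fin d, (∑ y ∈ S, (q y).toReal * (y i : ℝ)) = 0) →
    ∃ (k : ℕ) (C : Fin k → ZCycle d) (ρ : Fin k → ℝ≥0∞),
      ∀ x, q x = ∑ j, ρ j * (C j).emp x := by
  classical
  intro m
  induction m with
  | zero =>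
    intro S q hcard hfin hsupp _
    refine ⟨0, Fin.elim0, Fin.elim0, fun x => ?_⟩
    have hS : S = ∅ := Finset.card_eq_zero.1 (Nat.le_zero.1 hcard)
    rw [hsupp x (by simp [hS]), Finset.univ_eq_empty, Finset.sum_empty]
  | succ m ih =>
    intro S q hcard hfin hsupp hmean
    set T : Finset (Zd d) := S.filter (fun x => q x ≠ 0) with hT
    have hsuppT : ∀ x ∉ T, q x = 0 := by
      intro x hx
      rw [hT, Finset.mem_filter] at hx
      push_neg at hx
      by_cases hxS : x ∈ S
      · exact hx hxS
      · exact hsupp x hxS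
    rcases T.eq_empty_or_nonempty with hTe | hTne
    · refine ⟨0, Fin.elim0, Fin.elim0, fun x => ?_⟩
      rw [hsuppT x (by simp [hTe]), Finset.univ_eq_empty, Finset.sum_empty]
    set lam : Zd d → ℝ := fun y => (q y).toReal with hlam
    have hlampos : ∀ y ∈ T, 0 < lam y := by
      intro y hy
      rw [hT, Finset.mem_filter] at hy
      exact ENNReal.toReal_pos hy.2 (hfin y)
    have hmeanT : ∀ i : Fin d, (∑ y ∈ T, lam y * (y i : ℝ)) = 0 := by
      intro i
      rw [← hmean i]
      refine Finset.sum_subset (Finset.filter_subset _ _) ?_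
      intro x hxS hxT
      rw [hT, Finset.mem_filter] at hxT
      push_neg at hxT
      simp only [hlam]
      rw [hxT hxS]
      simp
    obtain ⟨n, hn1, hnrel⟩ := exists_int_relation T lam hlampos hmeanT
    -- the multiset of steps
    set M : Multiset (Zd d) := Multiset.bind T.val (fun y => Multiset.replicate (n y) y) with hM
    have hMcount : ∀ x, M.count x = if x ∈ T then n x else 0 := by
      intro x
      rw [hM, Multiset.count_bind]
      have : ∀ y ∈ T.val, Multiset.count x (Multiset.replicate (n y) y)
          = if y = x then n y else 0 := by
        intro y _
        simp [Multiset.count_replicate, eq_comm]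
      rw [Multiset.map_congr rfl this]
      change (∑ y ∈ T, if y = x then n y else 0) = _
      rw [Finset.sum_ite_eq' T x n]
    have hMsum : M.sum = 0 := by
      funext i
      rw [hM]
      rw [Multiset.sum_bind]
      have : ∀ y ∈ T.val, (Multiset.replicate (n y) y).sum = n y • y := by
        intro y _; rw [Multiset.sum_replicate]
      rw [Multiset.map_congr rfl this]
      change (∑ y ∈ T, n y • y) i = _
      rw [Finset.sum_apply]
      have : ∀ y ∈ T, (n y • y) i = (n y : ℤ) * y i := by
        intro y _
        simp [nsmul_eq_mul]
      rw [Finset.sum_congr rfl this, hnrel i]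
      rfl
    obtain ⟨cs, hcs⟩ := exists_cycle_decomp M.toList.length M.toList le_rfl
      (by rw [Multiset.sum_toList, hMsum])
    rw [Multiset.coe_toList] at hcs
    -- the extraction amount
    set tst : ℝ := T.inf' hTne (fun y => lam y / n y) with htst
    obtain ⟨y₀, hy₀T, hy₀⟩ := T.exists_mem_eq_inf' hTne (fun y => lam y / n y)
    have hnpos : ∀ y ∈ T, 0 < (n y : ℝ) := by
      intro y hy; exact_mod_cast hn1 y hy
    have htstpos : 0 < tst := by
      rw [htst, hy₀]
      exact div_pos (hlampos y₀ hy₀T) (hnpos y₀ hy₀T)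
    have htstle : ∀ y ∈ T, tst * n y ≤ lam y := by
      intro y hy
      have h1 : tst ≤ lam y / n y := by rw [htst]; exact Finset.inf'_le _ hy
      rw [div_eq_mul_inv] at h1
      calc tst * n y ≤ lam y * ((n y : ℝ))⁻¹ * n y := by
            exact mul_le_mul_of_nonneg_right h1 (le_of_lt (hnpos y hy))
        _ = lam y := by rw [mul_assoc, inv_mul_cancel₀ (hnpos y hy).ne', mul_one]
    -- the remaining measure
    set q' : Zd d → ℝ≥0∞ := fun y => if y ∈ T then q y - ENNReal.ofReal (tst * n y) else 0
      with hq'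
    have hqsplit : ∀ y ∈ T, q y = q' y + ENNReal.ofReal (tst * n y) := by
      intro y hy
      simp only [hq', hy, if_true]
      rw [tsub_add_cancel_of_le]
      calc ENNReal.ofReal (tst * n y) ≤ ENNReal.ofReal (lam y) :=
            ENNReal.ofReal_le_ofReal (htstle y hy)
        _ = q y := by simp only [hlam]; exact ENNReal.ofReal_toReal (hfin y)
    have hq'y₀ : q' y₀ = 0 := by
      simp only [hq', hy₀T, if_true]
      rw [tsub_eq_zero_iff_le]
      have h8 : tst * n y₀ = lam y₀ := by
        rw [htst, hy₀]
        rw [div_mul_cancel₀ _ (hnpos y₀ hy₀T).ne']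
      have h9 : ENNReal.ofReal (tst * n y₀) = q y₀ := by
        rw [h8]
        simp only [hlam]
        exact ENNReal.ofReal_toReal (hfin y₀)
      rw [h9]
    have hq'fin : ∀ y, q' y ≠ ⊤ := by
      intro y
      simp only [hq']
      split
      · exact fun h => (hfin y) (eq_top_iff.2 (h ▸ tsub_le_self))
      · simp
    have hq'toReal : ∀ y ∈ T, (q' y).toReal = lam y - tst * n y := by
      intro y hy
      simp only [hq', hy, if_true]
      rw [ENNReal.toReal_sub_of_le]
      · rw [ENNReal.toReal_ofReal (le_of_lt (mul_pos htstpos (hnpos y hy)))]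
      · calc ENNReal.ofReal (tst * n y) ≤ ENNReal.ofReal (lam y) :=
              ENNReal.ofReal_le_ofReal (htstle y hy)
          _ = q y := by simp only [hlam]; exact ENNReal.ofReal_toReal (hfin y)
      · exact hfin y
    -- recursion on T.erase y₀
    have hcard' : (T.erase y₀).card ≤ m := by
      have h1 : T.card ≤ S.card := Finset.card_le_card (Finset.filter_subset _ _)
      have h2 := Finset.card_erase_of_mem hy₀T
      omega
    have hsupp' : ∀ x ∉ T.erase y₀, q' x = 0 := by
      intro x hx
      rw [Finset.mem_erase] at hx
      push_neg at hx
      by_cases hxy : x = y₀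
      · rw [hxy]; exact hq'y₀
      · simp only [hq']
        simp [hx hxy]
    have hq'fin' : ∀ x, q' x ≠ ⊤ := hq'fin
    have hmean' : ∀ i : Fin d, (∑ y ∈ T.erase y₀, (q' y).toReal * (y i : ℝ)) = 0 := by
      intro i
      rw [Finset.sum_erase _ (by rw [hq'y₀]; simp)]
      have hnrelR : (∑ y ∈ T, (n y : ℝ) * (y i : ℝ)) = 0 := by
        have := hnrel i
        have h2 : (((∑ y ∈ T, (n y : ℤ) * y i) : ℤ) : ℝ) = 0 := by rw [this]; simp
        push_cast at h2
        exact h2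
      calc (∑ y ∈ T, (q' y).toReal * (y i : ℝ))
          = ∑ y ∈ T, (lam y * (y i : ℝ) - tst * ((n y : ℝ) * (y i : ℝ))) := by
            refine Finset.sum_congr rfl fun y hy => ?_
            rw [hq'toReal y hy]; ring
        _ = (∑ y ∈ T, lam y * (y i : ℝ)) - tst * ∑ y ∈ T, (n y : ℝ) * (y i : ℝ) := by
            rw [Finset.sum_sub_distrib, Finset.mul_sum]
        _ = 0 := by rw [hmeanT i, hnrelR, mul_zero, sub_zero]
    obtain ⟨k', C', ρ', hih⟩ := ih (T.erase y₀) q' hcard' hq'fin' hsupp' hmean'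
    -- assemble
    set K := cs.length with hK
    have list_sum_map : ∀ {M : Type} [AddCommMonoid M] (g : ZCycle d → M),
        ((cs.map g).sum) = ∑ j : Fin K, g cs[j] := by
      intro M _ g
      have h1 : cs.map g = List.ofFn (fun j : Fin K => g cs[(j : ℕ)]) := by
        refine List.ext_getElem (by simp [hK]) ?_
        intro m hm1 hm2
        simp
      rw [h1, List.sum_ofFn]
      exact Finset.sum_congr rfl fun j _ => rfl
    have hcount : ∀ x, (∑ j : Fin K, (stepsM cs[(j : ℕ)]).count x) = M.count x := by
      intro x
      have h1 := map_list_sum (Multiset.countAddMonoidHom x) (cs.map stepsM)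
      rw [hcs] at h1
      rw [Multiset.coe_countAddMonoidHom] at h1  
      rw [h1, List.map_map]
      exact (list_sum_map (Multiset.count x ∘ stepsM)).symm
    set Cc : Fin K → ZCycle d := fun j => cs[(j : ℕ)] with hCc
    set ρc : Fin K → ℝ≥0∞ := fun j => ENNReal.ofReal tst * ((cs[(j : ℕ)].len + 1 : ℕ) : ℝ≥0∞)
      with hρc
    refine ⟨K + k', Fin.addCases Cc C', Fin.addCases ρc ρ', fun x => ?_⟩
    rw [Fin.sum_univ_add]
    have hL : ∀ (j : Fin K), (Fin.addCases (motive := fun _ => ZCycle d) Cc C' (Fin.castAdd k' j)) = Cc j := fun j => Fin.addCases_left j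
    have hL2 : ∀ (j : Fin K), (Fin.addCases (motive := fun _ => ℝ≥0∞) ρc ρ' (Fin.castAdd k' j)) = ρc j := fun j => Fin.addCases_left j
    have hR : ∀ (j : Fin k'), (Fin.addCases (motive := fun _ => ZCycle d) Cc C' (Fin.natAdd K j)) = C' j := fun j => Fin.addCases_right j
    have hR2 : ∀ (j : Fin k'), (Fin.addCases (motive := fun _ => ℝ≥0∞) ρc ρ' (Fin.natAdd K j)) = ρ' j := fun j => Fin.addCases_right j
    have hcyc : (∑ j : Fin K, ρc j * (Cc j).emp x)
        = ENNReal.ofReal tst * (M.count x : ℝ≥0∞) := by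
      rw [← hcount x]
      rw [Nat.cast_sum, Finset.mul_sum]
      refine Finset.sum_congr rfl fun j _ => ?_
      rw [hρc, hCc]
      rw [mul_assoc, len_mul_emp]
    calc q x = ENNReal.ofReal tst * (M.count x : ℝ≥0∞) + q' x := by
          by_cases hxT : x ∈ T
          · rw [hMcount x, if_pos hxT]
            rw [hqsplit x hxT, add_comm]
            congr 1
            rw [← ENNReal.ofReal_natCast (n x), ← ENNReal.ofReal_mul (le_of_lt htstpos)]
          · rw [hMcount x, if_neg hxT, Nat.cast_zero, mul_zero, zero_add]
            rw [hsuppT x hxT, hq']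
            simp [hxT]
      _ = (∑ j : Fin K, (Fin.addCases (motive := fun _ => ℝ≥0∞) ρc ρ' (Fin.castAdd k' j)) *
            ((Fin.addCases (motive := fun _ => ZCycle d) Cc C' (Fin.castAdd k' j)).emp x))
          + ∑ j : Fin k', (Fin.addCases (motive := fun _ => ℝ≥0∞) ρc ρ' (Fin.natAdd K j)) *
            ((Fin.addCases (motive := fun _ => ZCycle d) Cc C' (Fin.natAdd K j)).emp x) := by
          congr 1
          · rw [← hcyc]
            refine Finset.sum_congr rfl fun j _ => by rw [hL j, hL2 j]
          · rw [hih x]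
            refine Finset.sum_congr rfl fun j _ => by rw [hR j, hR2 j]
noncomputable def vecE (y : Zd d) : EuclideanSpace ℝ (Fin d) := WithLp.toLp 2 (fun i => (y i : ℝ))

lemma inner_vecE (u : EuclideanSpace ℝ (Fin d)) (y : Zd d) :
    (inner ℝ u (vecE y) : ℝ) = dot (fun i => u i) y := by
  rw [PiLp.inner_apply]
  simp [RCLike.inner_apply, dot, vecE]
  exact Finset.sum_congr rfl fun _ _ => mul_comm _ _

lemma unit_of_norm (v : EuclideanSpace ℝ (Fin d)) (h : ‖v‖ = 1) :
    (∑ i, ((fun i => v i) i) ^ 2) = 1 := by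
  have h2 : ‖v‖ ^ 2 = 1 := by rw [h]; norm_num
  rw [← real_inner_self_eq_norm_sq, PiLp.inner_apply] at h2
  rw [← h2]
  refine Finset.sum_congr rfl fun i _ => ?_
  simp [RCLike.inner_apply]

/-- The key extraction lemma. -/
lemma extraction {p : Zd d → ℝ≥0∞} (hbal : Balanced p) (hfin : ∀ y, p y ≠ ⊤) (x : Zd d) :
    ∃ (S : Finset (Zd d)) (q : Zd d → ℝ≥0∞),
      (∀ y, q y ≤ p y) ∧ (∀ y ∉ S, q y = 0) ∧ q x = p x / 2 ∧
      (∀ i : Fin d, (∑ y ∈ S, (q y).toReal * (y i : ℝ)) = 0) := by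
  classical
  set sx : ℝ := (p x).toReal with hsx
  set z : EuclideanSpace ℝ (Fin d) := (-(sx / 2)) • vecE x with hz
  set Box : Set (Zd d → ℝ) := Set.pi Set.univ (fun y => Set.Icc 0 (p y).toReal) with hBox
  set K : Finset (Zd d) → Set (EuclideanSpace ℝ (Fin d)) :=
    fun F => (fun lam : Zd d → ℝ => ∑ y ∈ F, lam y • vecE y) '' Box with hK
  have hK0 : ∀ F, (0 : EuclideanSpace ℝ (Fin d)) ∈ K F := by
    intro F
    refine ⟨0, fun y _ => ?_, by simp⟩
    exact Set.mem_Icc.2 ⟨le_rfl, ENNReal.toReal_nonneg⟩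
  -- main claim
  have hclaim : ∃ F : Finset (Zd d), (∀ y ∈ F, p y ≠ 0 ∧ y ≠ x) ∧ z ∈ K F := by
    by_contra hcon
    push_neg at hcon
    by_cases px0 : p x = 0
    · refine hcon ∅ (by simp) ?_
      have hz0 : z = 0 := by rw [hz]; simp [hsx, px0]
      rw [hz0]; exact hK0 ∅
    have hsxpos : 0 < sx := by rw [hsx]; exact ENNReal.toReal_pos px0 (hfin x)
    set V : Submodule ℝ (EuclideanSpace ℝ (Fin d)) :=
      Submodule.span ℝ (vecE '' {y | p y ≠ 0}) with hV
    have hzV : z ∈ V := by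
      rw [hz]
      exact V.smul_mem _ (Submodule.subset_span ⟨x, px0, rfl⟩)
    have hKV : ∀ F : Finset (Zd d), (∀ y ∈ F, p y ≠ 0 ∧ y ≠ x) → K F ⊆ (V : Set _) := by
      rintro F hF a ⟨lam, _, hsum⟩
      rw [← hsum]
      exact Submodule.sum_mem V fun y hy =>
        V.smul_mem _ (Submodule.subset_span ⟨y, (hF y hy).1, rfl⟩)
    have hBoxComp : IsCompact Box := isCompact_univ_pi fun y => isCompact_Icc
    have hBoxConv : Convex ℝ Box := convex_pi fun y _ => convex_Icc _ _
    have hcont : ∀ F : Finset (Zd d),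
        Continuous (fun lam : Zd d → ℝ => ∑ y ∈ F, lam y • vecE y) := fun F =>
      continuous_finset_sum _ fun y _ => (continuous_apply y).smul continuous_const
    have hKcomp : ∀ F, IsCompact (K F) := fun F => hBoxComp.image (hcont F)
    have hKconv : ∀ F, Convex ℝ (K F) := by
      intro F
      let L : (Zd d → ℝ) →ₗ[ℝ] EuclideanSpace ℝ (Fin d) :=
        { toFun := fun lam => ∑ y ∈ F, lam y • vecE y
          map_add' := fun a b => by
            simp only [Pi.add_apply, add_smul]
            rw [Finset.sum_add_distrib]
          map_smul' := fun c a => by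
            simp only [Pi.smul_apply, smul_eq_mul, RingHom.id_apply, Finset.smul_sum, smul_smul] }
      exact hBoxConv.linear_image L
    -- separation for each admissible F
    have hsep : ∀ F : Finset (Zd d), (∀ y ∈ F, p y ≠ 0 ∧ y ≠ x) →
        ∃ v : EuclideanSpace ℝ (Fin d), ‖v‖ = 1 ∧ v ∈ V ∧
          ∀ a ∈ K F, (inner ℝ v a : ℝ) < inner ℝ v z := by
      intro F hF
      obtain ⟨f, u, hfa, hfz⟩ := geometric_hahn_banach_closed_point (hKconv F)
        (hKcomp F).isClosed (hcon F hF)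
      set w : EuclideanSpace ℝ (Fin d) := (InnerProductSpace.toDual ℝ _).symm f with hw
      have hwa : ∀ a, (inner ℝ w a : ℝ) = f a := fun a => InnerProductSpace.toDual_symm_apply
      set wV : EuclideanSpace ℝ (Fin d) := ((V.orthogonalProjectionOnto w : V) : EuclideanSpace ℝ (Fin d)) with hwV
      have hproj : ∀ a ∈ V, (inner ℝ wV a : ℝ) = inner ℝ w a := by
        intro a ha
        rw [hwV, ← Submodule.starProjection_apply, Submodule.inner_starProjection_left_eq_right,
          Submodule.starProjection_eq_self_iff.2 ha]
      have hstrict : ∀ a ∈ K F, (inner ℝ wV a : ℝ) < inner ℝ wV z := by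
        intro a ha
        rw [hproj a (hKV F hF ha), hproj z hzV, hwa, hwa]
        exact lt_trans (hfa a ha) hfz
      have hpos : (0:ℝ) < inner ℝ wV z := by
        have h0 := hstrict 0 (hK0 F)
        simpa using h0
      have hwVne : wV ≠ 0 := by
        intro h0
        rw [h0] at hpos
        simp at hpos
      have hnormpos : (0:ℝ) < ‖wV‖ := norm_pos_iff.2 hwVne
      refine ⟨‖wV‖⁻¹ • wV, ?_, V.smul_mem _ (by rw [hwV]; exact SetLike.coe_mem _), ?_⟩
      · rw [norm_smul, norm_inv, norm_norm, inv_mul_cancel₀ hnormpos.ne']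
      · intro a ha
        rw [real_inner_smul_left, real_inner_smul_left]
        exact mul_lt_mul_of_pos_left (hstrict a ha) (inv_pos.2 hnormpos)
    -- enumeration and subsequence
    obtain ⟨e, he⟩ := exists_surjective_nat (Zd d)
    set Fn : ℕ → Finset (Zd d) := fun n =>
      ((Finset.range n).image e).filter (fun y => p y ≠ 0 ∧ y ≠ x) with hFn
    have hFncond : ∀ n, ∀ y ∈ Fn n, p y ≠ 0 ∧ y ≠ x := fun n y hy => (Finset.mem_filter.1 hy).2
    choose vs hvs1 hvs2 hvs3 using fun n => hsep (Fn n) (hFncond n)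
    have hSph : IsCompact (Metric.sphere (0 : EuclideanSpace ℝ (Fin d)) 1 ∩ V) := by
      apply Metric.isCompact_of_isClosed_isBounded
      · exact Metric.isClosed_sphere.inter V.closed_of_finiteDimensional
      · exact Metric.isBounded_sphere.subset Set.inter_subset_left
    have hmem : ∀ n, vs n ∈ Metric.sphere (0 : EuclideanSpace ℝ (Fin d)) 1 ∩ V := by
      intro n
      exact ⟨by simpa [dist_zero_right] using hvs1 n, hvs2 n⟩
    obtain ⟨v, hvmem, φ, hφ, hvlim⟩ := hSph.tendsto_subseq hmem
    obtain ⟨hvsph, hvV⟩ := hvmem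
    have hvnorm : ‖v‖ = 1 := by simpa [dist_zero_right] using hvsph
    have hinnerz : (inner ℝ v z : ℝ) = -(sx/2) * (inner ℝ v (vecE x) : ℝ) := by
      rw [hz, real_inner_smul_right]
    -- the limit inequality
    have key : ∀ G : Finset (Zd d), (∀ y ∈ G, p y ≠ 0 ∧ y ≠ x) →
        (∑ y ∈ G, (p y).toReal * max (inner ℝ v (vecE y) : ℝ) 0) ≤ (inner ℝ v z : ℝ) := by
      intro G hG
      set lamG : Zd d → ℝ := fun y =>
        if y ∈ G ∧ 0 < (inner ℝ v (vecE y) : ℝ) then (p y).toReal else 0 with hlamG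
      have hlamBox : lamG ∈ Box := by
        intro y _
        simp only [hlamG]
        split
        · exact ⟨ENNReal.toReal_nonneg, le_rfl⟩
        · exact ⟨le_rfl, ENNReal.toReal_nonneg⟩
      set aPt : EuclideanSpace ℝ (Fin d) := ∑ y ∈ G, lamG y • vecE y with haPt
      set N : ℕ := (G.sup (fun y => Function.surjInv he y)) + 1 with hN
      have hGsub : ∀ n ≥ N, G ⊆ Fn n := by
        intro n hn y hy
        simp only [hFn, Finset.mem_filter]
        refine ⟨Finset.mem_image.2 ⟨Function.surjInv he y, ?_, Function.surjInv_eq he y⟩, hG y hy⟩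
        rw [Finset.mem_range]
        have h6 : Function.surjInv he y ≤ G.sup (fun y => Function.surjInv he y) :=
          Finset.le_sup hy
        omega
      have haK : ∀ n ≥ N, aPt ∈ K (Fn n) := by
        intro n hn
        refine ⟨lamG, hlamBox, ?_⟩
        refine (Finset.sum_subset (hGsub n hn) ?_).symm
        intro y _ hyG
        simp only [hlamG]
        rw [if_neg (by intro hh; exact hyG hh.1), zero_smul]
      have hev : ∀ᶠ k in Filter.atTop, (inner ℝ (vs (φ k)) aPt : ℝ) ≤ inner ℝ (vs (φ k)) z := by
        refine Filter.eventually_atTop.2 ⟨N, fun k hk => ?_⟩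
        have hφk : φ k ≥ N := le_trans hk hφ.le_apply
        exact le_of_lt (hvs3 (φ k) aPt (haK (φ k) hφk))
      have hlim1 : Filter.Tendsto (fun k => (inner ℝ (vs (φ k)) aPt : ℝ)) Filter.atTop
          (nhds (inner ℝ v aPt)) := Filter.Tendsto.inner hvlim tendsto_const_nhds
      have hlim2 : Filter.Tendsto (fun k => (inner ℝ (vs (φ k)) z : ℝ)) Filter.atTop
          (nhds (inner ℝ v z)) := Filter.Tendsto.inner hvlim tendsto_const_nhds
      have hle : (inner ℝ v aPt : ℝ) ≤ inner ℝ v z := le_of_tendsto_of_tendsto hlim1 hlim2 hev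
      have hcomp : (inner ℝ v aPt : ℝ) = ∑ y ∈ G, (p y).toReal * max (inner ℝ v (vecE y) : ℝ) 0 := by
        rw [haPt, inner_sum]
        refine Finset.sum_congr rfl fun y hy => ?_
        rw [real_inner_smul_right]
        simp only [hlamG]
        rcases lt_or_ge 0 ((inner ℝ v (vecE y) : ℝ)) with h | h
        · rw [if_pos ⟨hy, h⟩, max_eq_left (le_of_lt h)]
        · rw [if_neg (fun hh => absurd hh.2 (not_lt.2 h)), max_eq_right h, zero_mul, mul_zero]
      rw [← hcomp]
      exact hle
    set a : ℝ := (inner ℝ v (vecE x) : ℝ) with haa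
    set v' : Fin d → ℝ := fun i => v i with hv'
    have hunit : (∑ i, (v' i) ^ 2) = 1 := unit_of_norm v hvnorm
    have hSveq : Sv v' p = Sv (-v') p := (balanced_iff p).1 hbal v' hunit
    have hdot : ∀ y, dot v' y = (inner ℝ v (vecE y) : ℝ) := fun y => (inner_vecE v y).symm
    rcases lt_trichotomy a 0 with ha | ha | ha
    · -- a < 0 : contradiction with balancedness
      have hup : Sv v' p ≤ ENNReal.ofReal ((sx/2) * (-a)) := by
        rw [Sv, ENNReal.tsum_eq_iSup_sum]
        refine iSup_le fun G' => ?_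
        have hsum_eq : (∑ y ∈ G', p y * ENNReal.ofReal (dot v' y))
            = ∑ y ∈ G'.filter (fun y => p y ≠ 0 ∧ y ≠ x), p y * ENNReal.ofReal (dot v' y) := by
          symm
          apply Finset.sum_subset (Finset.filter_subset _ _)
          intro y hyG hyG2
          simp only [Finset.mem_filter] at hyG2
          push_neg at hyG2
          by_cases h0 : p y = 0
          · rw [h0, zero_mul]
          · have hyx : y = x := hyG2 hyG h0
            rw [hyx]
            have : ENNReal.ofReal (dot v' x) = 0 := by
              rw [ENNReal.ofReal_eq_zero, hdot x]
              exact le_of_lt ha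
            rw [this, mul_zero]
        rw [hsum_eq, sum_mul_ofReal_eq _ p (fun y _ => hfin y)]
        apply ENNReal.ofReal_le_ofReal
        calc (∑ y ∈ G'.filter (fun y => p y ≠ 0 ∧ y ≠ x), (p y).toReal * max (dot v' y) 0)
            = ∑ y ∈ G'.filter (fun y => p y ≠ 0 ∧ y ≠ x),
                (p y).toReal * max (inner ℝ v (vecE y) : ℝ) 0 :=
              Finset.sum_congr rfl fun y _ => by rw [hdot]
          _ ≤ (inner ℝ v z : ℝ) := key _ (fun y hy => (Finset.mem_filter.1 hy).2)
          _ = (sx/2) * (-a) := by rw [hinnerz]; ring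
      have hlow : ENNReal.ofReal (sx * (-a)) ≤ Sv (-v') p := by
        have h1 : ENNReal.ofReal (sx * (-a)) = p x * ENNReal.ofReal (dot (-v') x) := by
          rw [ENNReal.ofReal_mul (le_of_lt hsxpos), dot_neg, hdot, ← haa]
          rw [hsx, ENNReal.ofReal_toReal (hfin x)]
        rw [h1, Sv]
        exact ENNReal.le_tsum x
      have hcontra : Sv v' p < Sv (-v') p :=
        calc Sv v' p ≤ ENNReal.ofReal ((sx/2) * (-a)) := hup
          _ < ENNReal.ofReal (sx * (-a)) := by
              rw [ENNReal.ofReal_lt_ofReal_iff (by nlinarith)]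
              nlinarith
          _ ≤ Sv (-v') p := hlow
      rw [hSveq] at hcontra
      exact lt_irrefl _ hcontra
    · -- a = 0 : v is orthogonal to the support, contradiction with v ∈ V, ‖v‖ = 1
      have hnonpos : ∀ y, p y ≠ 0 → y ≠ x → (inner ℝ v (vecE y) : ℝ) ≤ 0 := by
        intro y h0 hyx
        have h7 := key {y} (by simp [h0, hyx])
        simp only [Finset.sum_singleton] at h7
        rw [hinnerz, ha] at h7
        have hppos : 0 < (p y).toReal := ENNReal.toReal_pos h0 (hfin y)
        by_contra hpos2
        push_neg at hpos2
        have h8 : 0 < (p y).toReal * max (inner ℝ v (vecE y):ℝ) 0 :=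
          mul_pos hppos (by rw [max_eq_left (le_of_lt hpos2)]; exact hpos2)
        nlinarith
      have hSv0 : Sv v' p = 0 := by
        rw [Sv, ENNReal.tsum_eq_zero]
        intro y
        by_cases h0 : p y = 0
        · rw [h0, zero_mul]
        by_cases hyx : y = x
        · rw [hyx]
          have h9 : ENNReal.ofReal (dot v' x) = 0 := by
            rw [ENNReal.ofReal_eq_zero, hdot x, ← haa, ha]
          rw [h9, mul_zero]
        · have h9 : ENNReal.ofReal (dot v' y) = 0 := by
            rw [ENNReal.ofReal_eq_zero, hdot y]
            exact hnonpos y h0 hyx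
          rw [h9, mul_zero]
      have hSvneg0 : Sv (-v') p = 0 := by rw [← hSveq, hSv0]
      have hge : ∀ y, p y ≠ 0 → 0 ≤ (inner ℝ v (vecE y) : ℝ) := by
        intro y h0
        rw [Sv, ENNReal.tsum_eq_zero] at hSvneg0
        have h1 := hSvneg0 y
        rcases mul_eq_zero.1 h1 with h2 | h2
        · exact absurd h2 h0
        · rw [ENNReal.ofReal_eq_zero, dot_neg, hdot] at h2
          linarith
      have hzero : ∀ y, p y ≠ 0 → (inner ℝ v (vecE y) : ℝ) = 0 := by
        intro y h0
        by_cases hyx : y = x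
        · rw [hyx, ← haa]; exact ha
        · exact le_antisymm (hnonpos y h0 hyx) (hge y h0)
      have horto : ∀ u ∈ V, (inner ℝ v u : ℝ) = 0 := by
        intro u hu
        induction hu using Submodule.span_induction with
        | mem u hu' =>
          obtain ⟨y, hy, rfl⟩ := hu'
          exact hzero y hy
        | zero => simp
        | add u1 u2 _ _ h1 h2 => rw [inner_add_right, h1, h2, add_zero]
        | smul c u1 _ h1 => rw [real_inner_smul_right, h1, mul_zero]
      have hvv := horto v hvV
      rw [real_inner_self_eq_norm_sq, hvnorm] at hvv
      norm_num at hvv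
    · -- a > 0 : immediate contradiction
      have h7 := key ∅ (by simp)
      simp only [Finset.sum_empty] at h7
      rw [hinnerz] at h7
      nlinarith
  obtain ⟨F, hFcond, lam, hlamBox, hlamsum⟩ := hclaim
  have hxF : x ∉ F := fun h => (hFcond x h).2 rfl
  set q : Zd d → ℝ≥0∞ := fun y => if y = x then p x / 2
    else if y ∈ F then ENNReal.ofReal (lam y) else 0 with hq
  have hlam0 : ∀ y, 0 ≤ lam y := fun y => (hlamBox y (Set.mem_univ y)).1
  have hlamle : ∀ y, lam y ≤ (p y).toReal := fun y => (hlamBox y (Set.mem_univ y)).2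
  refine ⟨insert x F, q, ?_, ?_, ?_, ?_⟩
  · intro y
    rw [hq]
    by_cases h1 : y = x
    · simp only [h1, if_true]
      exact h1 ▸ ENNReal.half_le_self
    · simp only [h1, if_false]
      split
      · calc ENNReal.ofReal (lam y) ≤ ENNReal.ofReal ((p y).toReal) :=
              ENNReal.ofReal_le_ofReal (hlamle y)
          _ = p y := ENNReal.ofReal_toReal (hfin y)
      · exact zero_le
  · intro y hy
    rw [Finset.mem_insert] at hy
    push_neg at hy
    rw [hq]
    simp [hy.1, hy.2]
  · rw [hq]; simp
  · intro i
    rw [Finset.sum_insert hxF]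
    have hqx : (q x).toReal = sx / 2 := by
      simp only [hq, if_pos rfl]
      rw [ENNReal.toReal_div]
      simp [hsx]
    have hqF : ∀ y ∈ F, (q y).toReal = lam y := by
      intro y hy
      simp only [hq]
      rw [if_neg (hFcond y hy).2, if_pos hy]
      exact ENNReal.toReal_ofReal (hlam0 y)
    have hzi : (∑ y ∈ F, lam y * (y i : ℝ)) = -(sx / 2) * (x i : ℝ) := by
      have h4 : (∑ y ∈ F, lam y • vecE y) i = z i :=
        congrArg (fun (u : EuclideanSpace ℝ (Fin d)) => u i) hlamsum
      have h5 : (∑ y ∈ F, lam y • vecE y) i = ∑ y ∈ F, lam y * (y i : ℝ) := by simp [vecE]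
      rw [← h5, h4, hz]; simp [vecE]
    rw [hqx, Finset.sum_congr rfl (fun y hy => by rw [hqF y hy]), hzi]
    ring
/-! ### tsum facts for emp -/

lemma tsum_emp_mul (C : ZCycle d) (g : Zd d → ℝ≥0∞) :
    ∑' x, C.emp x * g x = (((C.len + 1 : ℕ) : ℝ≥0∞))⁻¹ * ∑ i, g (C.w i) := by
  classical
  unfold ZCycle.emp
  have hrw : ∀ x : Zd d,
      ((Finset.univ.filter fun i : Fin (C.len + 1) => C.w i = x).card : ℝ≥0∞) /
        ((C.len + 1 : ℕ) : ℝ≥0∞) * g x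
      = ∑ i : Fin (C.len + 1), (if C.w i = x then
          (((C.len + 1 : ℕ) : ℝ≥0∞))⁻¹ * g x else 0) := by
    intro x
    rw [Finset.card_filter, Nat.cast_sum, div_eq_mul_inv, Finset.sum_mul, Finset.sum_mul]
    refine Finset.sum_congr rfl fun i _ => ?_
    split <;> simp [mul_assoc]
  simp only [hrw]
  rw [Summable.tsum_finsetSum (fun i _ => ENNReal.summable)]
  rw [Finset.mul_sum]
  refine Finset.sum_congr rfl fun i _ => ?_
  rw [tsum_eq_single (C.w i)]
  · simp
  · intro x hx
    exact if_neg (fun h => hx h.symm)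

lemma emp_mass (C : ZCycle d) : ∑' x, C.emp x = 1 := by
  have h := tsum_emp_mul C (fun _ => 1)
  simp only [mul_one] at h
  rw [h, Finset.sum_const, Finset.card_univ, Fintype.card_fin]
  simp only [nsmul_eq_mul, mul_one]
  rw [ENNReal.inv_mul_cancel (by exact_mod_cast Nat.succ_ne_zero C.len) (by simp)]

/-- mass of a finite decomposition -/
lemma decomp_mass {k : ℕ} (C : Fin k → ZCycle d) (ρ : Fin k → ℝ≥0∞) (q : Zd d → ℝ≥0∞)
    (h : ∀ x, q x = ∑ j, ρ j * (C j).emp x) :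
    (∑' x, q x) = ∑ j, ρ j := by
  calc (∑' x, q x) = ∑' x, ∑ j, ρ j * (C j).emp x := tsum_congr h
    _ = ∑ j, ∑' x, ρ j * (C j).emp x := Summable.tsum_finsetSum (fun j _ => ENNReal.summable)
    _ = ∑ j, ρ j := by
        refine Finset.sum_congr rfl fun j _ => ?_
        rw [ENNReal.tsum_mul_left]
        have h2 : ∑' x, (C j).emp x = 1 := emp_mass (C j)
        rw [h2, mul_one]

/-! ### Balancedness is preserved by subtracting finite mean-zero pieces -/

lemma Sv_sub_piece (r q : Zd d → ℝ≥0∞) (hle : ∀ y, q y ≤ r y) (v : Fin d → ℝ) :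
    Sv v r = Sv v (fun y => r y - q y) + Sv v q := by
  rw [Sv, Sv, Sv, ← ENNReal.tsum_add]
  refine tsum_congr fun y => ?_
  rw [← add_mul, tsub_add_cancel_of_le (hle y)]

lemma Sv_finite_piece (q : Zd d → ℝ≥0∞) (S : Finset (Zd d)) (hq0 : ∀ y ∉ S, q y = 0)
    (v : Fin d → ℝ) :
    Sv v q = ∑ y ∈ S, q y * ENNReal.ofReal (dot v y) := by
  rw [Sv]
  exact tsum_eq_sum (fun y hy => by rw [hq0 y hy, zero_mul])

lemma piece_balanced_sub {r q : Zd d → ℝ≥0∞} (hbal : Balanced r) (hrfin : ∀ y, r y ≠ ⊤)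
    (S : Finset (Zd d)) (hle : ∀ y, q y ≤ r y) (hq0 : ∀ y ∉ S, q y = 0)
    (hmean : ∀ i : Fin d, (∑ y ∈ S, (q y).toReal * (y i : ℝ)) = 0) :
    Balanced (fun y => r y - q y) := by
  rw [balanced_iff] at hbal ⊢
  intro v hv
  have hqfin : ∀ y, q y ≠ ⊤ := fun y => ne_top_of_le_ne_top (hrfin y) (hle y)
  have hq : Sv v q = Sv (-v) q := by
    rw [Sv_finite_piece q S hq0, Sv_finite_piece q S hq0]
    have h0 : (∑ y ∈ S, (q y).toReal * dot v y) = 0 := by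
      have h1 : ∀ y ∈ S, (q y).toReal * dot v y = ∑ i, v i * ((q y).toReal * (y i : ℝ)) := by
        intro y _
        rw [dot, Finset.mul_sum]
        exact Finset.sum_congr rfl fun i _ => by ring
      rw [Finset.sum_congr rfl h1, Finset.sum_comm]
      refine Finset.sum_eq_zero fun i _ => ?_
      rw [← Finset.mul_sum, hmean i, mul_zero]
    have h2 := sum_ofReal_posneg S q (fun y hy => hqfin y) (fun y => dot v y) h0
    calc (∑ y ∈ S, q y * ENNReal.ofReal (dot v y))
        = ∑ y ∈ S, q y * ENNReal.ofReal (-(dot v y)) := h2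
      _ = ∑ y ∈ S, q y * ENNReal.ofReal (dot (-v) y) := by
          refine Finset.sum_congr rfl fun y _ => by rw [dot_neg]
  have h1 := Sv_sub_piece r q hle v
  have h2 := Sv_sub_piece r q hle (-v)
  have hfinq : Sv v q ≠ ⊤ := by
    rw [Sv_finite_piece q S hq0]
    exact (ENNReal.sum_lt_top.2 (fun y hy => lt_top_iff_ne_top.2
      (ENNReal.mul_ne_top (hqfin y) ENNReal.ofReal_ne_top))).ne
  rw [hbal v hv, h2, hq] at h1
  exact WithTop.add_right_cancel (hq ▸ hfinq) h1.symm

/-! ### helper: tsum over ℕ of a Fin-supported family -/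

lemma tsum_dite_fin (k : ℕ) (f : Fin k → ℝ≥0∞) :
    (∑' j : ℕ, if h : j < k then f ⟨j, h⟩ else 0) = ∑ j : Fin k, f j := by
  rw [tsum_eq_sum (s := Finset.range k) (fun j hj => by rw [dif_neg (by simpa using hj)])]
  rw [← Fin.sum_univ_eq_sum_range (fun j => if h : j < k then f ⟨j, h⟩ else 0) k]
  refine Finset.sum_congr rfl fun j _ => ?_
  rw [dif_pos j.isLt]

def trivialCycle : ZCycle d := ⟨0, fun _ => 0, fun a b _ => Fin.ext (by omega)⟩

/-! ### The iteration -/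

open Classical in
noncomputable def pickPair (r : Zd d → ℝ≥0∞) (x : Zd d) : Finset (Zd d) × (Zd d → ℝ≥0∞) :=
  if h : Balanced r ∧ (∀ y, r y ≠ ⊤) then
    ⟨(extraction h.1 h.2 x).choose, (extraction h.1 h.2 x).choose_spec.choose⟩
  else ⟨∅, 0⟩

lemma pickPair_spec {r : Zd d → ℝ≥0∞} {x : Zd d} (h1 : Balanced r) (h2 : ∀ y, r y ≠ ⊤) :
    (∀ y, (pickPair r x).2 y ≤ r y) ∧ (∀ y ∉ (pickPair r x).1, (pickPair r x).2 y = 0) ∧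
    (pickPair r x).2 x = r x / 2 ∧
    (∀ i : Fin d, (∑ y ∈ (pickPair r x).1, ((pickPair r x).2 y).toReal * (y i : ℝ)) = 0) := by
  classical
  rw [pickPair, dif_pos (⟨h1, h2⟩ : Balanced r ∧ (∀ y, r y ≠ ⊤))]
  exact (extraction h1 h2 x).choose_spec.choose_spec

theorem balanced_isCyclic {p : Zd d → ℝ≥0∞} (hp : (∑' x, p x) = 1) (hbal : Balanced p) :
    IsCyclic p := by
  classical
  have hpfin : ∀ y, p y ≠ ⊤ := by
    intro y
    have h1 : p y ≤ 1 := hp ▸ ENNReal.le_tsum y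
    exact (lt_of_le_of_lt h1 ENNReal.one_lt_top).ne
  obtain ⟨e, he⟩ := exists_surjective_nat (Zd d)
  set E : ℕ → Zd d := fun n => e (Nat.unpair n).1 with hE
  have hEvisit : ∀ (x : Zd d) (m : ℕ), ∃ n ≥ m, E n = x := by
    intro x m
    refine ⟨Nat.pair (Function.surjInv he x) m, Nat.right_le_pair _ _, ?_⟩
    rw [hE]
    simp only [Nat.unpair_pair]
    exact Function.surjInv_eq he x
  -- the sequence of remainders
  set R : ℕ → (Zd d → ℝ≥0∞) := fun n => Nat.rec p
    (fun n r => fun y => r y - (pickPair r (E n)).2 y) n with hR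
  set Q : ℕ → (Zd d → ℝ≥0∞) := fun n => (pickPair (R n) (E n)).2 with hQ
  set S : ℕ → Finset (Zd d) := fun n => (pickPair (R n) (E n)).1 with hS
  have hRsucc : ∀ n y, R (n + 1) y = R n y - Q n y := fun n y => rfl
  -- invariants
  have hinv : ∀ n, Balanced (R n) ∧ (∀ y, R n y ≤ p y) := by
    intro n
    induction n with
    | zero => exact ⟨hbal, fun y => le_rfl⟩
    | succ n ihn =>
      have hfin : ∀ y, R n y ≠ ⊤ := fun y =>
        (lt_of_le_of_lt (ihn.2 y) (lt_top_iff_ne_top.2 (hpfin y))).ne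
      obtain ⟨hle, hq0, hhalf, hmean⟩ := pickPair_spec (x := E n) ihn.1 hfin
      constructor
      · have := piece_balanced_sub ihn.1 hfin (S n) hle hq0 hmean
        exact this
      · intro y
        rw [hRsucc]
        exact le_trans tsub_le_self (ihn.2 y)
  have hRfin : ∀ n y, R n y ≠ ⊤ := fun n y =>
    (lt_of_le_of_lt ((hinv n).2 y) (lt_top_iff_ne_top.2 (hpfin y))).ne
  have hQspec : ∀ n, (∀ y, Q n y ≤ R n y) ∧ (∀ y ∉ S n, Q n y = 0) ∧
      Q n (E n) = R n (E n) / 2 ∧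
      (∀ i : Fin d, (∑ y ∈ S n, (Q n y).toReal * (y i : ℝ)) = 0) := fun n =>
    pickPair_spec (hinv n).1 (hRfin n)
  -- monotonicity
  have hRmono : ∀ n y, R (n + 1) y ≤ R n y := by
    intro n y
    rw [hRsucc]
    exact tsub_le_self
  have hRanti : ∀ {m n} (h : m ≤ n) (y : Zd d), R n y ≤ R m y := by
    intro m n h y
    induction n with
    | zero => rw [Nat.le_zero.1 h]
    | succ n ihn =>
      rcases Nat.lt_or_ge m (n + 1) with h2 | h2
      · exact le_trans (hRmono n y) (ihn (by omega))
      · have : m = n + 1 := by omega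
        rw [this]
  -- telescoping
  have htel : ∀ n y, p y = R n y + ∑ k ∈ Finset.range n, Q k y := by
    intro n
    induction n with
    | zero => intro y; rw [Finset.range_zero, Finset.sum_empty, add_zero]; rfl
    | succ n ihn =>
      intro y
      rw [Finset.sum_range_succ, ihn y]
      have h1 : R n y = R (n + 1) y + Q n y := by
        rw [hRsucc]
        rw [tsub_add_cancel_of_le ((hQspec n).1 y)]
      rw [h1]
      ring
  -- vanishing of the remainder
  have hlim : ∀ y, (⨅ n, R n y) = 0 := by
    intro y
    set L : ℝ≥0∞ := ⨅ n, R n y with hL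
    have hLle : ∀ n, L ≤ R n y := fun n => iInf_le _ n
    have hLfin : L ≠ ⊤ := fun h => (hRfin 0 y) (eq_top_iff.2 (h ▸ hLle 0))
    have hkey : ∀ m, 2 * L ≤ R m y := by
      intro m
      obtain ⟨n, hnm, hEn⟩ := hEvisit y m
      have h1 : R (n + 1) y = R n y / 2 := by
        rw [hRsucc, ← hEn]
        rw [(hQspec n).2.2.1]
        rw [hEn]
        exact ENNReal.sub_half (hRfin n y)
      have h2 : L ≤ R n y / 2 := h1 ▸ hLle (n + 1)
      calc 2 * L ≤ 2 * (R n y / 2) := mul_le_mul_right h2 2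
        _ = R n y := ENNReal.mul_div_cancel' (by norm_num) (by norm_num)
        _ ≤ R m y := hRanti hnm y
    have h2L : 2 * L ≤ L := le_iInf hkey
    by_contra hL0
    have : L < 2 * L := by
      conv_lhs => rw [← one_mul L]
      exact ENNReal.mul_lt_mul_left hL0 hLfin ENNReal.one_lt_two
    exact absurd (lt_of_lt_of_le this h2L) (lt_irrefl L)
  -- p = ∑ Q n pointwise
  have hptsum : ∀ y, p y = ∑' n, Q n y := by
    intro y
    have hle1 : (∑' n, Q n y) ≤ p y := by
      rw [ENNReal.tsum_eq_iSup_sum]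
      refine iSup_le fun s => ?_
      rcases s.eq_empty_or_nonempty with rfl | hs
      · simp
      obtain ⟨N, hN⟩ := Finset.exists_le s
      calc (∑ k ∈ s, Q k y) ≤ ∑ k ∈ Finset.range (N + 1), Q k y :=
            Finset.sum_le_sum_of_subset (fun k hk => Finset.mem_range.2 (by
              have := hN k hk; omega))
        _ ≤ p y := by rw [htel (N + 1) y]; exact le_add_self
    have hge1 : p y ≤ ∑' n, Q n y := by
      have h3 : ∀ n, p y ≤ R n y + ∑' k, Q k y := by
        intro n
        rw [htel n y]
        exact add_le_add_right (ENNReal.sum_le_tsum (Finset.range n)) _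
      calc p y ≤ ⨅ n, (R n y + ∑' k, Q k y) := le_iInf h3
        _ = (⨅ n, R n y) + ∑' k, Q k y := by
            rw [ENNReal.iInf_add]
        _ = ∑' k, Q k y := by rw [hlim y, zero_add]
    exact le_antisymm hge1 hle1
  -- decompose each piece
  have hdec : ∀ n, ∃ (k : ℕ) (C : Fin k → ZCycle d) (ρ : Fin k → ℝ≥0∞),
      ∀ x, Q n x = ∑ j, ρ j * (C j).emp x := by
    intro n
    refine finite_decomp (S n).card (S n) (Q n) le_rfl ?_ (hQspec n).2.1 (hQspec n).2.2.2
    intro x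
    exact ne_top_of_le_ne_top (hRfin n x) ((hQspec n).1 x)
  choose k Cf ρf hdecs using hdec
  -- flatten
  set eqv : ℕ ≃ ℕ × ℕ := (Denumerable.eqv (ℕ × ℕ)).symm with heqv
  set Cfin : ℕ × ℕ → ZCycle d := fun q =>
    if h : q.2 < k q.1 then Cf q.1 ⟨q.2, h⟩ else trivialCycle with hCfin
  set ρfin : ℕ × ℕ → ℝ≥0∞ := fun q =>
    if h : q.2 < k q.1 then ρf q.1 ⟨q.2, h⟩ else 0 with hρfin
  refine ⟨fun i => Cfin (eqv i), fun i => ρfin (eqv i), ?_, ?_⟩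
  · -- total mass one
    have h1 : (∑' i : ℕ, ρfin (eqv i)) = ∑' q : ℕ × ℕ, ρfin q := eqv.tsum_eq ρfin
    rw [h1, ENNReal.tsum_prod (f := fun a b => ρfin (a, b))]
    have h2 : ∀ n : ℕ, (∑' j : ℕ, ρfin (n, j)) = ∑' x, Q n x := by
      intro n
      simp only [hρfin]
      rw [tsum_dite_fin (k n) (ρf n)]
      exact (decomp_mass (Cf n) (ρf n) (Q n) (hdecs n)).symm
    calc (∑' (n : ℕ) (j : ℕ), ρfin (n, j)) = ∑' n : ℕ, ∑' x, Q n x := tsum_congr h2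
      _ = ∑' x, ∑' n : ℕ, Q n x := ENNReal.tsum_comm
      _ = ∑' x, p x := tsum_congr (fun x => (hptsum x).symm)
      _ = 1 := hp
  · -- pointwise identity
    intro x
    have h1 : (∑' i : ℕ, ρfin (eqv i) * (Cfin (eqv i)).emp x)
        = ∑' q : ℕ × ℕ, ρfin q * (Cfin q).emp x :=
      eqv.tsum_eq (fun q => ρfin q * (Cfin q).emp x)
    rw [h1, ENNReal.tsum_prod (f := fun a b => ρfin (a, b) * (Cfin (a, b)).emp x)]
    have h2 : ∀ n : ℕ, (∑' j : ℕ, ρfin (n, j) * (Cfin (n, j)).emp x) = Q n x := by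
      intro n
      have h3 : ∀ j : ℕ, ρfin (n, j) * (Cfin (n, j)).emp x
          = if h : j < k n then ρf n ⟨j, h⟩ * (Cf n ⟨j, h⟩).emp x else 0 := by
        intro j
        simp only [hρfin, hCfin]
        by_cases h : j < k n
        · rw [dif_pos h, dif_pos h, dif_pos h]
        · rw [dif_neg h, dif_neg h, zero_mul, dif_neg h]
      rw [tsum_congr h3, tsum_dite_fin (k n) (fun j => ρf n j * (Cf n j).emp x)]
      exact (hdecs n x).symm
    rw [tsum_congr h2]
    exact hptsum x
theorem cyclic_iff_balanced (d : ℕ) (p : Zd d → ℝ≥0∞) (hp : (∑' x, p x) = 1) :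
    IsCyclic p ↔ Balanced p :=
  ⟨isCyclic_balanced, balanced_isCyclic hp⟩

end CyclicRW
end

section
/- A probability measure p on ℤ^d is balanced if and only if there exists a sequence (pₙ) of measures on ℤ^d, each with total mass at most 1, finite first moments (∑_x pₙ(x)|xᵢ| < ∞ for every coordinate i) and mean zero (∑_x pₙ(x)·x = 0), such that pₙ(x) ≤ p_{n+1}(x) for all x and n, and pₙ(x) → p(x) as n → ∞ for every x ∈ ℤ^d. -/
open scoped ENNReal

namespace CyclicRW1

abbrev Zd (d : ℕ) := Fin d → ℤ

/-- `p` is balanced: for every hyperplane through the origin (given by a unit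
normal vector `v`), the `p`-weighted total distance to the hyperplane of the points in the
positive closed half-space equals that of the points in the negative closed half-space. -/
def Balanced {d : ℕ} (p : Zd d → ℝ≥0∞) : Prop :=
  ∀ v : Fin d → ℝ, (∑ i, (v i) ^ 2) = 1 →
    (∑' x : Zd d, p x * ENNReal.ofReal (∑ i, v i * (x i : ℝ)))
      = ∑' x : Zd d, p x * ENNReal.ofReal (-(∑ i, v i * (x i : ℝ)))

open Filter Topology

noncomputable section

variable {d : ℕ}

def dotR (v : Fin d → ℝ) (x : Zd d) : ℝ := ∑ i, v i * (x i : ℝ)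

def emb (x : Zd d) : EuclideanSpace ℝ (Fin d) := WithLp.toLp 2 (fun i => (x i : ℝ))

lemma inner_emb (x : Zd d) (v : EuclideanSpace ℝ (Fin d)) :
    (inner ℝ (emb x) v : ℝ) = dotR (fun i => v i) x := by
  simp [emb, dotR, PiLp.inner_apply, RCLike.inner_apply, mul_comm]

lemma tsum_iSup_mono {α : Type*} (f : ℕ → α → ℝ≥0∞) (h : ∀ x, Monotone (f · x)) :
    ∑' x, ⨆ n, f n x = ⨆ n, ∑' x, f n x := by
  rw [ENNReal.tsum_eq_iSup_sum]
  have : ∀ s : Finset α, ∑ a ∈ s, ⨆ n, f n a = ⨆ n, ∑ a ∈ s, f n a := fun s =>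
    ENNReal.finsetSum_iSup_of_monotone (fun a => h a)
  simp_rw [this]
  rw [iSup_comm]
  congr 1
  ext n
  exact (ENNReal.tsum_eq_iSup_sum).symm

lemma balanced_dot {s : Zd d → ℝ≥0∞} (hb : Balanced s) (v : Fin d → ℝ) (hv : v ≠ 0) :
    ∑' x : Zd d, s x * ENNReal.ofReal (dotR v x)
      = ∑' x : Zd d, s x * ENNReal.ofReal (-dotR v x) := by
  set r : ℝ := Real.sqrt (∑ i, (v i) ^ 2) with hr
  have hsq : 0 < ∑ i, (v i) ^ 2 := by
    rcases Function.ne_iff.mp hv with ⟨i, hi⟩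
    exact Finset.sum_pos' (fun j _ => sq_nonneg _)
      ⟨i, Finset.mem_univ i, sq_pos_of_ne_zero hi⟩
  have hrpos : 0 < r := Real.sqrt_pos.mpr hsq
  have hrsq : r ^ 2 = ∑ i, (v i) ^ 2 := Real.sq_sqrt hsq.le
  set u : Fin d → ℝ := fun i => r⁻¹ * v i with hu
  have hunit : (∑ i, (u i) ^ 2) = 1 := by
    simp only [hu, mul_pow, ← Finset.mul_sum, ← hrsq]
    field_simp
  have hdot : ∀ x : Zd d, (∑ i, u i * (x i : ℝ)) = r⁻¹ * dotR v x := by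
    intro x
    simp only [hu, dotR, Finset.mul_sum, mul_assoc]
  have key := hb u hunit
  have hof : ∀ t : ℝ, ENNReal.ofReal (r⁻¹ * t) = ENNReal.ofReal r⁻¹ * ENNReal.ofReal t :=
    fun t => ENNReal.ofReal_mul (by positivity)
  have hc0 : ENNReal.ofReal r⁻¹ ≠ 0 := by
    simp only [ne_eq, ENNReal.ofReal_eq_zero, not_le]
    positivity
  have hct : ENNReal.ofReal r⁻¹ ≠ ⊤ := ENNReal.ofReal_ne_top
  have e1 : (fun x : Zd d => s x * ENNReal.ofReal (∑ i, u i * (x i:ℝ)))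
      = fun x => ENNReal.ofReal r⁻¹ * (s x * ENNReal.ofReal (dotR v x)) := by
    funext x
    rw [hdot x, hof]
    ring
  have e2 : (fun x : Zd d => s x * ENNReal.ofReal (-(∑ i, u i * (x i:ℝ))))
      = fun x => ENNReal.ofReal r⁻¹ * (s x * ENNReal.ofReal (-dotR v x)) := by
    funext x
    rw [hdot x, show -(r⁻¹ * dotR v x) = r⁻¹ * -(dotR v x) by ring, hof]
    ring
  rw [e1, e2, ENNReal.tsum_mul_left, ENNReal.tsum_mul_left] at key
  exact (ENNReal.mul_right_strictMono hc0 hct).injective key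

lemma key_lower {s : Zd d → ℝ≥0∞} (hb : Balanced s) (x₀ : Zd d) (v : Fin d → ℝ) :
    s x₀ ≤ ∑' x : Zd d, s x * ENNReal.ofReal ((if x = x₀ then (1:ℝ) else 0) - dotR v x) := by
  by_cases hsign : dotR v x₀ ≤ 0
  · refine le_trans ?_ (ENNReal.le_tsum x₀)
    calc s x₀ = s x₀ * 1 := (mul_one _).symm
      _ ≤ _ := by
          refine mul_le_mul_right ?_ _
          rw [show (1:ℝ≥0∞) = ENNReal.ofReal 1 by simp]
          refine ENNReal.ofReal_le_ofReal ?_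
          rw [if_pos rfl]
          linarith
  · push_neg at hsign
    have hv : v ≠ 0 := by
      intro h; rw [h] at hsign; simp [dotR] at hsign
    have hfeq : ∀ x : Zd d,
        s x * ENNReal.ofReal ((if x = x₀ then (1:ℝ) else 0) - dotR v x)
          = s x * ENNReal.ofReal (-dotR v x)
            + (if x = x₀ then s x₀ * ENNReal.ofReal (1 - dotR v x₀) else 0) := by
      intro x
      by_cases hx : x = x₀
      · subst hx
        rw [if_pos rfl, if_pos rfl,
          ENNReal.ofReal_eq_zero.mpr (by linarith : -dotR v x ≤ 0), mul_zero, zero_add]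
      · rw [if_neg hx, if_neg hx, add_zero, zero_sub]
    calc s x₀ = s x₀ * ENNReal.ofReal 1 := by simp
      _ ≤ s x₀ * (ENNReal.ofReal (dotR v x₀) + ENNReal.ofReal (1 - dotR v x₀)) := by
          refine mul_le_mul_right ?_ _
          calc ENNReal.ofReal 1 = ENNReal.ofReal (dotR v x₀ + (1 - dotR v x₀)) := by
                rw [show dotR v x₀ + (1 - dotR v x₀) = 1 by ring]
            _ ≤ _ := ENNReal.ofReal_add_le
      _ = s x₀ * ENNReal.ofReal (dotR v x₀) + s x₀ * ENNReal.ofReal (1 - dotR v x₀) := by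
          rw [mul_add]
      _ ≤ (∑' x : Zd d, s x * ENNReal.ofReal (dotR v x))
            + s x₀ * ENNReal.ofReal (1 - dotR v x₀) :=
          add_le_add (ENNReal.le_tsum x₀) le_rfl
      _ = (∑' x : Zd d, s x * ENNReal.ofReal (-dotR v x))
            + s x₀ * ENNReal.ofReal (1 - dotR v x₀) := by rw [balanced_dot hb v hv]
      _ = (∑' x : Zd d, s x * ENNReal.ofReal (-dotR v x))
            + ∑' x : Zd d, (if x = x₀ then s x₀ * ENNReal.ofReal (1 - dotR v x₀) else 0) := by
          rw [tsum_ite_eq x₀ (fun _ => s x₀ * ENNReal.ofReal (1 - dotR v x₀))]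
      _ = ∑' x : Zd d, (s x * ENNReal.ofReal (-dotR v x)
            + (if x = x₀ then s x₀ * ENNReal.ofReal (1 - dotR v x₀) else 0)) :=
          (ENNReal.tsum_add).symm
      _ = _ := by
          exact tsum_congr fun x => (hfeq x).symm


lemma ofReal_term_eq (a : ℝ≥0∞) (ha : a ≠ ⊤) (t : ℝ) :
    a * ENNReal.ofReal t = ENNReal.ofReal (a.toReal * max t 0) := by
  rcases le_total t 0 with h | h
  · rw [max_eq_right h, mul_zero, ENNReal.ofReal_zero, ENNReal.ofReal_eq_zero.mpr h, mul_zero]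
  · rw [max_eq_left h, ENNReal.ofReal_mul ENNReal.toReal_nonneg, ENNReal.ofReal_toReal ha]

lemma exists_finset_bound {s : Zd d → ℝ≥0∞} (hb : Balanced s) (h1 : ∀ x, s x ≤ 1)
    (x₀ : Zd d) (hx₀ : s x₀ ≠ 0) :
    ∃ S : Finset (Zd d), x₀ ∈ S ∧ ∀ v : Fin d → ℝ,
      (s x₀).toReal / 2 ≤ ∑ x ∈ S, (s x).toReal *
        max ((if x = x₀ then (1:ℝ) else 0) - dotR v x) 0 := by
  classical
  have hstop : ∀ x, s x ≠ ⊤ := fun x => (lt_of_le_of_lt (h1 x) (by norm_num)).ne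
  by_contra hcon
  push_neg at hcon
  set β : ℝ := (s x₀).toReal / 2 with hβ
  have hβpos : 0 < β := by
    have := ENNReal.toReal_pos hx₀ (hstop x₀)
    positivity
  obtain ⟨e, he⟩ := exists_surjective_nat (Zd d)
  set T : ℕ → Finset (Zd d) := fun n => insert x₀ ((Finset.range n).image e) with hT
  have hTx₀ : ∀ n, x₀ ∈ T n := fun n => Finset.mem_insert_self _ _
  have hTmono : ∀ {m n : ℕ}, m ≤ n → T m ⊆ T n := by
    intro m n h
    exact Finset.insert_subset_insert _
      (Finset.image_subset_image (Finset.range_subset_range.mpr h))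
  have hTcover : ∀ x : Zd d, ∃ n, x ∈ T n := by
    intro x; obtain ⟨k, rfl⟩ := he x
    exact ⟨k+1, Finset.mem_insert_of_mem
      (Finset.mem_image_of_mem e (Finset.mem_range.mpr (Nat.lt_succ_self k)))⟩
  -- the finite dual functional, in Euclidean-space form
  set G : Finset (Zd d) → EuclideanSpace ℝ (Fin d) → ℝ := fun S u =>
    ∑ x ∈ S, (s x).toReal * max ((if x = x₀ then (1:ℝ) else 0) - (inner ℝ (emb x) u : ℝ)) 0
    with hG
  have hterm_nonneg : ∀ (u : EuclideanSpace ℝ (Fin d)) (x : Zd d),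
      0 ≤ (s x).toReal * max ((if x = x₀ then (1:ℝ) else 0) - (inner ℝ (emb x) u : ℝ)) 0 :=
    fun u x => mul_nonneg ENNReal.toReal_nonneg (le_max_right _ _)
  have hGmono : ∀ {S S' : Finset (Zd d)} (u), S ⊆ S' → G S u ≤ G S' u := by
    intro S S' u h
    exact Finset.sum_le_sum_of_subset_of_nonneg h (fun x _ _ => hterm_nonneg u x)
  have hGcont : ∀ S : Finset (Zd d), Continuous (G S) := by
    intro S
    refine continuous_finset_sum _ (fun x _ => Continuous.mul continuous_const ?_)
    exact (continuous_const.sub (Continuous.inner continuous_const continuous_id)).max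
      continuous_const
  -- choose bad vectors and project them
  have hchoice : ∀ n : ℕ, ∃ u : EuclideanSpace ℝ (Fin d), G (T n) u < β := by
    intro n
    obtain ⟨v, hv⟩ := hcon (T n) (hTx₀ n)
    refine ⟨(WithLp.toLp 2 (fun i => v i) : EuclideanSpace ℝ (Fin d)), lt_of_le_of_lt (le_of_eq ?_) hv⟩
    refine Finset.sum_congr rfl (fun x _ => ?_)
    rw [inner_emb]
  choose v' hv' using hchoice
  set V : Submodule ℝ (EuclideanSpace ℝ (Fin d)) :=
    Submodule.span ℝ (emb '' {x | s x ≠ 0}) with hV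
  haveI : CompleteSpace V := FiniteDimensional.complete ℝ V
  set w : ℕ → EuclideanSpace ℝ (Fin d) := fun n => V.starProjection (v' n) with hw
  have hwV : ∀ n, w n ∈ V := fun n => V.starProjection_apply_mem _
  have hinner_eq : ∀ (n) (x : Zd d), s x ≠ 0 →
      (inner ℝ (emb x) (w n) : ℝ) = inner ℝ (emb x) (v' n) := by
    intro n x hx
    have hmem : emb x ∈ V := Submodule.subset_span ⟨x, hx, rfl⟩
    have horth := Submodule.sub_starProjection_mem_orthogonal (K := V) (v' n)
    have := (Submodule.mem_orthogonal V _).mp horth (emb x) hmem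
    rw [inner_sub_right] at this
    linarith
  have hGw : ∀ n, G (T n) (w n) < β := by
    intro n
    refine lt_of_le_of_lt (le_of_eq ?_) (hv' n)
    refine Finset.sum_congr rfl (fun x _ => ?_)
    by_cases hx : s x = 0
    · rw [hx]; simp
    · rw [hinner_eq n x hx]
  -- a term-bound used in both cases
  have hterm_lt : ∀ (x : Zd d), s x ≠ 0 → ∀ m, x ∈ T m → ∀ n, m ≤ n →
      (s x).toReal * max ((if x = x₀ then (1:ℝ) else 0) - (inner ℝ (emb x) (w n) : ℝ)) 0 < β := by
    intro x hx m hxm n hmn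
    exact lt_of_le_of_lt (Finset.single_le_sum (f := fun x =>
      (s x).toReal * max ((if x = x₀ then (1:ℝ) else 0) - (inner ℝ (emb x) (w n) : ℝ)) 0)
      (fun y _ => hterm_nonneg _ y) (hTmono hmn hxm)) (hGw n)
  by_cases hcase : ∃ R : ℕ, {n : ℕ | ‖w n‖ ≤ (R:ℝ)}.Infinite
  · -- bounded case
    obtain ⟨R, hR⟩ := hcase
    obtain ⟨φ, hφmono, hφ⟩ := Filter.extraction_of_frequently_atTop
      (Nat.frequently_atTop_iff_infinite.mpr hR)
    obtain ⟨z, hzball, ψ, hψmono, hψtend⟩ :=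
      (isCompact_closedBall (0 : EuclideanSpace ℝ (Fin d)) R).tendsto_subseq
      (x := fun k => w (φ k)) (fun k => by
        simpa [Metric.mem_closedBall, dist_zero_right] using hφ k)
    set χ : ℕ → ℕ := φ ∘ ψ with hχ
    have hχmono : StrictMono χ := hφmono.comp hψmono
    have hGz : ∀ m, G (T m) z ≤ β := by
      intro m
      have htd : Tendsto (fun k => G (T m) (w (χ k))) atTop (𝓝 (G (T m) z)) :=
        ((hGcont (T m)).continuousAt (x := z)).tendsto.comp hψtend
      refine le_of_tendsto htd ?_
      filter_upwards [Filter.eventually_ge_atTop m] with k hk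
      exact le_of_lt (lt_of_le_of_lt
        (hGmono _ (hTmono (le_trans hk (hχmono.le_apply)))) (hGw (χ k)))
    -- ENNReal contradiction
    have hkey := key_lower hb x₀ (fun i => z i)
    have htsum : (∑' x : Zd d, s x * ENNReal.ofReal
        ((if x = x₀ then (1:ℝ) else 0) - dotR (fun i => z i) x))
        = ⨆ n, ENNReal.ofReal (G (T n) z) := by
      rw [ENNReal.tsum_eq_iSup_sum' T (fun t => by
        choose g hg using hTcover
        refine ⟨t.sup (fun x => g x), fun x hx => hTmono (Finset.le_sup hx) (hg x)⟩)]
      congr 1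
      funext n
      rw [hG]
      rw [ENNReal.ofReal_sum_of_nonneg (fun x _ => hterm_nonneg z x)]
      refine Finset.sum_congr rfl (fun x _ => ?_)
      rw [ofReal_term_eq (s x) (hstop x), ← inner_emb]
    rw [htsum] at hkey
    have : s x₀ ≤ ENNReal.ofReal β := le_trans hkey
      (iSup_le (fun n => ENNReal.ofReal_le_ofReal (hGz n)))
    have hhalf : ENNReal.ofReal β = s x₀ / 2 := by
      rw [hβ, show (s x₀).toReal / 2 = (s x₀ / 2).toReal by
        rw [ENNReal.toReal_div]; norm_num]
      exact ENNReal.ofReal_toReal (by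
        exact (ENNReal.div_lt_top (hstop x₀) (by norm_num)).ne)
    rw [hhalf] at this
    exact absurd this (not_le.mpr (ENNReal.half_lt_self hx₀ (hstop x₀)))
  · -- unbounded case
    push_neg at hcase
    have htop : Tendsto (fun n => ‖w n‖) atTop atTop := by
      refine tendsto_atTop.mpr (fun b => ?_)
      obtain ⟨N, hN⟩ := (hcase ⌈max b 0⌉₊).bddAbove
      refine eventually_atTop.mpr ⟨N+1, fun n hn => ?_⟩
      by_contra hcontra
      push_neg at hcontra
      have : n ∈ {n : ℕ | ‖w n‖ ≤ (⌈max b 0⌉₊ : ℝ)} := by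
        refine le_trans hcontra.le (le_trans (le_max_left b 0) (Nat.le_ceil _))
      exact absurd (hN this) (by omega)
    obtain ⟨N₀, hN₀⟩ := eventually_atTop.mp (htop.eventually_ge_atTop 1)
    set u : ℕ → EuclideanSpace ℝ (Fin d) := fun k => ‖w (k + N₀)‖⁻¹ • w (k + N₀) with hu
    have hwnorm : ∀ k, 1 ≤ ‖w (k + N₀)‖ := fun k => hN₀ _ (Nat.le_add_left _ _)
    have humem : ∀ k, u k ∈ Metric.sphere (0 : EuclideanSpace ℝ (Fin d)) 1 ∩ (V : Set _) := by
      intro k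
      constructor
      · rw [mem_sphere_zero_iff_norm, hu, norm_smul, norm_inv, norm_norm]
        exact inv_mul_cancel₀ (by linarith [hwnorm k])
      · exact Submodule.smul_mem V _ (hwV _)
    have hK : IsCompact (Metric.sphere (0 : EuclideanSpace ℝ (Fin d)) 1 ∩ (V : Set _)) :=
      (isCompact_sphere 0 1).inter_right V.closed_of_finiteDimensional
    obtain ⟨z, hzK, ψ, hψmono, hψtend⟩ := hK.tendsto_subseq humem
    have hznorm : ‖z‖ = 1 := mem_sphere_zero_iff_norm.mp hzK.1
    have hzV : z ∈ V := hzK.2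
    -- inner products with support points are nonnegative in the limit
    have hinn_nonneg : ∀ x : Zd d, s x ≠ 0 → 0 ≤ (inner ℝ (emb x) z : ℝ) := by
      intro x hx
      obtain ⟨m, hm⟩ := hTcover x
      have hc : 0 < (s x).toReal := ENNReal.toReal_pos hx (hstop x)
      have hA : Tendsto (fun k => (-(β / (s x).toReal)) * ‖w (ψ k + N₀)‖⁻¹) atTop (𝓝 0) := by
        have h1' : Tendsto (fun k => ψ k + N₀) atTop atTop :=
          tendsto_atTop_mono (fun k => le_trans hψmono.le_apply (Nat.le_add_right _ _))
            tendsto_id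
        have h2' : Tendsto (fun k => ‖w (ψ k + N₀)‖) atTop atTop := htop.comp h1'
        have h3' : Tendsto (fun k => ‖w (ψ k + N₀)‖⁻¹) atTop (𝓝 0) :=
          h2'.inv_tendsto_atTop
        have := h3'.const_mul (-(β / (s x).toReal))
        simpa using this
      have hB : Tendsto (fun k => (inner ℝ (emb x) (u (ψ k)) : ℝ)) atTop (𝓝 (inner ℝ (emb x) z)) := by
        exact ((Continuous.inner continuous_const continuous_id).continuousAt
          (x := z)).tendsto.comp hψtend
      refine le_of_tendsto_of_tendsto hA hB ?_
      filter_upwards [Filter.eventually_ge_atTop m] with k hk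
      have hkk : m ≤ ψ k + N₀ := le_trans hk (le_trans hψmono.le_apply (Nat.le_add_right _ _))
      have h2 := hterm_lt x hx m hm (ψ k + N₀) hkk
      have h3 : max ((if x = x₀ then (1:ℝ) else 0) - (inner ℝ (emb x) (w (ψ k + N₀)) : ℝ)) 0
          < β / (s x).toReal := by
        rw [lt_div_iff₀ hc]
        calc _ = (s x).toReal * max ((if x = x₀ then (1:ℝ) else 0)
              - (inner ℝ (emb x) (w (ψ k + N₀)) : ℝ)) 0 := by ring
          _ < β := h2
      have h4 : -(β / (s x).toReal) ≤ (inner ℝ (emb x) (w (ψ k + N₀)) : ℝ) := by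
        have h5 : (if x = x₀ then (1:ℝ) else 0) - (inner ℝ (emb x) (w (ψ k + N₀)) : ℝ)
            < β / (s x).toReal := lt_of_le_of_lt (le_max_left _ _) h3
        have h6 : (0:ℝ) ≤ (if x = x₀ then (1:ℝ) else 0) := by positivity
        linarith
      have h7 : (inner ℝ (emb x) (u (ψ k)) : ℝ)
          = ‖w (ψ k + N₀)‖⁻¹ * (inner ℝ (emb x) (w (ψ k + N₀)) : ℝ) := by
        rw [hu]
        exact real_inner_smul_right _ _ _
      rw [h7]
      have h8 : (0:ℝ) ≤ ‖w (ψ k + N₀)‖⁻¹ := by positivity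
      calc (-(β / (s x).toReal)) * ‖w (ψ k + N₀)‖⁻¹
          = ‖w (ψ k + N₀)‖⁻¹ * (-(β / (s x).toReal)) := by ring
        _ ≤ _ := mul_le_mul_of_nonneg_left h4 h8
    -- z is a unit vector
    have hzvec : (∑ i, ((fun i => z i) i) ^ 2) = (1:ℝ) := by
      have h0 := hznorm
      rw [EuclideanSpace.norm_eq] at h0
      have h1' := Real.sqrt_eq_one.mp h0
      calc (∑ i, ((fun i => z i) i) ^ 2) = ∑ i, ‖z i‖ ^ 2 := by
            refine Finset.sum_congr rfl (fun i _ => ?_)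
            rw [Real.norm_eq_abs, sq_abs]
        _ = 1 := h1'
    -- both half-space sums vanish, so z ⊥ support of s
    have hneg0 : (∑' x : Zd d, s x * ENNReal.ofReal (-dotR (fun i => z i) x)) = 0 := by
      refine ENNReal.tsum_eq_zero.mpr (fun x => ?_)
      by_cases hx : s x = 0
      · rw [hx, zero_mul]
      · rw [show dotR (fun i => z i) x = (inner ℝ (emb x) z : ℝ) from (inner_emb x z).symm]
        rw [ENNReal.ofReal_eq_zero.mpr (by linarith [hinn_nonneg x hx]), mul_zero]
    have hpos0 : (∑' x : Zd d, s x * ENNReal.ofReal (dotR (fun i => z i) x)) = 0 := by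
      have hbal := hb (fun i => z i) hzvec
      rw [show (∑' x : Zd d, s x * ENNReal.ofReal (∑ i, (fun i => z i) i * (x i : ℝ)))
          = ∑' x : Zd d, s x * ENNReal.ofReal (dotR (fun i => z i) x) from rfl,
        show (∑' x : Zd d, s x * ENNReal.ofReal (-(∑ i, (fun i => z i) i * (x i : ℝ))))
          = ∑' x : Zd d, s x * ENNReal.ofReal (-dotR (fun i => z i) x) from rfl] at hbal
      rw [hbal, hneg0]
    have hinn_zero : ∀ x : Zd d, s x ≠ 0 → (inner ℝ (emb x) z : ℝ) = 0 := by
      intro x hx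
      have := ENNReal.tsum_eq_zero.mp hpos0 x
      rcases mul_eq_zero.mp this with h | h
      · exact absurd h hx
      · have hle : dotR (fun i => z i) x ≤ 0 := ENNReal.ofReal_eq_zero.mp h
        have hge := hinn_nonneg x hx
        rw [inner_emb x z] at hge
        rw [inner_emb x z]
        exact le_antisymm hle hge
    -- contradiction : z ∈ V and z ⊥ V
    have hVle : V ≤ (ℝ ∙ z)ᗮ := by
      rw [hV]
      refine Submodule.span_le.mpr ?_
      rintro a ⟨x, hx, rfl⟩
      rw [SetLike.mem_coe, Submodule.mem_orthogonal_singleton_iff_inner_right]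
      rw [real_inner_comm]
      exact hinn_zero x hx
    have hzz := (Submodule.mem_orthogonal _ _).mp (hVle hzV) z
      (Submodule.mem_span_singleton_self z)
    rw [inner_self_eq_zero] at hzz
    rw [hzz] at hznorm
    simp at hznorm

lemma max_mul_nonneg' (c t : ℝ) (hc : 0 ≤ c) : max (c * t) 0 = c * max t 0 := by
  rcases le_total t 0 with h | h
  · rw [max_eq_right h, max_eq_right (by nlinarith), mul_zero]
  · rw [max_eq_left h, max_eq_left (by nlinarith)]

lemma extract_finite {s : Zd d → ℝ≥0∞} (x₀ : Zd d)
    (S : Finset (Zd d)) (hx₀S : x₀ ∈ S) {β : ℝ} (hβ : 0 < β)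
    (hbound : ∀ v : Fin d → ℝ,
      β ≤ ∑ x ∈ S, (s x).toReal * max ((if x = x₀ then (1:ℝ) else 0) - dotR v x) 0) :
    ∃ q : Zd d → ℝ, (∀ x, 0 ≤ q x ∧ q x ≤ (s x).toReal) ∧ (∀ x ∉ S, q x = 0) ∧
      q x₀ = β ∧ ∀ i : Fin d, ∑ x ∈ S, q x * ((x i : ℝ)) = 0 := by
  classical
  set x₀' : ↥S := ⟨x₀, hx₀S⟩ with hx₀'
  set L : (↥S → ℝ) →ₗ[ℝ] ℝ × (Fin d → ℝ) :=
    { toFun := fun q => (q x₀', fun i => ∑ x : ↥S, q x * ((x : Zd d) i : ℝ))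
      map_add' := by
        intro a b
        refine Prod.ext rfl ?_
        funext i
        simp [add_mul, Finset.sum_add_distrib]
      map_smul' := by
        intro c a
        refine Prod.ext rfl ?_
        funext i
        simp [Finset.mul_sum, mul_assoc] } with hL
  have hLcont : Continuous L := L.continuous_of_finiteDimensional
  set K : Set (↥S → ℝ) := Set.univ.pi (fun x => Set.Icc 0 ((s (x:Zd d)).toReal)) with hK
  have hKconv : Convex ℝ K := convex_pi (fun x _ => convex_Icc _ _)
  have hKcomp : IsCompact K := isCompact_univ_pi (fun x => isCompact_Icc)
  have h0K : (0 : ↥S → ℝ) ∈ K := by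
    intro x _
    exact ⟨le_refl 0, ENNReal.toReal_nonneg⟩
  set C : Set (ℝ × (Fin d → ℝ)) := L '' K with hC
  have hCconv : Convex ℝ C := hKconv.linear_image L
  have hCcomp : IsCompact C := hKcomp.image hLcont
  have hmem : ((β, 0) : ℝ × (Fin d → ℝ)) ∈ C := by
    by_contra hnot
    obtain ⟨f, c, hfC, hfc⟩ :=
      geometric_hahn_banach_closed_point hCconv hCcomp.isClosed hnot
    set α : ℝ := f (1, (0 : Fin d → ℝ)) with hα
    set vw : Fin d → ℝ := fun i => f (0, Pi.single i 1) with hvw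
    have hdecomp : ∀ y : ℝ × (Fin d → ℝ), f y = α * y.1 + ∑ i, vw i * y.2 i := by
      intro y
      have hy : y = y.1 • ((1:ℝ), (0 : Fin d → ℝ))
          + ∑ i, y.2 i • (((0:ℝ), Pi.single i (1:ℝ)) : ℝ × (Fin d → ℝ)) := by
        refine Prod.ext ?_ ?_
        · simp [Prod.fst_sum]
        · funext j
          simp only [Prod.snd_add, Prod.smul_snd, smul_zero, Prod.snd_sum, Finset.sum_apply,
            Pi.add_apply, Pi.zero_apply, Pi.smul_apply, Pi.single_apply, smul_eq_mul,
            mul_ite, mul_one, mul_zero, zero_add]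
          rw [Finset.sum_ite_eq]
          simp
      conv_lhs => rw [hy]
      rw [map_add, map_smul, map_sum]
      rw [Finset.sum_congr rfl (fun i (_ : i ∈ Finset.univ) => by
        rw [map_smul, smul_eq_mul, hvw]
        ring : ∀ i ∈ Finset.univ, f (y.2 i • (((0:ℝ), Pi.single i (1:ℝ)) : ℝ × (Fin d → ℝ)))
          = vw i * y.2 i)]
      simp only [hα, smul_eq_mul]
      ring
    have hft : f ((β, 0) : ℝ × (Fin d → ℝ)) = α * β := by
      rw [hdecomp]; simp
    set g : Zd d → ℝ := fun x => α * (if x = x₀ then 1 else 0) + dotR vw x with hg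
    have hLq : ∀ q : ↥S → ℝ, f (L q) = ∑ x : ↥S, q x * g (x : Zd d) := by
      intro q
      rw [hdecomp]
      have h1 : ∑ i, vw i * (∑ x : ↥S, q x * ((x : Zd d) i : ℝ))
          = ∑ x : ↥S, q x * dotR vw (x : Zd d) := by
        calc ∑ i, vw i * (∑ x : ↥S, q x * ((x : Zd d) i : ℝ))
            = ∑ i, ∑ x : ↥S, q x * (vw i * ((x : Zd d) i : ℝ)) := by
              refine Finset.sum_congr rfl (fun i _ => ?_)
              rw [Finset.mul_sum]
              exact Finset.sum_congr rfl (fun x _ => by ring)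
          _ = ∑ x : ↥S, ∑ i, q x * (vw i * ((x : Zd d) i : ℝ)) := Finset.sum_comm
          _ = ∑ x : ↥S, q x * dotR vw (x : Zd d) := by
              refine Finset.sum_congr rfl (fun x _ => ?_)
              rw [dotR, Finset.mul_sum]
      have h2 : ∑ x : ↥S, q x * (α * (if (x : Zd d) = x₀ then (1:ℝ) else 0))
          = α * q x₀' := by
        have hterm : ∀ x : ↥S, q x * (α * (if (x : Zd d) = x₀ then (1:ℝ) else 0))
            = if x = x₀' then q x * α else 0 := by
          intro x
          by_cases h : x = x₀'
          · subst h
            rw [if_pos rfl, if_pos rfl]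
            ring
          · rw [if_neg h, if_neg (fun hc => h (Subtype.ext hc)), mul_zero, mul_zero]
        rw [Finset.sum_congr rfl (fun x _ => hterm x),
          Finset.sum_ite_eq' Finset.univ x₀' (fun x => q x * α),
          if_pos (Finset.mem_univ _)]
        ring
      calc α * (L q).1 + ∑ i, vw i * (L q).2 i
          = α * q x₀' + ∑ x : ↥S, q x * dotR vw (x : Zd d) := by rw [← h1]; rfl
        _ = (∑ x : ↥S, q x * (α * (if (x : Zd d) = x₀ then (1:ℝ) else 0)))
              + ∑ x : ↥S, q x * dotR vw (x : Zd d) := by rw [h2]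
        _ = ∑ x : ↥S, q x * g (x : Zd d) := by
            rw [← Finset.sum_add_distrib]
            refine Finset.sum_congr rfl (fun x _ => ?_)
            rw [hg]
            ring
    set qs : ↥S → ℝ := fun x => if 0 ≤ g (x : Zd d) then (s (x : Zd d)).toReal else 0 with hqs
    have hqsK : qs ∈ K := by
      intro x _
      by_cases h : 0 ≤ g (x : Zd d)
      · simp only [hqs, if_pos h]
        exact ⟨ENNReal.toReal_nonneg, le_refl _⟩
      · simp only [hqs, if_neg h]
        exact ⟨le_refl 0, ENNReal.toReal_nonneg⟩
    have hval : f (L qs) = ∑ x : ↥S, (s (x : Zd d)).toReal * max (g (x : Zd d)) 0 := by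
      rw [hLq]
      refine Finset.sum_congr rfl (fun x _ => ?_)
      by_cases h : 0 ≤ g (x : Zd d)
      · simp only [hqs, if_pos h]
        rw [max_eq_left h]
      · simp only [hqs, if_neg h]
        rw [max_eq_right (le_of_not_ge h), mul_zero, zero_mul]
    have hfLqs : f (L qs) < c := hfC _ ⟨qs, hqsK, rfl⟩
    have hfc' : c < α * β := by rw [← hft]; exact hfc
    have hαβ : 0 < α * β := by
      have h0 : f (L 0) < c := hfC _ ⟨0, h0K, rfl⟩
      rw [map_zero, map_zero] at h0
      linarith
    have hαpos : 0 < α := by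
      by_contra h
      push_neg at h
      nlinarith
    have hsum_lt : ∑ x : ↥S, (s (x : Zd d)).toReal * max (g (x : Zd d)) 0 < α * β := by
      rw [← hval]
      linarith
    have hrw : ∀ x : Zd d, (if x = x₀ then (1:ℝ) else 0) - dotR (fun i => -(α⁻¹) * vw i) x
        = α⁻¹ * g x := by
      intro x
      have hdd : dotR (fun i => -(α⁻¹) * vw i) x = -(α⁻¹) * dotR vw x := by
        rw [dotR, dotR, Finset.mul_sum]
        exact Finset.sum_congr rfl (fun i _ => by ring)
      rw [hdd, hg]
      rw [mul_add, ← mul_assoc, inv_mul_cancel₀ hαpos.ne', one_mul]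
      ring
    have hb2 := hbound (fun i => -(α⁻¹) * vw i)
    have hconv : ∑ x ∈ S, (s x).toReal * max (g x) 0
        = ∑ x : ↥S, (s (x : Zd d)).toReal * max (g (x : Zd d)) 0 :=
      (Finset.sum_coe_sort S (fun x => (s x).toReal * max (g x) 0)).symm
    have hfinal : β < β := by
      calc β ≤ ∑ x ∈ S, (s x).toReal *
              max ((if x = x₀ then (1:ℝ) else 0) - dotR (fun i => -(α⁻¹) * vw i) x) 0 := hb2
        _ = α⁻¹ * ∑ x ∈ S, (s x).toReal * max (g x) 0 := by
            rw [Finset.mul_sum]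
            refine Finset.sum_congr rfl (fun x _ => ?_)
            rw [hrw x, max_mul_nonneg' α⁻¹ (g x) (by positivity)]
            ring
        _ < α⁻¹ * (α * β) := by
            rw [hconv]
            exact mul_lt_mul_of_pos_left hsum_lt (inv_pos.mpr hαpos)
        _ = β := by
            field_simp
    exact lt_irrefl β hfinal
  obtain ⟨q, hqK, hLqe⟩ := hmem
  have hfst : q x₀' = β := congrArg Prod.fst hLqe
  have hsnd : ∀ i, ∑ x : ↥S, q x * (((x : Zd d) i : ℝ)) = 0 := by
    intro i
    exact congrFun (congrArg Prod.snd hLqe) i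
  refine ⟨fun x => if hx : x ∈ S then q ⟨x, hx⟩ else 0, ?_, ?_, ?_, ?_⟩
  · intro x
    dsimp only
    by_cases hx : x ∈ S
    · rw [dif_pos hx]
      exact ⟨(Set.mem_univ_pi.mp hqK ⟨x, hx⟩).1, (Set.mem_univ_pi.mp hqK ⟨x, hx⟩).2⟩
    · rw [dif_neg hx]
      exact ⟨le_refl 0, ENNReal.toReal_nonneg⟩
  · intro x hx
    dsimp only
    rw [dif_neg hx]
  · dsimp only
    rw [dif_pos hx₀S]
    exact hfst
  · intro i
    rw [← Finset.sum_attach S (fun x => (if hx : x ∈ S then q ⟨x, hx⟩ else 0) * ((x i : ℝ)))]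
    rw [Finset.sum_congr rfl (fun x _ => by rw [dif_pos x.2])]
    exact hsnd i

lemma max_sub_max_neg (a : ℝ) : max a 0 - max (-a) 0 = a := by
  rcases le_total a 0 with h | h
  · rw [max_eq_right h, max_eq_left (by linarith)]; ring
  · rw [max_eq_left h, max_eq_right (by linarith)]; ring

/-- a finitely-supported nonnegative real family with zero mean is balanced in every
direction (ENNReal form). -/
lemma piece_mean_zero {q : Zd d → ℝ} {S : Finset (Zd d)} (hq0 : ∀ x ∉ S, q x = 0)
    (hqnn : ∀ x, 0 ≤ q x) (hmean : ∀ i : Fin d, ∑ x ∈ S, q x * ((x i : ℝ)) = 0) :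
    ∀ v : Fin d → ℝ, ∑' x : Zd d, ENNReal.ofReal (q x) * ENNReal.ofReal (dotR v x)
      = ∑' x : Zd d, ENNReal.ofReal (q x) * ENNReal.ofReal (-dotR v x) := by
  intro v
  have hz : ∀ (g : Zd d → ℝ), ∀ x ∉ S, ENNReal.ofReal (q x) * ENNReal.ofReal (g x) = 0 := by
    intro g x hx
    rw [hq0 x hx, ENNReal.ofReal_zero, zero_mul]
  rw [tsum_eq_sum (hz (fun x => dotR v x)), tsum_eq_sum (hz (fun x => -dotR v x))]
  have hco : ∀ (g : Zd d → ℝ), ∑ x ∈ S, ENNReal.ofReal (q x) * ENNReal.ofReal (g x)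
      = ENNReal.ofReal (∑ x ∈ S, q x * max (g x) 0) := by
    intro g
    rw [ENNReal.ofReal_sum_of_nonneg (fun x _ => mul_nonneg (hqnn x) (le_max_right _ _))]
    refine Finset.sum_congr rfl (fun x _ => ?_)
    rw [ENNReal.ofReal_mul (hqnn x)]
    congr 1
    rcases le_total (g x) 0 with h | h
    · rw [max_eq_right h, ENNReal.ofReal_zero, ENNReal.ofReal_eq_zero.mpr h]
    · rw [max_eq_left h]
  rw [hco, hco]
  congr 1
  have hdot0 : ∑ x ∈ S, q x * dotR v x = 0 := by
    calc ∑ x ∈ S, q x * dotR v x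
        = ∑ x ∈ S, ∑ i, v i * (q x * ((x i : ℝ))) := by
          refine Finset.sum_congr rfl (fun x _ => ?_)
          rw [dotR, Finset.mul_sum]
          exact Finset.sum_congr rfl (fun i _ => by ring)
      _ = ∑ i, ∑ x ∈ S, v i * (q x * ((x i : ℝ))) := Finset.sum_comm
      _ = ∑ i : Fin d, v i * ∑ x ∈ S, q x * ((x i : ℝ)) := by
          refine Finset.sum_congr rfl (fun i _ => ?_)
          rw [Finset.mul_sum]
      _ = 0 := by
          rw [Finset.sum_congr rfl (fun i (_ : i ∈ Finset.univ) => by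
            rw [hmean i, mul_zero] : ∀ i ∈ Finset.univ, v i * ∑ x ∈ S, q x * ((x i : ℝ)) = 0)]
          exact Finset.sum_const_zero
  have hdiff : ∑ x ∈ S, q x * max (dotR v x) 0 - ∑ x ∈ S, q x * max (-dotR v x) 0
      = ∑ x ∈ S, q x * dotR v x := by
    rw [← Finset.sum_sub_distrib]
    refine Finset.sum_congr rfl (fun x _ => ?_)
    rw [← mul_sub, max_sub_max_neg]
  linarith [hdot0, hdiff]

lemma balanced_sub {s r : Zd d → ℝ≥0∞} (hb : Balanced s) (hrs : ∀ x, r x ≤ s x)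
    (S : Finset (Zd d)) (hsupp : ∀ x ∉ S, r x = 0) (hrtop : ∀ x, r x ≠ ⊤)
    (hmz : ∀ v : Fin d → ℝ, ∑' x : Zd d, r x * ENNReal.ofReal (dotR v x)
      = ∑' x : Zd d, r x * ENNReal.ofReal (-dotR v x)) :
    Balanced (fun x => s x - r x) := by
  intro v hv
  have hbv : (∑' x : Zd d, s x * ENNReal.ofReal (dotR v x))
      = ∑' x : Zd d, s x * ENNReal.ofReal (-dotR v x) := hb v hv
  have hCfin : ∀ (g : Zd d → ℝ), (∑' x : Zd d, r x * ENNReal.ofReal (g x)) ≠ ⊤ := by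
    intro g
    rw [tsum_eq_sum (s := S) (fun x hx => by rw [hsupp x hx, zero_mul])]
    exact (ENNReal.sum_lt_top.mpr (fun x _ =>
      (ENNReal.mul_ne_top (hrtop x) ENNReal.ofReal_ne_top).lt_top)).ne
  have hsum : ∀ (g : Zd d → ℝ),
      (∑' x : Zd d, (s x - r x) * ENNReal.ofReal (g x))
        + (∑' x : Zd d, r x * ENNReal.ofReal (g x))
      = ∑' x : Zd d, s x * ENNReal.ofReal (g x) := by
    intro g
    rw [← ENNReal.tsum_add]
    refine tsum_congr (fun x => ?_)
    rw [← add_mul, tsub_add_cancel_of_le (hrs x)]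
  show (∑' x : Zd d, (s x - r x) * ENNReal.ofReal (dotR v x))
      = ∑' x : Zd d, (s x - r x) * ENNReal.ofReal (-dotR v x)
  have h1 := hsum (fun x => dotR v x)
  have h2 := hsum (fun x => -dotR v x)
  have h3 : (∑' x : Zd d, (s x - r x) * ENNReal.ofReal (dotR v x))
        + (∑' x : Zd d, r x * ENNReal.ofReal (dotR v x))
      = (∑' x : Zd d, (s x - r x) * ENNReal.ofReal (-dotR v x))
        + (∑' x : Zd d, r x * ENNReal.ofReal (dotR v x)) := by
    conv_rhs => rw [hmz v]
    rw [h1, h2, hbv]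
  calc (∑' x : Zd d, (s x - r x) * ENNReal.ofReal (dotR v x))
      = (∑' x : Zd d, (s x - r x) * ENNReal.ofReal (dotR v x))
        + (∑' x : Zd d, r x * ENNReal.ofReal (dotR v x))
        - (∑' x : Zd d, r x * ENNReal.ofReal (dotR v x)) :=
        (ENNReal.add_sub_cancel_right (hCfin _)).symm
    _ = (∑' x : Zd d, (s x - r x) * ENNReal.ofReal (-dotR v x))
        + (∑' x : Zd d, r x * ENNReal.ofReal (dotR v x))
        - (∑' x : Zd d, r x * ENNReal.ofReal (dotR v x)) := by rw [h3]
    _ = _ := ENNReal.add_sub_cancel_right (hCfin _)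

lemma step_lemma {s : Zd d → ℝ≥0∞} (hb : Balanced s) (h1 : ∀ x, s x ≤ 1) (x₀ : Zd d) :
    ∃ (r : Zd d → ℝ≥0∞) (S : Finset (Zd d)),
      (∀ x, r x ≤ s x) ∧ (∀ x ∉ S, r x = 0) ∧
      (∀ v : Fin d → ℝ, ∑' x : Zd d, r x * ENNReal.ofReal (dotR v x)
          = ∑' x : Zd d, r x * ENNReal.ofReal (-dotR v x)) ∧
      s x₀ ≤ 2 * r x₀ ∧ Balanced (fun x => s x - r x) := by
  have hstop : ∀ x, s x ≠ ⊤ := fun x => (lt_of_le_of_lt (h1 x) (by norm_num)).ne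
  by_cases hx₀ : s x₀ = 0
  · refine ⟨fun _ => 0, ∅, fun x => zero_le, fun x _ => rfl, fun v => by simp, ?_, ?_⟩
    · rw [hx₀, mul_zero]
    · have : (fun x => s x - (0:ℝ≥0∞)) = s := by
        funext x; exact tsub_zero _
      rw [this]
      exact hb
  · obtain ⟨S, hx₀S, hbound⟩ := exists_finset_bound hb h1 x₀ hx₀
    have hβ : 0 < (s x₀).toReal / 2 := by
      have := ENNReal.toReal_pos hx₀ (hstop x₀)
      positivity
    obtain ⟨q, hqb, hq0, hqx₀, hqmean⟩ := extract_finite x₀ S hx₀S hβ hbound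
    refine ⟨fun x => ENNReal.ofReal (q x), S, ?_, ?_, ?_, ?_, ?_⟩
    · intro x
      calc ENNReal.ofReal (q x) ≤ ENNReal.ofReal ((s x).toReal) :=
            ENNReal.ofReal_le_ofReal (hqb x).2
        _ = s x := ENNReal.ofReal_toReal (hstop x)
    · intro x hx
      dsimp only
      rw [hq0 x hx, ENNReal.ofReal_zero]
    · exact piece_mean_zero hq0 (fun x => (hqb x).1) hqmean
    · dsimp only
      rw [hqx₀]
      rw [show (2:ℝ≥0∞) * ENNReal.ofReal ((s x₀).toReal / 2)
          = ENNReal.ofReal (2 * ((s x₀).toReal / 2)) by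
        rw [ENNReal.ofReal_mul (by norm_num), ENNReal.ofReal_ofNat]]
      rw [show 2 * ((s x₀).toReal / 2) = (s x₀).toReal by ring,
        ENNReal.ofReal_toReal (hstop x₀)]
    · refine balanced_sub hb ?_ S ?_ (fun x => ENNReal.ofReal_ne_top) ?_
      · intro x
        calc ENNReal.ofReal (q x) ≤ ENNReal.ofReal ((s x).toReal) :=
              ENNReal.ofReal_le_ofReal (hqb x).2
          _ = s x := ENNReal.ofReal_toReal (hstop x)
      · intro x hx
        rw [hq0 x hx, ENNReal.ofReal_zero]
      · exact piece_mean_zero hq0 (fun x => (hqb x).1) hqmean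

lemma dotR_single (i : Fin d) (x : Zd d) : dotR (Pi.single i (1:ℝ)) x = ((x i : ℝ)) := by
  rw [dotR]
  simp [Pi.single_apply, ite_mul, Finset.sum_ite_eq']

/-- A probability measure `p` on `ℤ^d` is balanced if and only if it is the pointwise
nondecreasing limit of a sequence of (sub-probability) measures with finite first moments
and mean zero (mean zero being expressed coordinatewise: the positive part of the first
moment equals the negative part). -/
theorem balanced_iff_monotone_limit_of_mean_zero (d : ℕ) (p : Zd d → ℝ≥0∞)
    (hp : (∑' x, p x) = 1) :
    Balanced p ↔
      ∃ q : ℕ → Zd d → ℝ≥0∞,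
        (∀ m, (∑' x, q m x) ≤ 1) ∧
        (∀ m i, (∑' x : Zd d, q m x * ((x i).natAbs : ℝ≥0∞)) ≠ ⊤) ∧
        (∀ m i, (∑' x : Zd d, q m x * ENNReal.ofReal ((x i : ℝ)))
            = ∑' x : Zd d, q m x * ENNReal.ofReal (-(x i : ℝ))) ∧
        (∀ m x, q m x ≤ q (m + 1) x) ∧
        (∀ x, Filter.Tendsto (fun m => q m x) Filter.atTop (nhds (p x))) := by
  constructor
  · -- FORWARD
    intro hb
    classical
    obtain ⟨e, he⟩ := exists_surjective_nat (Zd d)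
    set τ : ℕ → Zd d := fun n => e (Nat.unpair n).1 with hτ
    have hτinf : ∀ (x : Zd d) (N : ℕ), ∃ n, N ≤ n ∧ τ n = x := by
      intro x N
      obtain ⟨k, hk⟩ := he x
      exact ⟨Nat.pair k N, Nat.right_le_pair k N, by simp [hτ, Nat.unpair_pair, hk]⟩
    have hp1 : ∀ x, p x ≤ 1 := fun x => hp ▸ ENNReal.le_tsum x
    let next : ℕ → {s : Zd d → ℝ≥0∞ // Balanced s ∧ ∀ x, s x ≤ 1}
        → {s : Zd d → ℝ≥0∞ // Balanced s ∧ ∀ x, s x ≤ 1} := fun n σ =>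
      ⟨fun x => σ.1 x - (step_lemma σ.2.1 σ.2.2 (τ n)).choose x,
        (step_lemma σ.2.1 σ.2.2 (τ n)).choose_spec.choose_spec.2.2.2.2,
        fun x => le_trans tsub_le_self (σ.2.2 x)⟩
    let St : ℕ → {s : Zd d → ℝ≥0∞ // Balanced s ∧ ∀ x, s x ≤ 1} :=
      fun n => Nat.rec ⟨p, hb, hp1⟩ next n
    let r : ℕ → Zd d → ℝ≥0∞ := fun n => (step_lemma (St n).2.1 (St n).2.2 (τ n)).choose
    let Sf : ℕ → Finset (Zd d) :=
      fun n => (step_lemma (St n).2.1 (St n).2.2 (τ n)).choose_spec.choose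
    have hrspec : ∀ n, (∀ x, r n x ≤ (St n).1 x) ∧ (∀ x ∉ Sf n, r n x = 0) ∧
        (∀ v : Fin d → ℝ, ∑' x : Zd d, r n x * ENNReal.ofReal (dotR v x)
          = ∑' x : Zd d, r n x * ENNReal.ofReal (-dotR v x)) ∧
        (St n).1 (τ n) ≤ 2 * r n (τ n) ∧ Balanced (fun x => (St n).1 x - r n x) :=
      fun n => (step_lemma (St n).2.1 (St n).2.2 (τ n)).choose_spec.choose_spec
    have hSt0 : (St 0).1 = p := rfl
    have hSts : ∀ n, (St (n+1)).1 = fun x => (St n).1 x - r n x := fun n => rfl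
    have hrtop : ∀ n x, r n x ≠ ⊤ :=
      fun n x => (lt_of_le_of_lt (le_trans ((hrspec n).1 x) ((St n).2.2 x)) (by norm_num)).ne
    have hdec : ∀ n x, (∑ k ∈ Finset.range n, r k x) + (St n).1 x = p x := by
      intro n
      induction n with
      | zero => intro x; simp [hSt0]
      | succ n ih =>
        intro x
        rw [Finset.sum_range_succ, hSts n]
        calc (∑ k ∈ Finset.range n, r k x) + r n x + ((St n).1 x - r n x)
            = (∑ k ∈ Finset.range n, r k x) + (r n x + ((St n).1 x - r n x)) := add_assoc _ _ _
          _ = (∑ k ∈ Finset.range n, r k x) + (St n).1 x := by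
              rw [add_tsub_cancel_of_le ((hrspec n).1 x)]
          _ = p x := ih x
    have hfinSt : ∀ n x, (St n).1 x ≠ ⊤ :=
      fun n x => (lt_of_le_of_lt ((St n).2.2 x) (by norm_num)).ne
    have hswap : ∀ (m : ℕ) (c : Zd d → ℝ≥0∞),
        ∑' x : Zd d, (∑ k ∈ Finset.range (m+1), r k x) * c x
          = ∑ k ∈ Finset.range (m+1), ∑' x : Zd d, r k x * c x := by
      intro m c
      rw [show (fun x : Zd d => (∑ k ∈ Finset.range (m+1), r k x) * c x)
          = fun x => ∑ k ∈ Finset.range (m+1), r k x * c x from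
        funext (fun x => Finset.sum_mul _ _ _)]
      exact Summable.tsum_finsetSum (fun k _ => ENNReal.summable)
    refine ⟨fun m x => ∑ k ∈ Finset.range (m+1), r k x, ?_, ?_, ?_, ?_, ?_⟩
    · intro m
      calc (∑' x : Zd d, ∑ k ∈ Finset.range (m+1), r k x) ≤ ∑' x, p x :=
            ENNReal.tsum_le_tsum (fun x => le_of_le_of_eq le_self_add (hdec (m+1) x))
        _ = 1 := hp
    · intro m i
      rw [hswap m (fun x => ((x i).natAbs : ℝ≥0∞))]
      refine (ENNReal.sum_lt_top.mpr (fun k _ => ?_)).ne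
      rw [tsum_eq_sum (s := Sf k) (fun x hx => by rw [(hrspec k).2.1 x hx, zero_mul])]
      exact ENNReal.sum_lt_top.mpr (fun x _ =>
        (ENNReal.mul_ne_top (hrtop k x) (ENNReal.natCast_ne_top _)).lt_top)
    · intro m i
      rw [hswap m (fun x => ENNReal.ofReal ((x i : ℝ))),
        hswap m (fun x => ENNReal.ofReal (-(x i : ℝ)))]
      refine Finset.sum_congr rfl (fun k _ => ?_)
      calc (∑' x : Zd d, r k x * ENNReal.ofReal ((x i : ℝ)))
          = ∑' x : Zd d, r k x * ENNReal.ofReal (dotR (Pi.single i (1:ℝ)) x) :=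
            tsum_congr (fun x => by rw [dotR_single i x])
        _ = ∑' x : Zd d, r k x * ENNReal.ofReal (-dotR (Pi.single i (1:ℝ)) x) :=
            (hrspec k).2.2.1 _
        _ = ∑' x : Zd d, r k x * ENNReal.ofReal (-(x i : ℝ)) :=
            tsum_congr (fun x => by rw [dotR_single i x])
    · intro m x
      exact Finset.sum_le_sum_of_subset (Finset.range_subset_range.mpr (by omega))
    · intro x
      have hanti : ∀ n, (St (n+1)).1 x ≤ (St n).1 x := by
        intro n; rw [hSts n]; exact tsub_le_self
      have hmono_le : Antitone (fun n => (St n).1 x) := antitone_nat_of_succ_le hanti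
      have hkey : ∀ k : ℕ, ∃ N, ∀ n, N ≤ n → (St n).1 x ≤ (2⁻¹ : ℝ≥0∞)^k := by
        intro k
        induction k with
        | zero => exact ⟨0, fun n _ => by simpa using (St n).2.2 x⟩
        | succ k ih =>
          obtain ⟨N, hN⟩ := ih
          obtain ⟨n, hnN, hτn⟩ := hτinf x N
          refine ⟨n+1, fun m hm => ?_⟩
          have hhalf : (St n).1 x / 2 ≤ r n x := by
            refine (ENNReal.div_le_iff_le_mul (Or.inl (by norm_num))
              (Or.inl (by norm_num))).mpr ?_
            rw [mul_comm]
            have := (hrspec n).2.2.2.1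
            rwa [hτn] at this
          have h2 : (St (n+1)).1 x ≤ (2⁻¹ : ℝ≥0∞)^(k+1) := by
            rw [hSts n]
            calc (St n).1 x - r n x ≤ (St n).1 x - (St n).1 x / 2 :=
                  tsub_le_tsub_left hhalf _
              _ = (St n).1 x / 2 := ENNReal.sub_half (hfinSt n x)
              _ ≤ ((2⁻¹ : ℝ≥0∞)^k) / 2 := by
                  gcongr
                  exact hN n hnN
              _ = (2⁻¹ : ℝ≥0∞)^(k+1) := by
                  rw [pow_succ, div_eq_mul_inv]
          exact le_trans (hmono_le hm) h2
      have hlim : Tendsto (fun n => (St n).1 x) atTop (𝓝 0) := by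
        refine ENNReal.tendsto_atTop_zero.mpr (fun ε hε => ?_)
        have hp2 := ENNReal.tendsto_pow_atTop_nhds_zero_of_lt_one
          (by norm_num : (2⁻¹ : ℝ≥0∞) < 1)
        obtain ⟨k, hk⟩ := (hp2.eventually_lt_const hε).exists
        obtain ⟨N, hN⟩ := hkey k
        exact ⟨N, fun n hn => le_trans (hN n hn) hk.le⟩
      have hq : (fun m => ∑ k ∈ Finset.range (m+1), r k x)
          = fun m => p x - (St (m+1)).1 x :=
        funext (fun m => ENNReal.eq_sub_of_add_eq (hfinSt (m+1) x) (hdec (m+1) x))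
      rw [hq]
      have h3 : Tendsto (fun m => (St (m+1)).1 x) atTop (𝓝 0) :=
        hlim.comp (tendsto_add_atTop_nat 1)
      have hfinal := ENNReal.Tendsto.sub (tendsto_const_nhds (x := p x)) h3
        (Or.inl (lt_of_le_of_lt (hp1 x) (by norm_num)).ne)
      simpa using hfinal
  · -- BACKWARD
    rintro ⟨q, hmass, hmom, hmean, hmono, hlim⟩
    intro v hv
    have hqmono : ∀ x, Monotone (fun m => q m x) :=
      fun x => monotone_nat_of_le_succ (fun m => hmono m x)
    have hsup : ∀ x, (⨆ m, q m x) = p x := fun x =>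
      tendsto_nhds_unique (tendsto_atTop_iSup (hqmono x)) (hlim x)
    have hper : ∀ m, (∑' x : Zd d, q m x * ENNReal.ofReal (dotR v x))
        = ∑' x : Zd d, q m x * ENNReal.ofReal (-dotR v x) := by
      intro m
      have hfx : ∀ x, q m x ≠ ⊤ :=
        fun x => (lt_of_le_of_lt (le_trans (ENNReal.le_tsum x) (hmass m)) (by norm_num)).ne
      have hMi := hmom m
      have habs : ∀ x : Zd d, |dotR v x| ≤ ∑ i, |v i| * ((x i).natAbs : ℝ) := by
        intro x
        calc |dotR v x| ≤ ∑ i, |v i * ((x i : ℝ))| := Finset.abs_sum_le_sum_abs _ _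
          _ = ∑ i, |v i| * ((x i).natAbs : ℝ) := by
              refine Finset.sum_congr rfl (fun i _ => ?_)
              rw [abs_mul, Nat.cast_natAbs, Int.cast_abs]
      have hdom : ∀ (g : Zd d → ℝ), (∀ x, |g x| ≤ ∑ i, |v i| * ((x i).natAbs : ℝ)) →
          (∑' x : Zd d, q m x * ENNReal.ofReal (g x)) ≠ ⊤ := by
        intro g hg
        have hle : (∑' x : Zd d, q m x * ENNReal.ofReal (g x))
            ≤ ∑ i : Fin d, ENNReal.ofReal |v i| * ∑' x : Zd d, q m x * ((x i).natAbs : ℝ≥0∞) := by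
          calc (∑' x : Zd d, q m x * ENNReal.ofReal (g x))
              ≤ ∑' x : Zd d, ∑ i, q m x * (ENNReal.ofReal |v i| * ((x i).natAbs : ℝ≥0∞)) := by
                refine ENNReal.tsum_le_tsum (fun x => ?_)
                rw [← Finset.mul_sum]
                refine mul_le_mul_right ?_ _
                calc ENNReal.ofReal (g x)
                    ≤ ENNReal.ofReal (∑ i, |v i| * ((x i).natAbs : ℝ)) :=
                      ENNReal.ofReal_le_ofReal (le_trans (le_abs_self _) (hg x))
                  _ = ∑ i, ENNReal.ofReal (|v i| * ((x i).natAbs : ℝ)) :=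
                      ENNReal.ofReal_sum_of_nonneg (fun i _ => by positivity)
                  _ = ∑ i, ENNReal.ofReal |v i| * ((x i).natAbs : ℝ≥0∞) := by
                      refine Finset.sum_congr rfl (fun i _ => ?_)
                      rw [ENNReal.ofReal_mul (abs_nonneg _), ENNReal.ofReal_natCast]
            _ = ∑ i : Fin d, ∑' x : Zd d, q m x * (ENNReal.ofReal |v i| * ((x i).natAbs : ℝ≥0∞)) :=
                Summable.tsum_finsetSum (fun _ _ => ENNReal.summable)
            _ = ∑ i : Fin d, ENNReal.ofReal |v i| * ∑' x : Zd d, q m x * ((x i).natAbs : ℝ≥0∞) := by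
                refine Finset.sum_congr rfl (fun i _ => ?_)
                rw [← ENNReal.tsum_mul_left]
                exact tsum_congr (fun x => by ring)
        refine (lt_of_le_of_lt hle ?_).ne
        exact ENNReal.sum_lt_top.mpr (fun i _ =>
          (ENNReal.mul_ne_top ENNReal.ofReal_ne_top (hMi i)).lt_top)
      have hApos : (∑' x : Zd d, q m x * ENNReal.ofReal (dotR v x)) ≠ ⊤ := hdom _ habs
      have hAneg : (∑' x : Zd d, q m x * ENNReal.ofReal (-dotR v x)) ≠ ⊤ :=
        hdom _ (fun x => by rw [abs_neg]; exact habs x)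
      set gre : Zd d → ℝ := fun x => (q m x).toReal with hgre
      have hconv : ∀ (g : Zd d → ℝ), (∑' x : Zd d, q m x * ENNReal.ofReal (g x)) ≠ ⊤ →
          Summable (fun x : Zd d => gre x * max (g x) 0) ∧
          (∑' x : Zd d, q m x * ENNReal.ofReal (g x)).toReal
            = ∑' x : Zd d, gre x * max (g x) 0 := by
        intro g hA
        have h1 : ∀ x, ((q m x * ENNReal.ofReal (g x))).toReal = gre x * max (g x) 0 :=
          fun x => by rw [ENNReal.toReal_mul, ENNReal.toReal_ofReal']
        constructor
        · have := ENNReal.summable_toReal hA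
          exact (summable_congr h1).mp this
        · rw [ENNReal.tsum_toReal_eq
            (fun x => ENNReal.mul_ne_top (hfx x) ENNReal.ofReal_ne_top)]
          exact tsum_congr h1
      have hcoordfin : ∀ i : Fin d,
          (∑' x : Zd d, q m x * ENNReal.ofReal ((x i : ℝ))) ≠ ⊤ ∧
          (∑' x : Zd d, q m x * ENNReal.ofReal (-((x i : ℝ)))) ≠ ⊤ := by
        intro i
        have key : ∀ (g : Zd d → ℝ), (∀ x, |g x| ≤ ((x i).natAbs : ℝ)) →
            (∑' x : Zd d, q m x * ENNReal.ofReal (g x)) ≠ ⊤ := by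
          intro g hg
          refine ne_top_of_le_ne_top (hMi i) (ENNReal.tsum_le_tsum (fun x => ?_))
          refine mul_le_mul_right ?_ _
          calc ENNReal.ofReal (g x) ≤ ENNReal.ofReal (((x i).natAbs : ℝ)) :=
                ENNReal.ofReal_le_ofReal (le_trans (le_abs_self _) (hg x))
            _ = (((x i).natAbs : ℝ≥0∞)) := ENNReal.ofReal_natCast _
        constructor
        · exact key _ (fun x => by rw [Nat.cast_natAbs, Int.cast_abs])
        · exact key _ (fun x => by rw [abs_neg, Nat.cast_natAbs, Int.cast_abs])
      have hsumcoord : ∀ i : Fin d, Summable (fun x : Zd d => gre x * ((x i : ℝ))) := by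
        intro i
        refine Summable.of_abs ?_
        have heq2 : (fun x : Zd d => |gre x * ((x i : ℝ))|)
            = fun x : Zd d => (q m x * ((x i).natAbs : ℝ≥0∞)).toReal := by
          funext x
          rw [abs_mul, abs_of_nonneg ENNReal.toReal_nonneg, ENNReal.toReal_mul,
            ENNReal.toReal_natCast, Nat.cast_natAbs, Int.cast_abs]
        rw [heq2]
        exact ENNReal.summable_toReal (hMi i)
      have hcoordzero : ∀ i : Fin d, ∑' x : Zd d, gre x * ((x i : ℝ)) = 0 := by
        intro i
        obtain ⟨hf1, hf2⟩ := hcoordfin i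
        have h1 := hconv (fun x => ((x i : ℝ))) hf1
        have h2 := hconv (fun x => -((x i : ℝ))) hf2
        have heq := hmean m i
        calc ∑' x : Zd d, gre x * ((x i : ℝ))
            = ∑' x : Zd d, (gre x * max ((x i : ℝ)) 0 - gre x * max (-((x i : ℝ))) 0) :=
              tsum_congr (fun x => by rw [← mul_sub, max_sub_max_neg])
          _ = (∑' x : Zd d, gre x * max ((x i : ℝ)) 0)
              - (∑' x : Zd d, gre x * max (-((x i : ℝ))) 0) := Summable.tsum_sub h1.1 h2.1
          _ = 0 := by
              rw [← h1.2, ← h2.2, heq, sub_self]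
      have hreal : ∑' x : Zd d, gre x * dotR v x = 0 := by
        calc ∑' x : Zd d, gre x * dotR v x
            = ∑' x : Zd d, ∑ i, v i * (gre x * ((x i : ℝ))) :=
              tsum_congr (fun x => by
                rw [dotR, Finset.mul_sum]
                exact Finset.sum_congr rfl (fun i _ => by ring))
          _ = ∑ i, ∑' x : Zd d, v i * (gre x * ((x i : ℝ))) :=
              Summable.tsum_finsetSum (fun i _ => ((hsumcoord i).mul_left (v i)))
          _ = ∑ i, v i * ∑' x : Zd d, gre x * ((x i : ℝ)) :=
              Finset.sum_congr rfl (fun i _ => tsum_mul_left)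
          _ = 0 := by
              rw [Finset.sum_congr rfl (fun i (_ : i ∈ Finset.univ) => by
                rw [hcoordzero i, mul_zero] : ∀ i ∈ Finset.univ,
                  v i * (∑' x : Zd d, gre x * ((x i : ℝ))) = 0)]
              exact Finset.sum_const_zero
      have h1 := hconv (fun x => dotR v x) hApos
      have h2 := hconv (fun x => -dotR v x) hAneg
      have hsub : (∑' x : Zd d, gre x * max (dotR v x) 0)
          - (∑' x : Zd d, gre x * max (-dotR v x) 0) = 0 := by
        rw [← Summable.tsum_sub h1.1 h2.1]
        have hc2 : (∑' x : Zd d, (gre x * max (dotR v x) 0 - gre x * max (-dotR v x) 0))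
            = ∑' x : Zd d, gre x * dotR v x :=
          tsum_congr (fun x => by rw [← mul_sub, max_sub_max_neg])
        rw [hc2, hreal]
      refine (ENNReal.toReal_eq_toReal_iff' hApos hAneg).mp ?_
      rw [h1.2, h2.2]
      linarith
    have hMCT : ∀ (c : Zd d → ℝ≥0∞),
        (∑' x : Zd d, p x * c x) = ⨆ m, ∑' x : Zd d, q m x * c x := by
      intro c
      rw [show (fun x : Zd d => p x * c x) = fun x => ⨆ m, q m x * c x from
        funext (fun x => by rw [← hsup x, ENNReal.iSup_mul])]
      exact tsum_iSup_mono _ (fun x a b hab => mul_le_mul_left (hqmono x hab) _)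
    show (∑' x : Zd d, p x * ENNReal.ofReal (dotR v x))
        = ∑' x : Zd d, p x * ENNReal.ofReal (-dotR v x)
    rw [hMCT (fun x => ENNReal.ofReal (dotR v x)), hMCT (fun x => ENNReal.ofReal (-dotR v x))]
    exact iSup_congr hper

end

end CyclicRW1
end

section
/- Let w¹,…,w^k ∈ ℤ^d be in general position and suppose the origin lies in the relative interior of the convex hull of {w¹,…,w^k}. Then there exists a unique tuple of strictly positive integers (n₁,…,n_k) such that ∑_{i=1}^k nᵢ wⁱ = 0 and, for every tuple of integers (m₁,…,m_k) with 0 ≤ mᵢ ≤ nᵢ for all i, (m₁,…,m_k) ≠ (0,…,0) and (m₁,…,m_k) ≠ (n₁,…,n_k), one has ∑_{i=1}^k mᵢ wⁱ ≠ 0. -/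
namespace CyclicRW4

abbrev Zd (d : ℕ) := Fin d → ℤ

/-- Canonical embedding of `ℤ^d` into `ℝ^d`. -/
def toRvec {d : ℕ} (x : Zd d) : Fin d → ℝ := fun i => (x i : ℝ)

/-- Convex hull membership with fintype coefficients. -/
lemma mem_hull_coeffs {ι : Type*} [Fintype ι] {E : Type*} [AddCommGroup E] [Module ℝ E]
    (p : ι → E) {x : E} (hx : x ∈ convexHull ℝ (Set.range p)) :
    ∃ μ : ι → ℝ, (∀ i, 0 ≤ μ i) ∧ ∑ i, μ i = 1 ∧ ∑ i, μ i • p i = x := by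
  classical
  rw [convexHull_range_eq_exists_affineCombination] at hx
  obtain ⟨s, ww, hnn, h1, hx⟩ := hx
  refine ⟨fun i => if i ∈ s then ww i else 0, ?_, ?_, ?_⟩
  · intro i
    by_cases h : i ∈ s <;> simp [h]
    exact hnn i h
  · rw [Finset.sum_ite_mem, Finset.univ_inter, h1]
  · rw [← hx, Finset.affineCombination_eq_linear_combination s p ww h1]
    simp only [ite_smul, zero_smul]
    rw [Finset.sum_ite_mem, Finset.univ_inter]

/-- Uniqueness of affine coefficients: a linear relation with total coefficient zero is trivial. -/
lemma uniq_zero {d k : ℕ} {w : Fin (k + 1) → Zd d}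
    (hgp : LinearIndependent ℝ
      (fun i : {i : Fin (k + 1) // i ≠ 0} => toRvec (w i) - toRvec (w 0)))
    (c : Fin (k + 1) → ℝ) (hs : ∑ i, c i = 0)
    (hc : ∑ i, c i • toRvec (w i) = 0) : c = 0 := by
  have herase : ∀ f : Fin (k + 1) → (Fin d → ℝ),
      ∑ i ∈ Finset.univ.erase 0, f i = ∑ i, f i - f 0 := by
    intro f
    rw [← Finset.sum_erase_add Finset.univ f (Finset.mem_univ 0)]
    abel
  have heraseR : ∀ f : Fin (k + 1) → ℝ,
      ∑ i ∈ Finset.univ.erase 0, f i = ∑ i, f i - f 0 := by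
    intro f
    rw [← Finset.sum_erase_add Finset.univ f (Finset.mem_univ 0)]
    abel
  have key : ∀ j : {i : Fin (k + 1) // i ≠ 0}, c j = 0 := by
    have hli := Fintype.linearIndependent_iff.mp hgp (fun i => c i)
    refine fun j => hli ?_ j
    rw [← Finset.sum_subtype (Finset.univ.erase (0 : Fin (k + 1)))
      (fun x => by simp) (fun i => c i • (toRvec (w i) - toRvec (w 0)))]
    have e1 : ∀ i, c i • (toRvec (w i) - toRvec (w 0))
        = c i • toRvec (w i) - c i • toRvec (w 0) := fun i => smul_sub _ _ _
    simp only [e1, Finset.sum_sub_distrib, ← Finset.sum_smul]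
    rw [herase (fun i => c i • toRvec (w i)), heraseR c, hc, hs]
    module
  funext j
  by_cases hj : j = 0
  · subst hj
    have h1 := heraseR c
    have h2 : ∑ i ∈ Finset.univ.erase 0, c i = 0 :=
      Finset.sum_eq_zero fun x hx => key ⟨x, Finset.ne_of_mem_erase hx⟩
    rw [h2, hs] at h1
    have := h1.symm
    simpa using this
  · exact key ⟨j, hj⟩

/-- Existence of strictly positive real barycentric coefficients for the origin. -/
lemma exists_pos_coeffs {d k : ℕ} {w : Fin (k + 1) → Zd d}
    (hgp : LinearIndependent ℝ
      (fun i : {i : Fin (k + 1) // i ≠ 0} => toRvec (w i) - toRvec (w 0)))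
    (h0 : (0 : Fin d → ℝ) ∈ intrinsicInterior ℝ
      (convexHull ℝ (Set.range fun i => toRvec (w i)))) :
    ∃ lam : Fin (k + 1) → ℝ, (∀ i, 0 < lam i) ∧ ∑ i, lam i = 1 ∧
      ∑ i, lam i • toRvec (w i) = 0 := by
  classical
  set p : Fin (k + 1) → (Fin d → ℝ) := fun i => toRvec (w i) with hp
  set C : Set (Fin d → ℝ) := convexHull ℝ (Set.range p) with hC
  have h0C : (0 : Fin d → ℝ) ∈ C := intrinsicInterior_subset h0
  obtain ⟨lam, hnn, hsum, hcomb⟩ := mem_hull_coeffs p h0C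
  refine ⟨lam, ?_, hsum, hcomb⟩
  intro j
  rcases (hnn j).lt_or_eq with h | h
  · exact h
  exfalso
  obtain ⟨y, hy, hy0⟩ := mem_intrinsicInterior.mp h0
  rw [mem_interior_iff_mem_nhds, Metric.mem_nhds_iff] at hy
  obtain ⟨ε, hε, hball⟩ := hy
  set t : ℝ := ε / (2 * (‖p j‖ + 1)) with ht
  have hnorm : (0:ℝ) < ‖p j‖ + 1 := by positivity
  have htpos : 0 < t := by positivity
  have hzC : (-t) • p j ∈ C := by
    have h0span : (0 : Fin d → ℝ) ∈ affineSpan ℝ C := subset_affineSpan ℝ C h0C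
    have hpjC : p j ∈ C := subset_convexHull ℝ _ (Set.mem_range_self j)
    have hpjspan : p j ∈ affineSpan ℝ C := subset_affineSpan ℝ C hpjC
    have hmem : (-t) • (p j -ᵥ (0 : Fin d → ℝ)) +ᵥ (0 : Fin d → ℝ) ∈ affineSpan ℝ C :=
      AffineSubspace.smul_vsub_vadd_mem _ (-t) hpjspan h0span h0span
    have hzspan : (-t) • p j ∈ affineSpan ℝ C := by
      simpa using hmem
    have hdist : dist (⟨(-t) • p j, hzspan⟩ : affineSpan ℝ C) y < ε := by
      rw [Subtype.dist_eq, hy0]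
      rw [dist_zero_right, norm_smul, norm_neg, Real.norm_eq_abs, abs_of_pos htpos]
      have h1 : t * ‖p j‖ ≤ t * (‖p j‖ + 1) := by nlinarith [norm_nonneg (p j)]
      have h2 : t * (‖p j‖ + 1) = ε / 2 := by
        rw [ht]; field_simp
      have : t * ‖p j‖ ≤ ε / 2 := h2 ▸ h1
      linarith
    exact hball hdist
  obtain ⟨ν, hνnn, hνsum, hνcomb⟩ := mem_hull_coeffs p hzC
  set μ : Fin (k + 1) → ℝ := fun i => (1 + t) * lam i - (if i = j then t else 0) with hμ
  have hdiff : (fun i => ν i - μ i) = 0 := by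
    apply uniq_zero hgp
    · have hμs : ∑ i, μ i = (1 + t) * (∑ i, lam i) - t := by
        rw [hμ]
        rw [Finset.sum_sub_distrib, ← Finset.mul_sum]
        congr 1
        simp
      rw [Finset.sum_sub_distrib, hνsum, hμs, hsum]
      ring
    · show ∑ i, (ν i - μ i) • p i = 0
      have e1 : ∀ i, (ν i - μ i) • p i = ν i • p i - ((1 + t) * lam i) • p i
          + (if i = j then t else 0) • p i := by
        intro i
        rw [hμ]
        module
      simp only [e1]
      rw [Finset.sum_add_distrib, Finset.sum_sub_distrib, hνcomb]
      have h1 : ∑ i, ((1 + t) * lam i) • p i = (1 + t) • ∑ i, lam i • p i := by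
        rw [Finset.smul_sum]
        exact Finset.sum_congr rfl fun i _ => by rw [smul_smul]
      have h2 : ∑ i, (if i = j then t else (0:ℝ)) • p i = t • p j := by
        simp [ite_smul]
      rw [h1, h2, hcomb]
      module
  have hνj : ν j = -t := by
    have hj := congrFun hdiff j
    simp only [Pi.zero_apply, sub_eq_zero] at hj
    rw [hj, hμ]
    simp [h.symm]
  have := hνnn j
  rw [hνj] at this
  linarith

/-- The coefficients are rational. -/
lemma rat_coeffs {d k : ℕ} {w : Fin (k + 1) → Zd d}
    (hgp : LinearIndependent ℝ
      (fun i : {i : Fin (k + 1) // i ≠ 0} => toRvec (w i) - toRvec (w 0)))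
    (lam : Fin (k + 1) → ℝ) (hsum : ∑ i, lam i = 1)
    (hcomb : ∑ i, lam i • toRvec (w i) = 0) :
    ∃ q : Fin (k + 1) → ℚ, ∀ i, (q i : ℝ) = lam i := by
  obtain ⟨π, hπ⟩ := (Algebra.linearMap ℚ ℝ).exists_leftInverse_of_injective
    (LinearMap.ker_eq_bot.mpr (algebraMap ℚ ℝ).injective)
  have hπ' : ∀ r : ℚ, π (r : ℝ) = r := fun r => congrFun (congrArg DFunLike.coe hπ) r
  set q : Fin (k + 1) → ℚ := fun i => π (lam i) with hq
  have hπsmul : ∀ (r : ℚ) (x : ℝ), π (r • x) = r * π x := fun r x => by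
    rw [map_smul]; simp [smul_eq_mul]
  have hπone : π (1 : ℝ) = 1 := by simpa using hπ' 1
  have hq1 : ∑ i, q i = 1 := by
    have h := congrArg π hsum
    rw [map_sum, hπone] at h
    exact h
  have hq2 : ∀ m : Fin d, ∑ i, q i * ((w i m : ℤ) : ℚ) = 0 := by
    intro m
    have hco := congrFun hcomb m
    simp only [Finset.sum_apply, Pi.smul_apply, smul_eq_mul, Pi.zero_apply, toRvec] at hco
    have e1 : ∀ i, lam i * ((w i m : ℤ) : ℝ) = ((w i m : ℤ) : ℚ) • lam i := by
      intro i
      rw [Rat.smul_def]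
      push_cast
      ring
    rw [Finset.sum_congr rfl fun i _ => e1 i] at hco
    have h := congrArg π hco
    rw [map_sum, map_zero] at h
    rw [← h]
    exact (Finset.sum_congr rfl fun i _ => by rw [hπsmul]; ring).symm
  refine ⟨q, ?_⟩
  have hd : (fun i => (q i : ℝ) - lam i) = 0 := by
    apply uniq_zero hgp
    · rw [Finset.sum_sub_distrib, hsum]
      rw [← Rat.cast_sum, hq1]
      simp
    · show ∑ i, ((q i : ℝ) - lam i) • toRvec (w i) = 0
      simp only [sub_smul]
      rw [Finset.sum_sub_distrib, hcomb, sub_zero]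
      funext m
      simp only [Finset.sum_apply, Pi.smul_apply, smul_eq_mul, Pi.zero_apply, toRvec]
      have h := hq2 m
      have hcast := congrArg (fun x : ℚ => (x : ℝ)) h
      push_cast at hcast
      convert hcast using 2
  intro i
  have := congrFun hd i
  simp only [Pi.zero_apply, sub_eq_zero] at this
  exact this

/-- Given vectors `w 0, …, w k` of `ℤ^d` in general position (the differences
`w i - w 0`, `i ≠ 0`, are linearly independent over `ℝ`) with the origin in the relative
interior of their convex hull, there is a unique tuple of strictly positive integers
`(n 0, …, n k)` with `∑ i, n i • w i = 0` such that no other nonzero componentwise-smaller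
tuple yields a zero sum. -/
theorem unique_irreducible_coefficients (d k : ℕ) (w : Fin (k + 1) → Zd d)
    (hgp : LinearIndependent ℝ
      (fun i : {i : Fin (k + 1) // i ≠ 0} => toRvec (w i) - toRvec (w 0)))
    (h0 : (0 : Fin d → ℝ) ∈ intrinsicInterior ℝ
      (convexHull ℝ (Set.range fun i => toRvec (w i)))) :
    ∃! nn : Fin (k + 1) → ℕ,
      (∀ i, 0 < nn i) ∧ (∑ i, nn i • w i) = 0 ∧
        ∀ m : Fin (k + 1) → ℕ, (∀ i, m i ≤ nn i) → m ≠ 0 → m ≠ nn →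
          (∑ i, m i • w i) ≠ 0 := by
  classical
  obtain ⟨lam, hlpos, hlsum, hlcomb⟩ := exists_pos_coeffs hgp h0
  obtain ⟨q, hq⟩ := rat_coeffs hgp lam hlsum hlcomb
  have hqpos : ∀ i, 0 < q i := fun i => by
    have h := hlpos i
    rw [← hq i] at h
    exact_mod_cast h
  -- the rational linear relation
  have hq2 : ∀ m : Fin d, ∑ i, q i * ((w i m : ℤ) : ℚ) = 0 := by
    intro m
    have hco := congrFun hlcomb m
    simp only [Finset.sum_apply, Pi.smul_apply, smul_eq_mul, Pi.zero_apply, toRvec] at hco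
    have h : ((∑ i, q i * ((w i m : ℤ) : ℚ) : ℚ) : ℝ) = 0 := by
      push_cast
      rw [← hco]
      exact Finset.sum_congr rfl fun i _ => by rw [hq i]
    exact_mod_cast h
  -- key: any integer solution is proportional to q
  have key : ∀ c : Fin (k + 1) → ℤ, (∑ i, c i • w i) = 0 →
      ∀ i, (c i : ℚ) = ((∑ j, c j : ℤ) : ℚ) * q i := by
    intro c hcw i
    have hreal : (fun i => (c i : ℝ) - ((∑ j, c j : ℤ) : ℝ) * lam i) = 0 := by
      apply uniq_zero hgp
      · rw [Finset.sum_sub_distrib, ← Finset.mul_sum, hlsum, mul_one]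
        push_cast
        ring
      · show ∑ i, ((c i : ℝ) - ((∑ j, c j : ℤ) : ℝ) * lam i) • toRvec (w i) = 0
        simp only [sub_smul]
        rw [Finset.sum_sub_distrib]
        have h1 : ∑ i, (c i : ℝ) • toRvec (w i) = 0 := by
          funext m
          have hz := congrFun hcw m
          simp only [Finset.sum_apply, Pi.smul_apply, zsmul_eq_mul, Pi.zero_apply] at hz
          simp only [Finset.sum_apply, Pi.smul_apply, smul_eq_mul, Pi.zero_apply, toRvec]
          exact_mod_cast hz
        have h2 : ∑ i, (((∑ j, c j : ℤ) : ℝ) * lam i) • toRvec (w i)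
            = ((∑ j, c j : ℤ) : ℝ) • ∑ i, lam i • toRvec (w i) := by
          rw [Finset.smul_sum]
          exact Finset.sum_congr rfl fun i _ => by rw [smul_smul]
        rw [h1, h2, hlcomb, smul_zero, sub_zero]
    have := congrFun hreal i
    simp only [Pi.zero_apply, sub_eq_zero] at this
    have hc : ((c i : ℚ) : ℝ) = (((∑ j, c j : ℤ) : ℚ) * q i : ℚ) := by
      push_cast
      rw [hq i]
      exact_mod_cast this
    exact_mod_cast hc
  -- characterization of nonnegative integer solutions
  have sol : ∀ m : Fin (k + 1) → ℕ, (∑ i, m i • w i) = 0 → m ≠ 0 →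
      (0 < ∑ i, m i) ∧ ∀ i, (m i : ℚ) = ((∑ j, m j : ℕ) : ℚ) * q i := by
    intro m hm hm0
    have hcz : (∑ i, (fun i => (m i : ℤ)) i • w i) = 0 := by
      funext j
      have hz := congrFun hm j
      simp only [Finset.sum_apply, Pi.smul_apply, nsmul_eq_mul, Pi.zero_apply] at hz
      simp only [Finset.sum_apply, Pi.smul_apply, zsmul_eq_mul, Pi.zero_apply]
      exact_mod_cast hz
    have hc := key (fun i => (m i : ℤ)) hcz
    have hspos : 0 < ∑ i, m i := by
      rcases Nat.eq_zero_or_pos (∑ i, m i) with hzero | hpos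
      · exfalso
        apply hm0
        funext i
        have := (Finset.sum_eq_zero_iff.mp hzero) i (Finset.mem_univ i)
        simpa using this
      · exact hpos
    refine ⟨hspos, fun i => ?_⟩
    have h := hc i
    push_cast at h ⊢
    exact h
  -- set of denominators-clearing multiples
  have hPD : ∃ s : ℕ, 0 < s ∧ ∀ i, ((s : ℚ) * q i).den = 1 := by
    refine ⟨∏ i, (q i).den, Finset.prod_pos fun i _ => (q i).pos, fun i => ?_⟩
    obtain ⟨e, he⟩ : (q i).den ∣ ∏ j, (q j).den := Finset.dvd_prod_of_mem _ (Finset.mem_univ i)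
    have hmul : ((q i).den : ℚ) * q i = (q i).num := by
      have hden : ((q i).den : ℚ) ≠ 0 := by
        exact_mod_cast (q i).den_nz
      nth_rewrite 2 [← Rat.num_div_den (q i)]
      field_simp
    have hval : ((∏ j, (q j).den : ℕ) : ℚ) * q i = (((e : ℤ) * (q i).num : ℤ) : ℚ) := by
      rw [he]
      push_cast
      rw [mul_comm ((q i).den : ℚ) (e : ℚ), mul_assoc, hmul]
    rw [hval, Rat.den_intCast]
  set s₀ : ℕ := Nat.find hPD with hs₀def
  have hs₀ : 0 < s₀ ∧ ∀ i, ((s₀ : ℚ) * q i).den = 1 := Nat.find_spec hPD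
  set nn : Fin (k + 1) → ℕ := fun i => ((s₀ : ℚ) * q i).num.toNat with hnn
  have hvalpos : ∀ i, 0 < (s₀ : ℚ) * q i := fun i =>
    mul_pos (by exact_mod_cast hs₀.1) (hqpos i)
  have hnumpos : ∀ i, 0 < ((s₀ : ℚ) * q i).num := fun i => Rat.num_pos.mpr (hvalpos i)
  have hnnq : ∀ i, ((nn i : ℕ) : ℚ) = (s₀ : ℚ) * q i := by
    intro i
    have h1 : ((((s₀ : ℚ) * q i).num : ℤ) : ℚ) = (s₀ : ℚ) * q i :=
      (Rat.den_eq_one_iff _).mp (hs₀.2 i)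
    have h2 : ((((s₀ : ℚ) * q i).num.toNat : ℕ) : ℤ) = ((s₀ : ℚ) * q i).num :=
      Int.toNat_of_nonneg (hnumpos i).le
    rw [hnn, ← h1]
    exact_mod_cast h2
  have hnnpos : ∀ i, 0 < nn i := by
    intro i
    have h := hnumpos i
    show 0 < ((s₀ : ℚ) * q i).num.toNat
    omega
  have hnnzero : nn ≠ 0 := by
    intro h
    have := hnnpos 0
    rw [h] at this
    simp at this
  have hnn0 : (∑ i, nn i • w i) = 0 := by
    funext j
    simp only [Finset.sum_apply, Pi.smul_apply, nsmul_eq_mul, Pi.zero_apply]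
    have h : ((∑ i, (nn i : ℤ) * w i j : ℤ) : ℚ) = 0 := by
      push_cast
      have e1 : ∀ i, (nn i : ℚ) * ((w i j : ℤ) : ℚ) = (s₀ : ℚ) * (q i * ((w i j : ℤ) : ℚ)) := by
        intro i
        rw [hnnq i]
        ring
      calc ∑ i, (nn i : ℚ) * ((w i j : ℤ) : ℚ)
          = ∑ i, (s₀ : ℚ) * (q i * ((w i j : ℤ) : ℚ)) := Finset.sum_congr rfl fun i _ => e1 i
        _ = (s₀ : ℚ) * ∑ i, q i * ((w i j : ℤ) : ℚ) := by rw [Finset.mul_sum]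
        _ = 0 := by rw [hq2 j, mul_zero]
    exact_mod_cast h
  -- the minimality property
  have hmin : ∀ m : Fin (k + 1) → ℕ, (∀ i, m i ≤ nn i) → m ≠ 0 → m ≠ nn →
      (∑ i, m i • w i) ≠ 0 := by
    intro m hle hm0 hmn hcontra
    obtain ⟨hspos, hqi⟩ := sol m hcontra hm0
    have hden : ∀ i, (((∑ j, m j : ℕ) : ℚ) * q i).den = 1 := fun i => by
      rw [← hqi i]
      exact Rat.den_natCast _
    have hs₀le : s₀ ≤ ∑ j, m j := Nat.find_min' hPD ⟨hspos, hden⟩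
    have hsle : (∑ j, m j) ≤ s₀ := by
      have h1 : ((∑ j, m j : ℕ) : ℚ) * q 0 ≤ (s₀ : ℚ) * q 0 := by
        rw [← hqi 0, ← hnnq 0]
        exact_mod_cast hle 0
      have h2 : ((∑ j, m j : ℕ) : ℚ) ≤ (s₀ : ℚ) := le_of_mul_le_mul_right h1 (hqpos 0)
      exact_mod_cast h2
    have hseq : (∑ j, m j) = s₀ := le_antisymm hsle hs₀le
    apply hmn
    funext i
    have : (m i : ℚ) = (nn i : ℚ) := by
      rw [hqi i, hnnq i, hseq]
    exact_mod_cast this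
  refine ⟨nn, ⟨hnnpos, hnn0, hmin⟩, ?_⟩
  intro nn' ⟨hpos', hsum', hmin'⟩
  have hnn'0 : nn' ≠ 0 := by
    intro h
    have := hpos' 0
    rw [h] at this
    simp at this
  obtain ⟨hspos', hqi'⟩ := sol nn' hsum' hnn'0
  have hden' : ∀ i, (((∑ j, nn' j : ℕ) : ℚ) * q i).den = 1 := fun i => by
    rw [← hqi' i]
    exact Rat.den_natCast _
  have h0le : s₀ ≤ ∑ j, nn' j := Nat.find_min' hPD ⟨hspos', hden'⟩
  have hle : ∀ i, nn i ≤ nn' i := by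
    intro i
    have h1 : (nn i : ℚ) ≤ (nn' i : ℚ) := by
      rw [hnnq i, hqi' i]
      exact mul_le_mul_of_nonneg_right (by exact_mod_cast h0le) (hqpos i).le
    exact_mod_cast h1
  by_contra hne
  exact hmin' nn hle hnnzero (fun h => hne h.symm) hnn0

end CyclicRW4
end

section
/- Let V be a finite set and r : V × V → [0,∞) a weight with r(x,x) = 0 for all x ∈ V. Then r is cyclic if and only if r is balanced, i.e. ∑_{y ∈ V} r(y,x) = ∑_{y ∈ V} r(x,y) for every x ∈ V. -/
set_option linter.unusedSectionVars false


namespace CyclicRW8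

/-- A cycle on a set `V`: a sequence `x⁰, …, x^{n-1}` of distinct elements with
`n = len + 2 ≥ 2`, traversed cyclically (so `xⁿ = x⁰`). -/
structure FCycle (V : Type*) where
  len : ℕ
  z : Fin (len + 2) → V
  inj : Function.Injective z

/-- The weight of a cycle: `1` on the (oriented) edges of the cycle, `0` elsewhere. -/
def FCycle.wt {V : Type*} [DecidableEq V] (C : FCycle V) (x y : V) : ℝ :=
  if ∃ i : Fin (C.len + 2), x = C.z i ∧ y = C.z (i + 1) then 1 else 0

section Aux

variable {V : Type*} [Fintype V] [DecidableEq V]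

lemma FCycle.wt_nonneg (C : FCycle V) (x y : V) : 0 ≤ C.wt x y := by
  unfold FCycle.wt; split <;> norm_num

lemma FCycle.wt_mem (C : FCycle V) {x y : V} (h : C.wt x y ≠ 0) :
    ∃ i : Fin (C.len + 2), x = C.z i ∧ y = C.z (i + 1) := by
  by_contra hc
  exact h (if_neg hc)

lemma FCycle.wt_cases (C : FCycle V) (x y : V) : C.wt x y = 0 ∨ C.wt x y = 1 := by
  unfold FCycle.wt; split
  · right; rfl
  · left; rfl

lemma FCycle.wt_edge (C : FCycle V) (i : Fin (C.len + 2)) :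
    C.wt (C.z i) (C.z (i + 1)) = 1 := if_pos ⟨i, rfl, rfl⟩

lemma FCycle.wt_apply (C : FCycle V) (i : Fin (C.len + 2)) (y : V) :
    C.wt (C.z i) y = if y = C.z (i + 1) then 1 else 0 := by
  unfold FCycle.wt
  congr 1
  simp only [eq_iff_iff]
  constructor
  · rintro ⟨j, hj, rfl⟩
    obtain rfl := C.inj hj
    rfl
  · rintro rfl
    exact ⟨i, rfl, rfl⟩

lemma FCycle.wt_apply' (C : FCycle V) (i : Fin (C.len + 2)) (y : V) :
    C.wt y (C.z i) = if y = C.z (i - 1) then 1 else 0 := by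
  unfold FCycle.wt
  congr 1
  simp only [eq_iff_iff]
  constructor
  · rintro ⟨j, rfl, hj⟩
    obtain rfl := C.inj hj
    congr 1
    simp
  · rintro rfl
    exact ⟨i - 1, rfl, by congr 1; simp⟩

lemma FCycle.wt_diag (C : FCycle V) (x : V) : C.wt x x = 0 := by
  unfold FCycle.wt
  rw [if_neg]
  rintro ⟨i, rfl, hi⟩
  have h1 : i = i + 1 := C.inj hi
  have : (1 : Fin (C.len + 2)) = 0 := by
    have := (left_eq_add (a := i) (b := (1 : Fin (C.len + 2)))).mp h1
    exact this
  simpa using congrArg Fin.val this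

lemma FCycle.sum_wt_right (C : FCycle V) (x : V) :
    ∑ y, C.wt x y = if ∃ i, x = C.z i then 1 else 0 := by
  by_cases h : ∃ i, x = C.z i
  · obtain ⟨i, rfl⟩ := h
    rw [if_pos ⟨i, rfl⟩]
    simp [FCycle.wt_apply]
  · rw [if_neg h]
    apply Finset.sum_eq_zero
    intro y _
    unfold FCycle.wt
    rw [if_neg]
    rintro ⟨j, rfl, -⟩
    exact h ⟨j, rfl⟩

lemma FCycle.sum_wt_left (C : FCycle V) (x : V) :
    ∑ y, C.wt y x = if ∃ i, x = C.z i then 1 else 0 := by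
  by_cases h : ∃ i, x = C.z i
  · obtain ⟨i, rfl⟩ := h
    rw [if_pos ⟨i, rfl⟩]
    simp [FCycle.wt_apply']
  · rw [if_neg h]
    apply Finset.sum_eq_zero
    intro y _
    unfold FCycle.wt
    rw [if_neg]
    rintro ⟨j, -, rfl⟩
    exact h ⟨j + 1, rfl⟩

lemma FCycle.wt_balanced (C : FCycle V) (x : V) :
    ∑ y, C.wt y x = ∑ y, C.wt x y := by
  rw [FCycle.sum_wt_left, FCycle.sum_wt_right]

/-- From a positive edge in a balanced nonnegative weight, extract a cycle all of
whose edges have positive weight. -/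
lemma exists_cycle (r : V → V → ℝ) (hnn : ∀ x y, 0 ≤ r x y) (hdiag : ∀ x, r x x = 0)
    (hbal : ∀ x : V, (∑ y, r y x) = ∑ y, r x y)
    (x₀ y₀ : V) (h0 : 0 < r x₀ y₀) :
    ∃ C : FCycle V, ∀ i : Fin (C.len + 2), 0 < r (C.z i) (C.z (i + 1)) := by
  classical
  have step : ∀ x : V, 0 < ∑ y, r x y → ∃ y, 0 < r x y ∧ 0 < ∑ z, r y z := by
    intro x hx
    have hex : ∃ y, r x y ≠ 0 := by
      by_contra h
      push_neg at h
      simp [h] at hx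
    obtain ⟨y, hy⟩ := hex
    have hy' : 0 < r x y := lt_of_le_of_ne (hnn x y) (Ne.symm hy)
    refine ⟨y, hy', ?_⟩
    rw [← hbal y]
    calc (0:ℝ) < r x y := hy'
      _ ≤ ∑ z, r z y := Finset.single_le_sum (fun z _ => hnn z y) (Finset.mem_univ x)
  have hx₀ : 0 < ∑ y, r x₀ y :=
    lt_of_lt_of_le h0 (Finset.single_le_sum (fun y _ => hnn x₀ y) (Finset.mem_univ y₀))
  let g : {x : V // 0 < ∑ y, r x y} → {x : V // 0 < ∑ y, r x y} :=
    fun x => ⟨(step x.1 x.2).choose, (step x.1 x.2).choose_spec.2⟩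
  have hg : ∀ x, 0 < r x.1 (g x).1 := fun x => (step x.1 x.2).choose_spec.1
  let f : ℕ → V := fun n => (g^[n] ⟨x₀, hx₀⟩).1
  have hedge : ∀ n, 0 < r (f n) (f (n + 1)) := by
    intro n
    have h1 : g^[n+1] ⟨x₀, hx₀⟩ = g (g^[n] ⟨x₀, hx₀⟩) := Function.iterate_succ_apply' g n _
    simp only [f, h1]
    exact hg _
  have hstep_ne : ∀ n, f n ≠ f (n + 1) := by
    intro n h
    have := hedge n
    rw [← h, hdiag] at this
    exact lt_irrefl _ this
  -- pigeonhole: some repeat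
  have hrep : ∃ b, ∃ a, a < b ∧ f a = f b := by
    have hni : ¬ Function.Injective (fun k : Fin (Fintype.card V + 1) => f k.1) := by
      intro hinj
      have := Fintype.card_le_of_injective _ hinj
      simp at this
    rw [Function.not_injective_iff] at hni
    obtain ⟨a, b, hab, hne⟩ := hni
    have hne' : a.1 ≠ b.1 := fun h => hne (Fin.ext h)
    rcases hne'.lt_or_gt with h | h
    · exact ⟨b.1, a.1, h, hab⟩
    · exact ⟨a.1, b.1, h, hab.symm⟩
  let b₀ := Nat.find hrep
  obtain ⟨a, hab, hfa⟩ : ∃ a, a < b₀ ∧ f a = f b₀ := Nat.find_spec hrep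
  have hseg : ∀ i j, i < j → j < b₀ → f i ≠ f j := by
    intro i j hij hj hne
    exact Nat.find_min hrep hj ⟨i, hij, hne⟩
  have hb2 : a + 2 ≤ b₀ := by
    by_contra h
    have hb1 : b₀ = a + 1 := by omega
    exact hstep_ne a (hb1 ▸ hfa)
  obtain ⟨m, hm⟩ : ∃ m, b₀ = a + (m + 2) := ⟨b₀ - a - 2, by omega⟩
  have hinjz : Function.Injective (fun k : Fin (m + 2) => f (a + k.1)) := by
    intro k k' h
    by_contra hne
    have hk := k.isLt
    have hk' := k'.isLt
    have hne' : k.1 ≠ k'.1 := fun h' => hne (Fin.ext h')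
    rcases hne'.lt_or_gt with hlt | hlt
    · exact hseg (a + k.1) (a + k'.1) (by omega) (by omega) h
    · exact hseg (a + k'.1) (a + k.1) (by omega) (by omega) h.symm
  have hpos : ∀ i : Fin (m + 2), 0 < r (f (a + i.1)) (f (a + ((i + 1 : Fin (m + 2))).1)) := ?_
  · exact ⟨⟨m, fun k => f (a + k.1), hinjz⟩, hpos⟩
  intro i
  by_cases hi : i.1 + 1 < m + 2
  · have hv : ((i + 1 : Fin (m + 2))).1 = i.1 + 1 := by
      have : i < Fin.last (m + 1) := by
        rw [Fin.lt_iff_val_lt_val]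
        simpa using (by omega : i.1 < m + 1)
      exact Fin.val_add_one_of_lt this
    rw [hv, ← Nat.add_assoc]
    exact hedge (a + i.1)
  · have hv : i = Fin.last (m + 1) := by
      have := i.isLt
      apply Fin.ext
      simpa using (by omega : i.1 = m + 1)
    have hv1 : (i + 1 : Fin (m + 2)) = 0 := by rw [hv]; exact Fin.last_add_one (m + 1)
    rw [hv1, hv]
    simp only [Fin.val_last, Fin.val_zero, Nat.add_zero]
    rw [hfa]
    have : b₀ = (a + (m + 1)) + 1 := by omega
    rw [this]
    exact hedge (a + (m + 1))

lemma decomp : ∀ (N : ℕ) (r : V → V → ℝ),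
    (Finset.univ.filter fun p : V × V => r p.1 p.2 ≠ 0).card ≤ N →
    (∀ x y, 0 ≤ r x y) → (∀ x, r x x = 0) →
    (∀ x : V, (∑ y, r y x) = ∑ y, r x y) →
    ∃ (l : ℕ) (C : Fin l → FCycle V) (ρ : Fin l → ℝ),
      (∀ i, 0 ≤ ρ i) ∧ ∀ x y, r x y = ∑ i, ρ i * (C i).wt x y := by
  intro N
  induction N with
  | zero =>
    intro r hcard hnn hdiag hbal
    refine ⟨0, Fin.elim0, Fin.elim0, fun i => i.elim0, fun x y => ?_⟩
    have hr0 : r x y = 0 := by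
      by_contra h
      have hmem : (x, y) ∈ Finset.univ.filter (fun p : V × V => r p.1 p.2 ≠ 0) := by
        simp [h]
      have := Finset.card_pos.mpr ⟨_, hmem⟩
      omega
    simp [hr0]
  | succ N ih =>
    intro r hcard hnn hdiag hbal
    by_cases hz : ∀ x y, r x y = 0
    · exact ⟨0, Fin.elim0, Fin.elim0, fun i => i.elim0, fun x y => by simp [hz]⟩
    push_neg at hz
    obtain ⟨x₀, y₀, h0⟩ := hz
    have h0' : 0 < r x₀ y₀ := lt_of_le_of_ne (hnn _ _) (Ne.symm h0)
    obtain ⟨C, hC⟩ := exists_cycle r hnn hdiag hbal x₀ y₀ h0'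
    set e : Fin (C.len + 2) → ℝ := fun i => r (C.z i) (C.z (i + 1)) with he
    have hne : (Finset.univ : Finset (Fin (C.len + 2))).Nonempty := Finset.univ_nonempty
    set ρ₀ := Finset.univ.inf' hne e with hρ₀
    have hρ₀pos : 0 < ρ₀ := by
      rw [hρ₀, Finset.lt_inf'_iff]
      intro i _
      exact hC i
    have hρ₀le : ∀ i, ρ₀ ≤ e i := fun i => Finset.inf'_le e (Finset.mem_univ i)
    set r' : V → V → ℝ := fun x y => r x y - ρ₀ * C.wt x y with hr'
    have hwt_r : ∀ x y, C.wt x y ≠ 0 → r' x y = r x y - ρ₀ ∧ 0 < r x y := by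
      intro x y h
      obtain ⟨i, rfl, rfl⟩ := C.wt_mem h
      exact ⟨by simp [hr', C.wt_edge], hC i⟩
    have hnn' : ∀ x y, 0 ≤ r' x y := by
      intro x y
      rcases C.wt_cases x y with h | h
      · simp [hr', h, hnn]
      · obtain ⟨i, rfl, rfl⟩ := C.wt_mem (by rw [h]; norm_num)
        simp only [hr', C.wt_edge, mul_one]
        have := hρ₀le i
        rw [he] at this
        linarith
    have hdiag' : ∀ x, r' x x = 0 := by
      intro x
      simp only [hr']
      simp [hdiag, C.wt_diag]
    have hbal' : ∀ x : V, (∑ y, r' y x) = ∑ y, r' x y := by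
      intro x
      simp only [hr']
      simp only [Finset.sum_sub_distrib, ← Finset.mul_sum]
      rw [hbal x, C.wt_balanced x]
    -- support strictly decreases
    have hsub : (Finset.univ.filter fun p : V × V => r' p.1 p.2 ≠ 0) ⊆
        Finset.univ.filter fun p : V × V => r p.1 p.2 ≠ 0 := by
      intro p hp
      simp only [Finset.mem_filter, Finset.mem_univ, true_and] at hp ⊢
      intro hrp
      apply hp
      rcases C.wt_cases p.1 p.2 with h | h
      · simp only [hr']; simp [h, hrp]
      · have := (hwt_r p.1 p.2 (by rw [h]; norm_num)).2
        rw [hrp] at this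
        exact absurd this (lt_irrefl 0)
    obtain ⟨i₀, -, hi₀⟩ := Finset.exists_mem_eq_inf' hne e
    have hmem0 : (C.z i₀, C.z (i₀ + 1)) ∈
        Finset.univ.filter fun p : V × V => r p.1 p.2 ≠ 0 := by
      simp only [Finset.mem_filter, Finset.mem_univ, true_and]
      exact ne_of_gt (hC i₀)
    have hnmem0 : (C.z i₀, C.z (i₀ + 1)) ∉
        Finset.univ.filter fun p : V × V => r' p.1 p.2 ≠ 0 := by
      simp only [Finset.mem_filter, Finset.mem_univ, true_and, not_not]
      simp only [hr']
      simp only [C.wt_edge, mul_one]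
      rw [hρ₀, hi₀]
      ring
    have hcard' : (Finset.univ.filter fun p : V × V => r' p.1 p.2 ≠ 0).card ≤ N := by
      have hlt : (Finset.univ.filter fun p : V × V => r' p.1 p.2 ≠ 0).card <
          (Finset.univ.filter fun p : V × V => r p.1 p.2 ≠ 0).card :=
        Finset.card_lt_card (Finset.ssubset_iff_of_subset hsub |>.mpr ⟨_, hmem0, hnmem0⟩)
      omega
    obtain ⟨l, Cs, ρ, hρnn, hreq⟩ := ih r' hcard' hnn' hdiag' hbal'
    refine ⟨l + 1, Fin.cons C Cs, Fin.cons ρ₀ ρ, ?_, ?_⟩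
    · intro i
      refine Fin.cases ?_ ?_ i
      · simpa using le_of_lt hρ₀pos
      · intro j
        simpa using hρnn j
    · intro x y
      rw [Fin.sum_univ_succ]
      simp only [Fin.cons_zero, Fin.cons_succ]
      have h1 := hreq x y
      simp only [hr'] at h1
      linarith

end Aux

/-- A weight on a finite set is cyclic (a nonnegative superposition of weights of cycles)
if and only if at every vertex the ingoing weight equals the outgoing weight. -/
theorem cyclic_iff_balanced_finite (V : Type*) [Fintype V] [DecidableEq V]
    (r : V → V → ℝ) (hnn : ∀ x y, 0 ≤ r x y) (hdiag : ∀ x, r x x = 0) :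
    (∃ (l : ℕ) (C : Fin l → FCycle V) (ρ : Fin l → ℝ),
        (∀ i, 0 ≤ ρ i) ∧ ∀ x y, r x y = ∑ i, ρ i * (C i).wt x y)
      ↔ ∀ x : V, (∑ y : V, r y x) = ∑ y : V, r x y := by
  constructor
  · rintro ⟨l, C, ρ, hρ, hr⟩ x
    simp only [hr]
    calc ∑ y, ∑ i, ρ i * (C i).wt y x
        = ∑ i, ∑ y, ρ i * (C i).wt y x := Finset.sum_comm
      _ = ∑ i, ρ i * ∑ y, (C i).wt y x := by simp [Finset.mul_sum]
      _ = ∑ i, ρ i * ∑ y, (C i).wt x y := by simp_rw [FCycle.wt_balanced]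
      _ = ∑ i, ∑ y, ρ i * (C i).wt x y := by simp [Finset.mul_sum]
      _ = ∑ y, ∑ i, ρ i * (C i).wt x y := Finset.sum_comm
  · intro hbal
    exact decomp _ r le_rfl hnn hdiag hbal

end CyclicRW8
end

section
/- On the two-dimensional discrete torus of side N, a discrete vector field φ ∈ Λ¹ lies in dΛ² (i.e. φ = dψ for some 2-chain ψ) if and only if φ is divergence free, dφ(x) = 0 for every vertex x, and ∑_{x ∈ V_N} φ(x, x+eᵢ) = 0 for i = 1 and i = 2. -/
namespace Torus

abbrev V (n : ℕ) := ZMod (n + 3) × ZMod (n + 3)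

def e1 (n : ℕ) : V n := (1, 0)
def e2 (n : ℕ) : V n := (0, 1)

def isEdge (n : ℕ) (a b : V n) : Prop :=
  b = a + e1 n ∨ b = a - e1 n ∨ b = a + e2 n ∨ b = a - e2 n

instance (n : ℕ) (a b : V n) : Decidable (isEdge n a b) := by
  unfold isEdge; infer_instance

/-- A discrete vector field: antisymmetric and supported on edges. -/
def IsVF (n : ℕ) (φ : V n → V n → ℝ) : Prop :=
  (∀ a b, φ a b = -φ b a) ∧ ∀ a b, ¬isEdge n a b → φ a b = 0

/-- A 2-chain, viewed as a function on oriented faces: the faces are indexed by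
`V n × Bool`, where `(x, true)` is the anticlockwise-oriented unit square with lower-left
corner `x` and `(x, false)` is the same square with the clockwise orientation. A 2-chain
takes opposite values on oppositely oriented faces. -/
def IsChain (n : ℕ) (ψ : V n → Bool → ℝ) : Prop :=
  ∀ x, ψ x false = -ψ x true

/-- The four oriented edges of the elementary 4-cycle of the anticlockwise face at `x`. -/
def aEdges (n : ℕ) (x : V n) : List (V n × V n) :=
  [(x, x + e1 n), (x + e1 n, x + e1 n + e2 n), (x + e1 n + e2 n, x + e2 n), (x + e2 n, x)]

/-- The four oriented edges of the elementary 4-cycle of the oriented face `(x, o)`. -/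
def faceEdges (n : ℕ) (x : V n) (o : Bool) : List (V n × V n) :=
  if o then aEdges n x else (aEdges n x).map fun p => (p.2, p.1)

/-- The boundary of a 2-chain: `dψ(a,b) = ∑_{f : (a,b) ∈ f} ψ(f)`. -/
def dChain (n : ℕ) (ψ : V n → Bool → ℝ) (a b : V n) : ℝ :=
  ∑ x : V n, ∑ o : Bool, if (a, b) ∈ faceEdges n x o then ψ x o else 0

/-- The divergence of a discrete vector field at a vertex. -/
def dvg (n : ℕ) (φ : V n → V n → ℝ) (x : V n) : ℝ :=
  ∑ y : V n, if isEdge n x y then φ x y else 0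

/-! ### auxiliary facts -/

lemma one_ne (n : ℕ) : (1 : ZMod (n+3)) ≠ 0 := by
  have : ((1 : ℕ) : ZMod (n+3)) ≠ 0 := by
    rw [Ne, ZMod.natCast_eq_zero_iff]
    intro h; have := Nat.le_of_dvd (by norm_num) h; omega
  simpa using this

lemma two_ne (n : ℕ) : (1 : ZMod (n+3)) + 1 ≠ 0 := by
  have : ((2 : ℕ) : ZMod (n+3)) ≠ 0 := by
    rw [Ne, ZMod.natCast_eq_zero_iff]
    intro h; have := Nat.le_of_dvd (by norm_num) h; omega
  push_cast at this
  simpa [one_add_one_eq_two] using this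

lemma e1_ne_e2 (n : ℕ) : e1 n ≠ e2 n := by
  simp [e1, e2, Prod.ext_iff, one_ne n]

lemma e1_add_e1 (n : ℕ) : e1 n + e1 n ≠ 0 := by
  simp [e1, Prod.ext_iff, two_ne n]

lemma e2_add_e2 (n : ℕ) : e2 n + e2 n ≠ 0 := by
  simp [e2, Prod.ext_iff, two_ne n]

lemma e1_add_e2 (n : ℕ) : e1 n + e2 n ≠ 0 := by
  simp [e1, e2, Prod.ext_iff, one_ne n]

/-! ### membership lemmas -/

lemma mem_true_e1 (n : ℕ) (a x : V n) :
    ((a, a + e1 n) ∈ faceEdges n x true) ↔ x = a := by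
  simp only [faceEdges, if_pos, aEdges, List.mem_cons, List.not_mem_nil, or_false,
    Prod.mk.injEq]
  constructor
  · rintro (⟨h1, h2⟩ | ⟨h1, h2⟩ | ⟨h1, h2⟩ | ⟨h1, h2⟩) <;>
    first
      | exact h1.symm
      | exact (by linear_combination h1)
      | exact (by linear_combination -h1)
      | exact absurd (by linear_combination h1 - h2) (e1_ne_e2 n)
      | exact absurd (by linear_combination h2 - h1) (e1_ne_e2 n)
      | exact absurd (by linear_combination h1 - h2) (e1_ne_e2 n).symm
      | exact absurd (by linear_combination h2 - h1) (e1_ne_e2 n).symm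
      | exact absurd (by linear_combination h1 - h2) (e1_add_e1 n)
      | exact absurd (by linear_combination h2 - h1) (e1_add_e1 n)
      | exact absurd (by linear_combination h1 - h2) (e2_add_e2 n)
      | exact absurd (by linear_combination h2 - h1) (e2_add_e2 n)
      | exact absurd (by linear_combination h1 - h2) (e1_add_e2 n)
      | exact absurd (by linear_combination h2 - h1) (e1_add_e2 n)
  · rintro rfl
    first
      | (refine Or.inl ⟨?_, ?_⟩ <;> ring1)
      | (refine Or.inr (Or.inl ⟨?_, ?_⟩) <;> ring1)
      | (refine Or.inr (Or.inr (Or.inl ⟨?_, ?_⟩)) <;> ring1)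
      | (refine Or.inr (Or.inr (Or.inr ⟨?_, ?_⟩)) <;> ring1)

lemma mem_false_e1 (n : ℕ) (a x : V n) :
    ((a, a + e1 n) ∈ faceEdges n x false) ↔ x = a - e2 n := by
  simp only [faceEdges, Bool.false_eq_true, if_neg, not_false_iff, aEdges, List.map_cons,
    List.map_nil, List.mem_cons, List.not_mem_nil, or_false, Prod.mk.injEq]
  constructor
  · rintro (⟨h1, h2⟩ | ⟨h1, h2⟩ | ⟨h1, h2⟩ | ⟨h1, h2⟩) <;>
    first
      | exact h1.symm
      | exact (by linear_combination h1)
      | exact (by linear_combination -h1)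
      | exact absurd (by linear_combination h1 - h2) (e1_ne_e2 n)
      | exact absurd (by linear_combination h2 - h1) (e1_ne_e2 n)
      | exact absurd (by linear_combination h1 - h2) (e1_ne_e2 n).symm
      | exact absurd (by linear_combination h2 - h1) (e1_ne_e2 n).symm
      | exact absurd (by linear_combination h1 - h2) (e1_add_e1 n)
      | exact absurd (by linear_combination h2 - h1) (e1_add_e1 n)
      | exact absurd (by linear_combination h1 - h2) (e2_add_e2 n)
      | exact absurd (by linear_combination h2 - h1) (e2_add_e2 n)
      | exact absurd (by linear_combination h1 - h2) (e1_add_e2 n)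
      | exact absurd (by linear_combination h2 - h1) (e1_add_e2 n)
  · rintro rfl
    first
      | (refine Or.inl ⟨?_, ?_⟩ <;> ring1)
      | (refine Or.inr (Or.inl ⟨?_, ?_⟩) <;> ring1)
      | (refine Or.inr (Or.inr (Or.inl ⟨?_, ?_⟩)) <;> ring1)
      | (refine Or.inr (Or.inr (Or.inr ⟨?_, ?_⟩)) <;> ring1)

lemma mem_true_e2 (n : ℕ) (a x : V n) :
    ((a, a + e2 n) ∈ faceEdges n x true) ↔ x = a - e1 n := by
  simp only [faceEdges, if_pos, aEdges, List.mem_cons, List.not_mem_nil, or_false,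
    Prod.mk.injEq]
  constructor
  · rintro (⟨h1, h2⟩ | ⟨h1, h2⟩ | ⟨h1, h2⟩ | ⟨h1, h2⟩) <;>
    first
      | exact h1.symm
      | exact (by linear_combination h1)
      | exact (by linear_combination -h1)
      | exact absurd (by linear_combination h1 - h2) (e1_ne_e2 n)
      | exact absurd (by linear_combination h2 - h1) (e1_ne_e2 n)
      | exact absurd (by linear_combination h1 - h2) (e1_ne_e2 n).symm
      | exact absurd (by linear_combination h2 - h1) (e1_ne_e2 n).symm
      | exact absurd (by linear_combination h1 - h2) (e1_add_e1 n)
      | exact absurd (by linear_combination h2 - h1) (e1_add_e1 n)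
      | exact absurd (by linear_combination h1 - h2) (e2_add_e2 n)
      | exact absurd (by linear_combination h2 - h1) (e2_add_e2 n)
      | exact absurd (by linear_combination h1 - h2) (e1_add_e2 n)
      | exact absurd (by linear_combination h2 - h1) (e1_add_e2 n)
  · rintro rfl
    first
      | (refine Or.inl ⟨?_, ?_⟩ <;> ring1)
      | (refine Or.inr (Or.inl ⟨?_, ?_⟩) <;> ring1)
      | (refine Or.inr (Or.inr (Or.inl ⟨?_, ?_⟩)) <;> ring1)
      | (refine Or.inr (Or.inr (Or.inr ⟨?_, ?_⟩)) <;> ring1)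

lemma mem_false_e2 (n : ℕ) (a x : V n) :
    ((a, a + e2 n) ∈ faceEdges n x false) ↔ x = a := by
  simp only [faceEdges, Bool.false_eq_true, if_neg, not_false_iff, aEdges, List.map_cons,
    List.map_nil, List.mem_cons, List.not_mem_nil, or_false, Prod.mk.injEq]
  constructor
  · rintro (⟨h1, h2⟩ | ⟨h1, h2⟩ | ⟨h1, h2⟩ | ⟨h1, h2⟩) <;>
    first
      | exact h1.symm
      | exact (by linear_combination h1)
      | exact (by linear_combination -h1)
      | exact absurd (by linear_combination h1 - h2) (e1_ne_e2 n)
      | exact absurd (by linear_combination h2 - h1) (e1_ne_e2 n)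
      | exact absurd (by linear_combination h1 - h2) (e1_ne_e2 n).symm
      | exact absurd (by linear_combination h2 - h1) (e1_ne_e2 n).symm
      | exact absurd (by linear_combination h1 - h2) (e1_add_e1 n)
      | exact absurd (by linear_combination h2 - h1) (e1_add_e1 n)
      | exact absurd (by linear_combination h1 - h2) (e2_add_e2 n)
      | exact absurd (by linear_combination h2 - h1) (e2_add_e2 n)
      | exact absurd (by linear_combination h1 - h2) (e1_add_e2 n)
      | exact absurd (by linear_combination h2 - h1) (e1_add_e2 n)
  · rintro rfl
    first
      | (refine Or.inl ⟨?_, ?_⟩ <;> ring1)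
      | (refine Or.inr (Or.inl ⟨?_, ?_⟩) <;> ring1)
      | (refine Or.inr (Or.inr (Or.inl ⟨?_, ?_⟩)) <;> ring1)
      | (refine Or.inr (Or.inr (Or.inr ⟨?_, ?_⟩)) <;> ring1)

lemma isEdge_of_mem (n : ℕ) (a b x : V n) (o : Bool) :
    (a, b) ∈ faceEdges n x o → isEdge n a b := by
  cases o <;>
    simp only [faceEdges, if_pos, Bool.false_eq_true, if_neg, not_false_iff, aEdges,
      List.map_cons, List.map_nil, List.mem_cons, List.not_mem_nil, or_false,
      Prod.mk.injEq] <;>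
    rintro (⟨rfl, rfl⟩ | ⟨rfl, rfl⟩ | ⟨rfl, rfl⟩ | ⟨rfl, rfl⟩) <;>
    unfold isEdge <;>
    first
      | (refine Or.inl ?_; ring1)
      | (refine Or.inr (Or.inl ?_); ring1)
      | (refine Or.inr (Or.inr (Or.inl ?_)); ring1)
      | (refine Or.inr (Or.inr (Or.inr ?_)); ring1)

lemma mem_swap (n : ℕ) (a b x : V n) (o : Bool) :
    ((b, a) ∈ faceEdges n x o) ↔ ((a, b) ∈ faceEdges n x (!o)) := by
  cases o <;> simp only [faceEdges, Bool.not_true, Bool.not_false, if_pos,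
      Bool.false_eq_true, if_neg, not_false_iff, List.mem_map]
  · constructor
    · rintro ⟨⟨u, v⟩, hm, he⟩
      simp only [Prod.mk.injEq] at he
      obtain ⟨rfl, rfl⟩ := he
      exact hm
    · intro h; exact ⟨(a, b), h, rfl⟩
  · constructor
    · intro h; exact ⟨(b, a), h, rfl⟩
    · rintro ⟨⟨u, v⟩, hm, he⟩
      simp only [Prod.mk.injEq] at he
      obtain ⟨rfl, rfl⟩ := he
      exact hm

/-! ### dChain computations -/

lemma dChain_add_e1 (n : ℕ) (ψ : V n → Bool → ℝ) (hψ : IsChain n ψ) (a : V n) :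
    dChain n ψ a (a + e1 n) = ψ a true - ψ (a - e2 n) true := by
  unfold dChain
  simp only [Fintype.sum_bool, mem_true_e1, mem_false_e1]
  rw [Finset.sum_add_distrib, Finset.sum_ite_eq' Finset.univ a (fun x => ψ x true),
    Finset.sum_ite_eq' Finset.univ (a - e2 n) (fun x => ψ x false)]
  simp only [Finset.mem_univ, if_true]
  rw [hψ (a - e2 n)]
  ring

lemma dChain_add_e2 (n : ℕ) (ψ : V n → Bool → ℝ) (hψ : IsChain n ψ) (a : V n) :
    dChain n ψ a (a + e2 n) = ψ (a - e1 n) true - ψ a true := by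
  unfold dChain
  simp only [Fintype.sum_bool, mem_true_e2, mem_false_e2]
  rw [Finset.sum_add_distrib, Finset.sum_ite_eq' Finset.univ (a - e1 n) (fun x => ψ x true),
    Finset.sum_ite_eq' Finset.univ a (fun x => ψ x false)]
  simp only [Finset.mem_univ, if_true]
  rw [hψ a]
  ring

lemma dChain_antisymm (n : ℕ) (ψ : V n → Bool → ℝ) (hψ : IsChain n ψ) (a b : V n) :
    dChain n ψ b a = -dChain n ψ a b := by
  unfold dChain
  rw [← Finset.sum_neg_distrib]
  refine Finset.sum_congr rfl fun x _ => ?_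
  rw [Fintype.sum_bool, Fintype.sum_bool]
  have hx := hψ x
  simp only [mem_swap n a b x, Bool.not_true, Bool.not_false, hx]
  split_ifs <;> ring

lemma dChain_not_edge (n : ℕ) (ψ : V n → Bool → ℝ) (a b : V n) (h : ¬isEdge n a b) :
    dChain n ψ a b = 0 := by
  unfold dChain
  refine Finset.sum_eq_zero fun x _ => Finset.sum_eq_zero fun o _ => ?_
  exact if_neg fun hm => h (isEdge_of_mem n a b x o hm)

lemma dvg_eq (n : ℕ) (φ : V n → V n → ℝ) (x : V n) :
    dvg n φ x = φ x (x + e1 n) + φ x (x - e1 n) + φ x (x + e2 n) + φ x (x - e2 n) := by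
  unfold dvg
  rw [← Finset.sum_filter]
  have h1 : x + e1 n ∉ ({x - e1 n, x + e2 n, x - e2 n} : Finset (V n)) := by
    simp only [Finset.mem_insert, Finset.mem_singleton]
    push_neg
    refine ⟨fun h => ?_, fun h => ?_, fun h => ?_⟩
    · exact e1_add_e1 n (by linear_combination h)
    · exact e1_ne_e2 n (by linear_combination h)
    · exact e1_add_e2 n (by linear_combination h)
  have h2 : x - e1 n ∉ ({x + e2 n, x - e2 n} : Finset (V n)) := by
    simp only [Finset.mem_insert, Finset.mem_singleton]
    push_neg
    refine ⟨fun h => ?_, fun h => ?_⟩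
    · exact e1_add_e2 n (by linear_combination -h)
    · exact e1_ne_e2 n (by linear_combination -h)
  have h3 : x + e2 n ∉ ({x - e2 n} : Finset (V n)) := by
    simp only [Finset.mem_singleton]
    intro h
    exact e2_add_e2 n (by linear_combination h)
  have hfil : Finset.univ.filter (fun y => isEdge n x y) =
      ({x + e1 n, x - e1 n, x + e2 n, x - e2 n} : Finset (V n)) := by
    ext y
    simp [isEdge, Finset.mem_insert]
    exact Finset.mem_filter.trans (by simp)
  rw [hfil, Finset.sum_insert h1, Finset.sum_insert h2, Finset.sum_insert h3,
    Finset.sum_singleton]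
  ring

/-! ### sums over ZMod -/

lemma natCast_val_self (n : ℕ) (a : ZMod (n+3)) : ((a.val : ZMod (n+3))) = a := by
  rw [ZMod.natCast_val, ZMod.cast_id]

lemma sum_range_zmod (n : ℕ) (f : ZMod (n+3) → ℝ) :
    ∑ k ∈ Finset.range (n+3), f (k : ZMod (n+3)) = ∑ j : ZMod (n+3), f j := by
  refine Finset.sum_nbij' (fun k => (k : ZMod (n+3))) (fun z => z.val) ?_ ?_ ?_ ?_ ?_
  · intro a _; exact Finset.mem_univ _
  · intro z _; exact Finset.mem_range.2 (ZMod.val_lt z)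
  · intro a ha; exact ZMod.val_cast_of_lt (Finset.mem_range.1 ha)
  · intro z _; exact natCast_val_self n z
  · intro a _; rfl

lemma sum_range_succ_zmod (n : ℕ) (f : ZMod (n+3) → ℝ) :
    ∑ k ∈ Finset.range (n+3), f ((k : ZMod (n+3)) + 1) = ∑ j : ZMod (n+3), f j := by
  rw [sum_range_zmod n (fun z => f (z + 1))]
  exact Fintype.sum_equiv (Equiv.addRight 1) _ _ fun z => rfl

lemma val_add_one (n : ℕ) (a : ZMod (n+3)) : (a + 1).val = (a.val + 1) % (n+3) := by
  haveI : Fact (1 < n+3) := ⟨by omega⟩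
  rw [ZMod.val_add, ZMod.val_one]

/-! ### the potential -/

def gfun (n : ℕ) (f1 f2 : V n → ℝ) (a : V n) : ℝ :=
  (∑ k ∈ Finset.range a.2.val, f1 (a.1, (k : ZMod (n+3)) + 1)) -
    (∑ k ∈ Finset.range a.1.val, f2 ((k : ZMod (n+3)) + 1, 0))

lemma grec1 (n : ℕ) (f1 f2 : V n → ℝ) (a : V n)
    (hcol : ∑ j : ZMod (n+3), f1 (a.1, j) = 0) :
    gfun n f1 f2 (a + e2 n) - gfun n f1 f2 a = f1 (a + e2 n) := by
  have hfst : (a + e2 n).1 = a.1 := by simp [e2, Prod.fst_add]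
  have hsnd : (a + e2 n).2 = a.2 + 1 := by simp [e2, Prod.snd_add]
  have hae : a + e2 n = (a.1, a.2 + 1) := by
    rw [Prod.ext_iff]; exact ⟨hfst, hsnd⟩
  unfold gfun
  rw [hfst, hsnd, hae]
  have hv := val_add_one n a.2
  rcases Nat.lt_or_ge (a.2.val + 1) (n+3) with h | h
  · rw [hv, Nat.mod_eq_of_lt h, Finset.sum_range_succ, natCast_val_self]
    ring
  · have hval : a.2.val + 1 = n + 3 := by have := ZMod.val_lt a.2; omega
    have hz : (a.2 + 1).val = 0 := by rw [hv, hval, Nat.mod_self]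
    rw [hz]
    have hsum : ∑ k ∈ Finset.range (n+3), f1 (a.1, (k : ZMod (n+3)) + 1) = 0 := by
      rw [sum_range_succ_zmod n (fun z => f1 (a.1, z))]; exact hcol
    have hsplit := Finset.sum_range_succ (fun k : ℕ => f1 (a.1, (k : ZMod (n+3)) + 1)) a.2.val
    rw [hval] at hsplit
    rw [hsplit, natCast_val_self] at hsum
    simp only [Finset.range_zero, Finset.sum_empty]
    linarith

lemma grec2 (n : ℕ) (f1 f2 : V n → ℝ) (a : V n)
    (hdiv : ∀ x : V n, f1 x + f2 x = f1 (x - e1 n) + f2 (x - e2 n))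
    (hrow : ∑ i : ZMod (n+3), f2 (i, 0) = 0) :
    gfun n f1 f2 a - gfun n f1 f2 (a + e1 n) = f2 (a + e1 n) := by
  have hfst : (a + e1 n).1 = a.1 + 1 := by simp [e1, Prod.fst_add]
  have hsnd : (a + e1 n).2 = a.2 := by simp [e1, Prod.snd_add]
  have hae : a + e1 n = (a.1 + 1, a.2) := by
    rw [Prod.ext_iff]; exact ⟨hfst, hsnd⟩
  have key : ∀ k : ℕ, f1 (a.1, (k : ZMod (n+3)) + 1) - f1 (a.1 + 1, (k : ZMod (n+3)) + 1)
      = f2 (a.1 + 1, (k : ZMod (n+3)) + 1) - f2 (a.1 + 1, (k : ZMod (n+3))) := by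
    intro k
    have hx := hdiv (a.1 + 1, (k : ZMod (n+3)) + 1)
    have h1 : ((a.1 + 1, (k : ZMod (n+3)) + 1) : V n) - e1 n = (a.1, (k : ZMod (n+3)) + 1) := by
      rw [Prod.ext_iff]; constructor <;> simp [e1]
    have h2 : ((a.1 + 1, (k : ZMod (n+3)) + 1) : V n) - e2 n = (a.1 + 1, (k : ZMod (n+3))) := by
      rw [Prod.ext_iff]; constructor <;> simp [e2]
    rw [h1, h2] at hx
    linarith
  have tele : (∑ k ∈ Finset.range a.2.val, f1 (a.1, (k : ZMod (n+3)) + 1))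
      - (∑ k ∈ Finset.range a.2.val, f1 (a.1 + 1, (k : ZMod (n+3)) + 1))
      = f2 (a.1 + 1, a.2) - f2 (a.1 + 1, 0) := by
    rw [← Finset.sum_sub_distrib]
    have step : ∀ k : ℕ, f1 (a.1, (k : ZMod (n+3)) + 1) - f1 (a.1 + 1, (k : ZMod (n+3)) + 1)
        = (fun m : ℕ => f2 (a.1 + 1, (m : ZMod (n+3)))) (k + 1)
          - (fun m : ℕ => f2 (a.1 + 1, (m : ZMod (n+3)))) k := by
      intro k
      have hc : ((k + 1 : ℕ) : ZMod (n+3)) = (k : ZMod (n+3)) + 1 := by push_cast; ring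
      simp only [hc]
      exact key k
    rw [Finset.sum_congr rfl fun k _ => step k, Finset.sum_range_sub
      (fun m : ℕ => f2 (a.1 + 1, (m : ZMod (n+3)))) a.2.val]
    simp only [natCast_val_self, Nat.cast_zero]
  have hstep : (∑ k ∈ Finset.range (a.1 + 1).val, f2 ((k : ZMod (n+3)) + 1, 0))
      - (∑ k ∈ Finset.range a.1.val, f2 ((k : ZMod (n+3)) + 1, 0)) = f2 (a.1 + 1, 0) := by
    have hv := val_add_one n a.1
    rcases Nat.lt_or_ge (a.1.val + 1) (n+3) with h | h
    · rw [hv, Nat.mod_eq_of_lt h, Finset.sum_range_succ, natCast_val_self]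
      ring
    · have hval : a.1.val + 1 = n + 3 := by have := ZMod.val_lt a.1; omega
      have hz : (a.1 + 1).val = 0 := by rw [hv, hval, Nat.mod_self]
      rw [hz]
      have hsum : ∑ k ∈ Finset.range (n+3), f2 ((k : ZMod (n+3)) + 1, 0) = 0 := by
        rw [sum_range_succ_zmod n (fun z => f2 (z, 0))]; exact hrow
      have hsplit := Finset.sum_range_succ (fun k : ℕ => f2 ((k : ZMod (n+3)) + 1, 0)) a.1.val
      rw [hval] at hsplit
      rw [hsplit, natCast_val_self] at hsum
      simp only [Finset.range_zero, Finset.sum_empty]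
      linarith
  unfold gfun
  rw [hfst, hsnd, hae]
  linarith

/-! ### column and row sums vanish -/

lemma col_zero (n : ℕ) (f1 f2 : V n → ℝ)
    (hdiv : ∀ x : V n, f1 x + f2 x = f1 (x - e1 n) + f2 (x - e2 n))
    (htot : ∑ x : V n, f1 x = 0) (i : ZMod (n+3)) :
    ∑ j : ZMod (n+3), f1 (i, j) = 0 := by
  have hstep : ∀ i : ZMod (n+3), ∑ j : ZMod (n+3), f1 (i, j)
      = ∑ j : ZMod (n+3), f1 (i - 1, j) := by
    intro i
    have h1 : ∑ j : ZMod (n+3), (f1 (i, j) + f2 (i, j))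
        = ∑ j : ZMod (n+3), (f1 (i - 1, j) + f2 (i, j - 1)) := by
      refine Finset.sum_congr rfl fun j _ => ?_
      have hx := hdiv (i, j)
      have e1h : ((i, j) : V n) - e1 n = (i - 1, j) := by
        rw [Prod.ext_iff]; constructor <;> simp [e1]
      have e2h : ((i, j) : V n) - e2 n = (i, j - 1) := by
        rw [Prod.ext_iff]; constructor <;> simp [e2]
      rw [e1h, e2h] at hx
      linarith
    have h2 : ∑ j : ZMod (n+3), f2 (i, j - 1) = ∑ j : ZMod (n+3), f2 (i, j) :=
      Fintype.sum_equiv (Equiv.subRight 1) _ _ fun j => rfl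
    rw [Finset.sum_add_distrib, Finset.sum_add_distrib, h2] at h1
    linarith
  have hconst : ∀ k : ℕ, ∑ j : ZMod (n+3), f1 ((k : ZMod (n+3)), j)
      = ∑ j : ZMod (n+3), f1 (0, j) := by
    intro k
    induction k with
    | zero => norm_num
    | succ m ih =>
      have hm : ((m + 1 : ℕ) : ZMod (n+3)) - 1 = (m : ZMod (n+3)) := by push_cast; ring
      rw [hstep ((m + 1 : ℕ) : ZMod (n+3)), hm, ih]
  have hall : ∀ i : ZMod (n+3), ∑ j : ZMod (n+3), f1 (i, j)
      = ∑ j : ZMod (n+3), f1 (0, j) := by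
    intro i
    conv_lhs => rw [← natCast_val_self n i]
    exact hconst i.val
  have hsum : ∑ i : ZMod (n+3), ∑ j : ZMod (n+3), f1 (i, j) = 0 := by
    rw [← Fintype.sum_prod_type]; exact htot
  rw [Finset.sum_congr rfl fun i _ => hall i, Finset.sum_const, Finset.card_univ,
    ZMod.card, nsmul_eq_mul] at hsum
  have hn : ((n + 3 : ℕ) : ℝ) ≠ 0 := by positivity
  have h0 : ∑ j : ZMod (n+3), f1 (0, j) = 0 := by
    rcases mul_eq_zero.1 hsum with h | h
    · exact absurd h hn
    · exact h
  rw [hall i, h0]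

lemma row_zero (n : ℕ) (f1 f2 : V n → ℝ)
    (hdiv : ∀ x : V n, f1 x + f2 x = f1 (x - e1 n) + f2 (x - e2 n))
    (htot : ∑ x : V n, f2 x = 0) (j : ZMod (n+3)) :
    ∑ i : ZMod (n+3), f2 (i, j) = 0 := by
  have hstep : ∀ j : ZMod (n+3), ∑ i : ZMod (n+3), f2 (i, j)
      = ∑ i : ZMod (n+3), f2 (i, j - 1) := by
    intro j
    have h1 : ∑ i : ZMod (n+3), (f1 (i, j) + f2 (i, j))
        = ∑ i : ZMod (n+3), (f1 (i - 1, j) + f2 (i, j - 1)) := by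
      refine Finset.sum_congr rfl fun i _ => ?_
      have hx := hdiv (i, j)
      have e1h : ((i, j) : V n) - e1 n = (i - 1, j) := by
        rw [Prod.ext_iff]; constructor <;> simp [e1]
      have e2h : ((i, j) : V n) - e2 n = (i, j - 1) := by
        rw [Prod.ext_iff]; constructor <;> simp [e2]
      rw [e1h, e2h] at hx
      linarith
    have h2 : ∑ i : ZMod (n+3), f1 (i - 1, j) = ∑ i : ZMod (n+3), f1 (i, j) :=
      Fintype.sum_equiv (Equiv.subRight 1) _ _ fun i => rfl
    rw [Finset.sum_add_distrib, Finset.sum_add_distrib, h2] at h1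
    linarith
  have hconst : ∀ k : ℕ, ∑ i : ZMod (n+3), f2 (i, (k : ZMod (n+3)))
      = ∑ i : ZMod (n+3), f2 (i, 0) := by
    intro k
    induction k with
    | zero => norm_num
    | succ m ih =>
      have hm : ((m + 1 : ℕ) : ZMod (n+3)) - 1 = (m : ZMod (n+3)) := by push_cast; ring
      rw [hstep ((m + 1 : ℕ) : ZMod (n+3)), hm, ih]
  have hall : ∀ j : ZMod (n+3), ∑ i : ZMod (n+3), f2 (i, j)
      = ∑ i : ZMod (n+3), f2 (i, 0) := by
    intro j
    conv_lhs => rw [← natCast_val_self n j]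
    exact hconst j.val
  have hsum : ∑ j : ZMod (n+3), ∑ i : ZMod (n+3), f2 (i, j) = 0 := by
    rw [Finset.sum_comm, ← Fintype.sum_prod_type]; exact htot
  rw [Finset.sum_congr rfl fun j _ => hall j, Finset.sum_const, Finset.card_univ,
    ZMod.card, nsmul_eq_mul] at hsum
  have hn : ((n + 3 : ℕ) : ℝ) ≠ 0 := by positivity
  have h0 : ∑ i : ZMod (n+3), f2 (i, 0) = 0 := by
    rcases mul_eq_zero.1 hsum with h | h
    · exact absurd h hn
    · exact h
  rw [hall j, h0]

/-- A discrete vector field `φ` is the boundary of a 2-chain if and only if it is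
divergence free and its total fluxes in the two coordinate directions vanish. -/
theorem mem_dLambda2_iff (n : ℕ) (φ : V n → V n → ℝ) (hφ : IsVF n φ) :
    (∃ ψ : V n → Bool → ℝ, IsChain n ψ ∧ ∀ a b, dChain n ψ a b = φ a b) ↔
      ((∀ x, dvg n φ x = 0)
        ∧ (∑ x : V n, φ x (x + e1 n)) = 0
        ∧ (∑ x : V n, φ x (x + e2 n)) = 0) := by
  constructor
  · rintro ⟨ψ, hψ, hdc⟩
    refine ⟨fun x => ?_, ?_, ?_⟩
    · rw [dvg_eq]
      have k1 := dChain_add_e1 n ψ hψ x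
      have k2 := dChain_add_e1 n ψ hψ (x - e1 n)
      have k3 := dChain_add_e2 n ψ hψ x
      have k4 := dChain_add_e2 n ψ hψ (x - e2 n)
      rw [sub_add_cancel] at k2 k4
      rw [hdc] at k1 k2 k3 k4
      have a2 : φ x (x - e1 n) = -φ (x - e1 n) x := hφ.1 _ _
      have a4 : φ x (x - e2 n) = -φ (x - e2 n) x := hφ.1 _ _
      have swap : x - e1 n - e2 n = x - e2 n - e1 n := by ring
      rw [swap] at k2
      linarith
    · have hpt : ∀ x : V n, φ x (x + e1 n) = ψ x true - ψ (x - e2 n) true := fun x =>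
        (hdc x _).symm.trans (dChain_add_e1 n ψ hψ x)
      calc ∑ x : V n, φ x (x + e1 n)
          = ∑ x : V n, (ψ x true - ψ (x - e2 n) true) :=
            Finset.sum_congr rfl fun x _ => hpt x
        _ = (∑ x : V n, ψ x true) - ∑ x : V n, ψ (x - e2 n) true :=
            Finset.sum_sub_distrib _ _
        _ = 0 := by
            rw [Fintype.sum_equiv (Equiv.subRight (e2 n))
              (fun x => ψ (x - e2 n) true) (fun x => ψ x true) (fun x => rfl)]
            ring
    · have hpt : ∀ x : V n, φ x (x + e2 n) = ψ (x - e1 n) true - ψ x true := fun x =>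
        (hdc x _).symm.trans (dChain_add_e2 n ψ hψ x)
      calc ∑ x : V n, φ x (x + e2 n)
          = ∑ x : V n, (ψ (x - e1 n) true - ψ x true) :=
            Finset.sum_congr rfl fun x _ => hpt x
        _ = (∑ x : V n, ψ (x - e1 n) true) - ∑ x : V n, ψ x true :=
            Finset.sum_sub_distrib _ _
        _ = 0 := by
            rw [Fintype.sum_equiv (Equiv.subRight (e1 n))
              (fun x => ψ (x - e1 n) true) (fun x => ψ x true) (fun x => rfl)]
            ring
  · rintro ⟨hd, hs1, hs2⟩
    set f1 : V n → ℝ := fun x => φ x (x + e1 n) with hf1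
    set f2 : V n → ℝ := fun x => φ x (x + e2 n) with hf2
    have hdiv : ∀ x : V n, f1 x + f2 x = f1 (x - e1 n) + f2 (x - e2 n) := by
      intro x
      have h0 := hd x
      rw [dvg_eq] at h0
      have e1c : (x - e1 n) + e1 n = x := sub_add_cancel x (e1 n)
      have e2c : (x - e2 n) + e2 n = x := sub_add_cancel x (e2 n)
      have b1 : f1 (x - e1 n) = φ (x - e1 n) x := by rw [hf1]; simp only; rw [e1c]
      have b2 : f2 (x - e2 n) = φ (x - e2 n) x := by rw [hf2]; simp only; rw [e2c]
      have a1 : φ x (x - e1 n) = -φ (x - e1 n) x := hφ.1 _ _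
      have a2 : φ x (x - e2 n) = -φ (x - e2 n) x := hφ.1 _ _
      rw [b1, b2]
      simp only [hf1, hf2]
      linarith
    have hcol := col_zero n f1 f2 hdiv hs1
    have hrow := row_zero n f1 f2 hdiv hs2
    set g : V n → ℝ := gfun n f1 f2 with hg
    refine ⟨fun a o => if o then g a else -g a, fun x => by simp, ?_⟩
    have hψ : IsChain n (fun a o => if o then g a else -g a) := fun x => by simp
    have hA : ∀ c : V n, dChain n (fun a o => if o then g a else -g a) c (c + e1 n)
        = φ c (c + e1 n) := by
      intro c
      rw [dChain_add_e1 n _ hψ c]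
      simp only [if_true]
      have hr := grec1 n f1 f2 (c - e2 n) (hcol (c - e2 n).1)
      rw [sub_add_cancel] at hr
      exact hr
    have hB : ∀ c : V n, dChain n (fun a o => if o then g a else -g a) c (c + e2 n)
        = φ c (c + e2 n) := by
      intro c
      rw [dChain_add_e2 n _ hψ c]
      simp only [if_true]
      have hr := grec2 n f1 f2 (c - e1 n) hdiv (hrow 0)
      rw [sub_add_cancel] at hr
      exact hr
    intro a b
    by_cases he : isEdge n a b
    · rcases he with h | h | h | h <;> subst h
      · exact hA a
      · rw [dChain_antisymm n _ hψ (a - e1 n) a]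
        have h2 := hA (a - e1 n)
        rw [sub_add_cancel] at h2
        rw [h2, hφ.1 a (a - e1 n)]
      · exact hB a
      · rw [dChain_antisymm n _ hψ (a - e2 n) a]
        have h2 := hB (a - e2 n)
        rw [sub_add_cancel] at h2
        rw [h2, hφ.1 a (a - e2 n)]
    · rw [dChain_not_edge n _ a b he, hφ.2 a b he]

end Torus
end
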